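/- arXiv:2302.05208 — 10 statements merged into one kernel-verified Lean document; each statement's English description precedes it below -/
import Mathlib

section
/- Let μ be a probability measure on ℝ with finite second moment. For any two convex functions f, g : ℝ → ℝ belonging to L²(μ), one has Var(μ) · Cov_μ(f, g) ≥ Cov_μ(f, id) · Cov_μ(g, id), where id denotes the identity function x ↦ x, Cov_μ(u, v) = ∫ u v dμ − (∫ u dμ)(∫ v dμ), and Var(μ) = Cov_μ(id, id). -/
open MeasureTheory

/-- Covariance of two functions with respect to a measure. -/
noncomputable def cov {α : Type*} [MeasurableSpace α] (μ : Measure α) (f g : α → ℝ) : ℝ :=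
  ∫ x, (f x - ∫ y, f y ∂μ) * (g x - ∫ y, g y ∂μ) ∂μ

lemma int_mul2 {α : Type*} [MeasurableSpace α] {μ : Measure α} {f g : α → ℝ}
    (hf : MemLp f 2 μ) (hg : MemLp g 2 μ) :
    Integrable (fun x => f x * g x) μ := by
  rw [← memLp_one_iff_integrable]
  have := hf.smul hg (p := 2) (q := 2) (r := 1) (hpqr := ⟨by rw [inv_one, ENNReal.inv_two_add_inv_two]⟩)
  simpa [smul_eq_mul, mul_comm, Pi.mul_def] using this

lemma conv_cont {h : ℝ → ℝ} (hc : ConvexOn ℝ Set.univ h) : Continuous h := by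
  rw [← continuousOn_univ]
  exact hc.continuousOn isOpen_univ

lemma deg_case {μ : Measure ℝ} [IsProbabilityMeasure μ] {h k w : ℝ → ℝ}
    (hh2 : MemLp h 2 μ) (hw2 : MemLp w 2 μ)
    (hint0 : ∫ x, h x * w x ∂μ = 0) (hpos : ∀ x, 0 ≤ h x * w x)
    (himp : ∀ x, h x * w x = 0 → h x * k x = 0) :
    ∫ x, h x * k x ∂μ = 0 := by
  have hi : Integrable (fun x => h x * w x) μ := int_mul2 hh2 hw2
  have h0 : (fun x => h x * w x) =ᵐ[μ] 0 :=
    (integral_eq_zero_iff_of_nonneg hpos hi).1 hint0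
  have hae : (fun x => h x * k x) =ᵐ[μ] (0 : ℝ → ℝ) := by
    filter_upwards [h0] with x hx
    simpa using himp x (by simpa using hx)
  rw [integral_congr_ae hae]
  simp

lemma chord_le {k : ℝ → ℝ} (kconv : ConvexOn ℝ Set.univ k) {u v x : ℝ}
    (huv : u < v) (hux : u ≤ x) (hxv : x ≤ v) :
    k x ≤ k u + (k v - k u)/(v - u) * (x - u) := by
  have hvu : (0:ℝ) < v - u := by linarith
  rcases eq_or_lt_of_le hux with rfl | hux'
  · simp
  rcases eq_or_lt_of_le hxv with rfl | hxv'
  · rw [div_mul_cancel₀ _ (ne_of_gt hvu)]; linarith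
  have hs := kconv.slope_mono_adjacent (Set.mem_univ u) (Set.mem_univ v) hux' hxv'
  rw [div_le_div_iff₀ (sub_pos.2 hux') (sub_pos.2 hxv')] at hs
  rw [← sub_le_iff_le_add', div_mul_eq_mul_div, le_div_iff₀ hvu]
  nlinarith [hs]

lemma chord_ge_left {k : ℝ → ℝ} (kconv : ConvexOn ℝ Set.univ k) {u v x : ℝ}
    (huv : u < v) (hxu : x ≤ u) :
    k u + (k v - k u)/(v - u) * (x - u) ≤ k x := by
  have hvu : (0:ℝ) < v - u := by linarith
  rcases eq_or_lt_of_le hxu with rfl | hxu'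
  · simp
  have hs := kconv.slope_mono_adjacent (Set.mem_univ x) (Set.mem_univ v) hxu' huv
  rw [div_le_div_iff₀ (sub_pos.2 hxu') hvu] at hs
  rw [← le_sub_iff_add_le', div_mul_eq_mul_div, div_le_iff₀ hvu]
  nlinarith [hs]

lemma chord_ge_right {k : ℝ → ℝ} (kconv : ConvexOn ℝ Set.univ k) {u v x : ℝ}
    (huv : u < v) (hvx : v ≤ x) :
    k u + (k v - k u)/(v - u) * (x - u) ≤ k x := by
  have hvu : (0:ℝ) < v - u := by linarith
  rcases eq_or_lt_of_le hvx with rfl | hvx'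
  · rw [div_mul_cancel₀ _ (ne_of_gt hvu)]; linarith
  have hs := kconv.slope_mono_adjacent (Set.mem_univ u) (Set.mem_univ x) huv hvx'
  rw [div_le_div_iff₀ (sub_pos.2 huv) (sub_pos.2 hvx')] at hs
  rw [← le_sub_iff_add_le', div_mul_eq_mul_div, div_le_iff₀ hvu]
  nlinarith [hs]

lemma key_lemma (μ : Measure ℝ) [IsProbabilityMeasure μ] (hμ2 : MemLp (fun x : ℝ => x) 2 μ)
    {h k : ℝ → ℝ} (hconv : ConvexOn ℝ Set.univ h) (kconv : ConvexOn ℝ Set.univ k)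
    (hh2 : MemLp h 2 μ) (hk2 : MemLp k 2 μ)
    (hh0 : ∫ x, h x ∂μ = 0) (hh1 : ∫ x, h x * x ∂μ = 0) :
    0 ≤ ∫ x, h x * k x ∂μ := by
  have hcont := conv_cont hconv
  have hInt : Integrable h μ := hh2.integrable one_le_two
  have hIx : Integrable (fun x => h x * x) μ := int_mul2 hh2 hμ2
  set S : Set ℝ := {x | h x < 0} with hSdef
  have hmemS : ∀ x, x ∈ S ↔ h x < 0 := fun x => Iff.rfl
  have hSopen : IsOpen S := isOpen_lt hcont continuous_const
  have hSconv : Convex ℝ S := by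
    have := hconv.convex_lt 0
    simpa [hSdef, Set.sep_univ] using this
  have mem_of_between : ∀ {a b x : ℝ}, a ∈ S → b ∈ S → a ≤ x → x ≤ b → x ∈ S :=
    fun ha hb h1 h2 => hSconv.ordConnected.out ha hb ⟨h1, h2⟩
  have conclude0 : h =ᵐ[μ] 0 → 0 ≤ ∫ x, h x * k x ∂μ := by
    intro h0
    have he : (fun x => h x * k x) =ᵐ[μ] (0 : ℝ → ℝ) := by
      filter_upwards [h0] with x hx
      simp only [Pi.zero_apply] at hx ⊢
      simp [hx]
    rw [integral_congr_ae he]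
    simp
  by_cases hS : μ S = 0
  · have hae : 0 ≤ᵐ[μ] h := by
      filter_upwards [measure_eq_zero_iff_ae_notMem.mp hS] with x hx
      exact le_of_not_gt (by simpa [hSdef] using hx)
    exact conclude0 ((integral_eq_zero_iff_of_nonneg_ae hae hInt).1 hh0)
  have hSne : S.Nonempty := Set.nonempty_iff_ne_empty.2 (fun he => hS (by simp [he]))
  -- boundary zero lemmas
  have inf_nm : BddBelow S → sInf S ∉ S := by
    intro hbb huS
    obtain ⟨ε, hε, hball⟩ := Metric.isOpen_iff.mp hSopen _ huS
    have hmem : sInf S - ε/2 ∈ S := by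
      apply hball
      rw [Metric.mem_ball, Real.dist_eq]
      rw [show sInf S - ε/2 - sInf S = -(ε/2) by ring, abs_neg, abs_of_pos (by linarith)]
      linarith
    have := csInf_le hbb hmem
    linarith
  have sup_nm : BddAbove S → sSup S ∉ S := by
    intro hba hvS
    obtain ⟨ε, hε, hball⟩ := Metric.isOpen_iff.mp hSopen _ hvS
    have hmem : sSup S + ε/2 ∈ S := by
      apply hball
      rw [Metric.mem_ball, Real.dist_eq]
      rw [show sSup S + ε/2 - sSup S = ε/2 by ring, abs_of_pos (by linarith)]
      linarith
    have := le_csSup hba hmem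
    linarith
  have inf_zero : BddBelow S → h (sInf S) = 0 := by
    intro hbb
    refine le_antisymm ?_ (le_of_not_gt ((hmemS _).not.mp (inf_nm hbb)))
    by_contra hp
    push_neg at hp
    obtain ⟨ε, hε, hball⟩ := Metric.isOpen_iff.mp
      (isOpen_lt continuous_const hcont) (sInf S) (by simpa using hp)
    obtain ⟨s, hsS, hs⟩ := (csInf_lt_iff hbb hSne).mp (show sInf S < sInf S + ε by linarith)
    have hus : sInf S ≤ s := csInf_le hbb hsS
    have hmem : s ∈ Metric.ball (sInf S) ε := by
      rw [Metric.mem_ball, Real.dist_eq, abs_of_nonneg (by linarith)]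
      linarith
    have h1 : (0:ℝ) < h s := hball hmem
    have h2 : h s < 0 := hsS
    linarith
  have sup_zero : BddAbove S → h (sSup S) = 0 := by
    intro hba
    refine le_antisymm ?_ (le_of_not_gt ((hmemS _).not.mp (sup_nm hba)))
    by_contra hp
    push_neg at hp
    obtain ⟨ε, hε, hball⟩ := Metric.isOpen_iff.mp
      (isOpen_lt continuous_const hcont) (sSup S) (by simpa using hp)
    obtain ⟨s, hsS, hs⟩ := (lt_csSup_iff hba hSne).mp (show sSup S - ε < sSup S by linarith)
    have hus : s ≤ sSup S := le_csSup hba hsS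
    have hmem : s ∈ Metric.ball (sSup S) ε := by
      rw [Metric.mem_ball, Real.dist_eq, abs_of_nonpos (by linarith)]
      linarith
    have h1 : (0:ℝ) < h s := hball hmem
    have h2 : h s < 0 := hsS
    linarith
  by_cases hbb : BddBelow S <;> by_cases hba : BddAbove S
  · -- bounded both sides: S = Ioo u v
    set u := sInf S with hu
    set v := sSup S with hv
    have hu_nm : u ∉ S := inf_nm hbb
    have hv_nm : v ∉ S := sup_nm hba
    have hSub : S ⊆ Set.Ioo u v := fun x hx =>
      ⟨lt_of_le_of_ne (csInf_le hbb hx) (by rintro rfl; exact hu_nm hx),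
       lt_of_le_of_ne (le_csSup hba hx) (by rintro rfl; exact hv_nm hx)⟩
    have hSup : Set.Ioo u v ⊆ S := by
      intro x hx
      obtain ⟨s, hsS, hs⟩ := (csInf_lt_iff hbb hSne).mp hx.1
      obtain ⟨t, htS, ht⟩ := (lt_csSup_iff hba hSne).mp hx.2
      exact mem_of_between hsS htS hs.le ht.le
    have huv : u < v := by
      obtain ⟨s, hs⟩ := hSne
      exact (hSub hs).1.trans (hSub hs).2
    set B := (k v - k u)/(v - u) with hB
    set l : ℝ → ℝ := fun x => k u + B * (x - u) with hl
    have sign : ∀ x, 0 ≤ h x * (k x - l x) := by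
      intro x
      by_cases hx : x ∈ S
      · have h1 : h x < 0 := hx
        have h2 : k x ≤ l x := chord_le kconv huv (hSub hx).1.le (hSub hx).2.le
        nlinarith [mul_nonneg (neg_nonneg.2 h1.le) (by linarith : (0:ℝ) ≤ l x - k x)]
      · have h1 : 0 ≤ h x := le_of_not_gt (by simpa [hSdef] using hx)
        have hx' : x ≤ u ∨ v ≤ x := by
          by_contra hc
          push_neg at hc
          exact hx (hSup ⟨hc.1, hc.2⟩)
        rcases hx' with h' | h'
        · exact mul_nonneg h1 (by have := chord_ge_left kconv huv h'; simp only [hl]; linarith)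
        · exact mul_nonneg h1 (by have := chord_ge_right kconv huv h'; simp only [hl]; linarith)
    have hle : (fun x => h x * l x) = fun x => (k u - B*u) * h x + B * (h x * x) := by
      funext x; simp only [hl]; ring
    have hIl : Integrable (fun x => h x * l x) μ := by
      rw [hle]; exact (hInt.const_mul _).add (hIx.const_mul _)
    have hIkx : Integrable (fun x => h x * k x) μ := int_mul2 hh2 hk2
    have hsplit : ∫ x, h x * (k x - l x) ∂μ = ∫ x, h x * k x ∂μ - ∫ x, h x * l x ∂μ := by
      rw [← integral_sub hIkx hIl]
      congr 1; funext x; ring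
    have hIl0 : ∫ x, h x * l x ∂μ = 0 := by
      rw [hle, integral_add (hInt.const_mul _) (hIx.const_mul _),
        integral_const_mul, integral_const_mul, hh0, hh1]
      ring
    have hnn := integral_nonneg (μ := μ) (f := fun x => h x * (k x - l x)) sign
    rw [hsplit, hIl0] at hnn
    linarith
  · -- bounded below, unbounded above: S = Ioi u
    set u := sInf S with hu
    have hu_nm : u ∉ S := inf_nm hbb
    have hSeq : ∀ x, x ∈ S ↔ u < x := by
      intro x
      constructor
      · exact fun hx => lt_of_le_of_ne (csInf_le hbb hx) (by rintro rfl; exact hu_nm hx)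
      · intro hx
        obtain ⟨s, hsS, hs⟩ := (csInf_lt_iff hbb hSne).mp hx
        obtain ⟨t, htS, ht⟩ := not_bddAbove_iff.mp hba x
        exact mem_of_between hsS htS hs.le ht.le
    have hu0 : h u = 0 := inf_zero hbb
    have hw2 : MemLp (fun x => u - x) 2 μ := by
      have h' := (memLp_const u).sub hμ2
      simpa [Pi.sub_def] using h'
    have hres : ∫ x, h x * k x ∂μ = 0 := by
      apply deg_case hh2 hw2
      · have e : (fun x => h x * (u - x)) = fun x => u * h x - h x * x := by
          funext x; ring
        rw [e, integral_sub (hInt.const_mul u) hIx, integral_const_mul, hh0, hh1]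
        ring
      · intro x
        by_cases hx : u < x
        · have h1 : h x < 0 := (hSeq x).mpr hx
          nlinarith
        · have h1 : 0 ≤ h x := le_of_not_gt (fun hc => hx ((hSeq x).mp hc))
          push_neg at hx
          have : 0 ≤ u - x := by linarith
          exact mul_nonneg h1 this
      · intro x hx
        rcases mul_eq_zero.mp hx with h1 | h1
        · rw [h1, zero_mul]
        · have : x = u := by linarith [sub_eq_zero.mp h1]
          rw [this, hu0, zero_mul]
    linarith [hres]
  · -- unbounded below, bounded above: S = Iio v
    set v := sSup S with hv
    have hv_nm : v ∉ S := sup_nm hba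
    have hSeq : ∀ x, x ∈ S ↔ x < v := by
      intro x
      constructor
      · exact fun hx => lt_of_le_of_ne (le_csSup hba hx) (by rintro rfl; exact hv_nm hx)
      · intro hx
        obtain ⟨t, htS, ht⟩ := (lt_csSup_iff hba hSne).mp hx
        obtain ⟨s, hsS, hs⟩ := not_bddBelow_iff.mp hbb x
        exact mem_of_between hsS htS hs.le ht.le
    have hv0 : h v = 0 := sup_zero hba
    have hw2 : MemLp (fun x => x - v) 2 μ := by
      have h' := hμ2.sub (memLp_const v)
      simpa [Pi.sub_def] using h'
    have hres : ∫ x, h x * k x ∂μ = 0 := by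
      apply deg_case hh2 hw2
      · have e : (fun x => h x * (x - v)) = fun x => h x * x - v * h x := by
          funext x; ring
        rw [e, integral_sub hIx (hInt.const_mul v), integral_const_mul, hh0, hh1]
        ring
      · intro x
        by_cases hx : x < v
        · have h1 : h x < 0 := (hSeq x).mpr hx
          nlinarith
        · have h1 : 0 ≤ h x := le_of_not_gt (fun hc => hx ((hSeq x).mp hc))
          push_neg at hx
          have : 0 ≤ x - v := by linarith
          exact mul_nonneg h1 this
      · intro x hx
        rcases mul_eq_zero.mp hx with h1 | h1
        · rw [h1, zero_mul]
        · have : x = v := by linarith [sub_eq_zero.mp h1]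
          rw [this, hv0, zero_mul]
    linarith [hres]
  · -- unbounded both sides: h < 0 everywhere
    have hneg : ∀ x, h x < 0 := by
      intro x
      obtain ⟨s, hsS, hs⟩ := not_bddBelow_iff.mp hbb x
      obtain ⟨t, htS, ht⟩ := not_bddAbove_iff.mp hba x
      exact mem_of_between hsS htS hs.le ht.le
    have hneg0 : ∫ x, -h x ∂μ = 0 := by
      rw [integral_neg, hh0, neg_zero]
    have hae : (fun x => -h x) =ᵐ[μ] 0 :=
      (integral_eq_zero_iff_of_nonneg (fun x => neg_nonneg.2 (hneg x).le) hInt.neg).1 hneg0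
    apply conclude0
    filter_upwards [hae] with x hx
    simp only [Pi.zero_apply] at hx ⊢
    linarith [hx]

/-- For any probability measure `μ` on `ℝ` with finite second moment and any
convex functions `f, g ∈ L²(μ)`, one has
`Var(μ) · Cov_μ(f,g) ≥ Cov_μ(f,id) · Cov_μ(g,id)`. -/
theorem var_cov_ge_cov_mul_cov (μ : Measure ℝ) [IsProbabilityMeasure μ]
    (hμ2 : MemLp (fun x : ℝ => x) 2 μ)
    (f g : ℝ → ℝ)
    (hf : ConvexOn ℝ Set.univ f) (hg : ConvexOn ℝ Set.univ g)
    (hfL2 : MemLp f 2 μ) (hgL2 : MemLp g 2 μ) :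
    cov μ (fun x => x) (fun x => x) * cov μ f g ≥
      cov μ f (fun x => x) * cov μ g (fun x => x) := by
  simp only [cov, ge_iff_le]
  set m := ∫ y, y ∂μ with hm
  set F := ∫ y, f y ∂μ with hF
  set G := ∫ y, g y ∂μ with hG
  have hxm2 : MemLp (fun x : ℝ => x - m) 2 μ := by
    have := hμ2.sub (memLp_const m)
    simpa [Pi.sub_def] using this
  have hfF2 : MemLp (fun x => f x - F) 2 μ := by
    have := hfL2.sub (memLp_const F)
    simpa [Pi.sub_def] using this
  have hgG2 : MemLp (fun x => g x - G) 2 μ := by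
    have := hgL2.sub (memLp_const G)
    simpa [Pi.sub_def] using this
  have hIntf : Integrable f μ := hfL2.integrable one_le_two
  have hIntg : Integrable g μ := hgL2.integrable one_le_two
  have hIntx : Integrable (fun x : ℝ => x) μ := hμ2.integrable one_le_two
  set V := ∫ x, (x - m) * (x - m) ∂μ with hV
  set Cf := ∫ x, (f x - F) * (x - m) ∂μ with hCf
  set Cg := ∫ x, (g x - G) * (x - m) ∂μ with hCg
  have hVnn : 0 ≤ V := integral_nonneg fun x => mul_self_nonneg _
  rcases eq_or_lt_of_le hVnn with hV0 | hVpos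
  · -- variance zero
    have hsq : (fun x => (x - m) * (x - m)) =ᵐ[μ] 0 :=
      (integral_eq_zero_iff_of_nonneg (fun x => mul_self_nonneg _)
        (int_mul2 hxm2 hxm2)).1 hV0.symm
    have hxm : ∀ᵐ x ∂μ, x = m := by
      filter_upwards [hsq] with x hx
      simp only [Pi.zero_apply] at hx
      have := mul_self_eq_zero.mp hx
      linarith [sub_eq_zero.mp this]
    have hCf0 : Cf = 0 := by
      rw [hCf]
      have : (fun x => (f x - F) * (x - m)) =ᵐ[μ] 0 := by
        filter_upwards [hxm] with x hx
        simp [hx]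
      rw [integral_congr_ae this]
      simp
    rw [← hV0, hCf0, zero_mul, zero_mul]
  · -- positive variance
    have hVne : V ≠ 0 := ne_of_gt hVpos
    set α := Cf / V with hα
    set β := Cg / V with hβ
    set h : ℝ → ℝ := fun x => f x - F - α * (x - m) with hh
    set k : ℝ → ℝ := fun x => g x - G - β * (x - m) with hk
    have hconvh : ConvexOn ℝ Set.univ h := by
      refine ⟨convex_univ, ?_⟩
      intro x _ y _ a b ha hb hab
      have hfx := hf.2 (Set.mem_univ x) (Set.mem_univ y) ha hb hab
      simp only [smul_eq_mul, hh] at hfx ⊢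
      have hb' : b = 1 - a := by linarith
      subst hb'
      nlinarith [hfx]
    have hconvk : ConvexOn ℝ Set.univ k := by
      refine ⟨convex_univ, ?_⟩
      intro x _ y _ a b ha hb hab
      have hgx := hg.2 (Set.mem_univ x) (Set.mem_univ y) ha hb hab
      simp only [smul_eq_mul, hk] at hgx ⊢
      have hb' : b = 1 - a := by linarith
      subst hb'
      nlinarith [hgx]
    have hh2 : MemLp h 2 μ := by
      have := hfF2.sub (hxm2.const_mul α)
      simpa [Pi.sub_def, hh] using this
    have hk2 : MemLp k 2 μ := by
      have := hgG2.sub (hxm2.const_mul β)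
      simpa [Pi.sub_def, hk] using this
    have hIxm : Integrable (fun x : ℝ => x - m) μ := hIntx.sub (integrable_const m)
    have hIfF : Integrable (fun x => f x - F) μ := hIntf.sub (integrable_const F)
    have hIgG : Integrable (fun x => g x - G) μ := hIntg.sub (integrable_const G)
    have exm : ∫ x, (x - m) ∂μ = 0 := by
      rw [integral_sub hIntx (integrable_const m), integral_const]
      simp [← hm]
    have efF : ∫ x, (f x - F) ∂μ = 0 := by
      rw [integral_sub hIntf (integrable_const F), integral_const]
      simp [← hF]
    have egG : ∫ x, (g x - G) ∂μ = 0 := by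
      rw [integral_sub hIntg (integrable_const G), integral_const]
      simp [← hG]
    have hh0 : ∫ x, h x ∂μ = 0 := by
      simp only [hh]
      rw [integral_sub hIfF (hIxm.const_mul α), efF, integral_const_mul, exm]
      ring
    have hk0 : ∫ x, k x ∂μ = 0 := by
      simp only [hk]
      rw [integral_sub hIgG (hIxm.const_mul β), egG, integral_const_mul, exm]
      ring
    have hh1 : ∫ x, h x * (x - m) ∂μ = 0 := by
      have e : (fun x => h x * (x - m)) =
          fun x => (f x - F) * (x - m) - α * ((x - m) * (x - m)) := by
        funext x; simp only [hh]; ring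
      rw [e, integral_sub (int_mul2 hfF2 hxm2) ((int_mul2 hxm2 hxm2).const_mul α),
        integral_const_mul, ← hCf, ← hV, hα]
      field_simp
      ring
    have hk1 : ∫ x, k x * (x - m) ∂μ = 0 := by
      have e : (fun x => k x * (x - m)) =
          fun x => (g x - G) * (x - m) - β * ((x - m) * (x - m)) := by
        funext x; simp only [hk]; ring
      rw [e, integral_sub (int_mul2 hgG2 hxm2) ((int_mul2 hxm2 hxm2).const_mul β),
        integral_const_mul, ← hCg, ← hV, hβ]
      field_simp
      ring
    have hInth : Integrable h μ := hh2.integrable one_le_two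
    have hh1' : ∫ x, h x * x ∂μ = 0 := by
      have e : (fun x => h x * x) = fun x => h x * (x - m) + m * h x := by
        funext x; ring
      rw [e, integral_add (int_mul2 hh2 hxm2) (hInth.const_mul m),
        integral_const_mul, hh1, hh0]
      ring
    have hkey := key_lemma μ hμ2 hconvh hconvk hh2 hk2 hh0 hh1'
    -- decomposition
    have i1 := int_mul2 hh2 hk2
    have i2 := (int_mul2 hk2 hxm2).const_mul α
    have i3 := (int_mul2 hh2 hxm2).const_mul β
    have i4 := (int_mul2 hxm2 hxm2).const_mul (α * β)
    have hdecomp : ∫ x, (f x - F) * (g x - G) ∂μ = (∫ x, h x * k x ∂μ) + α * β * V := by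
      have e : (fun x => (f x - F) * (g x - G)) = fun x =>
          h x * k x + α * (k x * (x - m)) + β * (h x * (x - m))
            + α * β * ((x - m) * (x - m)) := by
        funext x; simp only [hh, hk]; ring
      have i12 : Integrable (fun x => h x * k x + α * (k x * (x - m))) μ := i1.add i2
      have i123 : Integrable
          (fun x => h x * k x + α * (k x * (x - m)) + β * (h x * (x - m))) μ := i12.add i3
      rw [e, integral_add i123 i4, integral_add i12 i3,
        integral_add i1 i2, integral_const_mul, integral_const_mul, integral_const_mul,
        hh1, hk1, ← hV]
      ring
    rw [hdecomp]
    have hαV : α * V = Cf := div_mul_cancel₀ Cf hVne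
    have hβV : β * V = Cg := div_mul_cancel₀ Cg hVne
    have hfin : V * ((∫ x, h x * k x ∂μ) + α * β * V) =
        V * (∫ x, h x * k x ∂μ) + Cf * Cg := by
      rw [← hαV, ← hβV]; ring
    rw [hfin]
    nlinarith [mul_nonneg hVnn hkey]
end

section
/- Let μ be a probability measure on ℝ with finite second moment. Let f : ℝ → ℝ be a nonnegative log-concave function and g : ℝ → ℝ a convex function, both in L²(μ). If f is orthogonal to the linear function, i.e. Cov_μ(f, id) = 0 where id(x) = x, then Cov_μ(f, g) ≤ 0. -/
open MeasureTheory

private lemma aux_mul_int {μ : Measure ℝ} {f g : ℝ → ℝ} (hf : MemLp f 2 μ)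
    (hg : MemLp g 2 μ) : Integrable (fun x => f x * g x) μ := by
  have h : MemLp (f • g) 1 μ := hg.smul hf
  rw [← memLp_one_iff_integrable]
  exact h

/-- Let `μ` be a probability measure on `ℝ` with finite second moment, `f` a nonnegative
log-concave function and `g` a convex function, both in `L²(μ)`. If `f` is orthogonal to
the identity function (`Cov_μ(f, id) = 0`), then `Cov_μ(f, g) ≤ 0`. -/
theorem cov_nonpos_of_logConcave_convex (μ : Measure ℝ) [IsProbabilityMeasure μ]
    (hμ2 : MemLp (fun x : ℝ => x) 2 μ)
    (f g : ℝ → ℝ)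
    (hf_nonneg : ∀ x, 0 ≤ f x)
    (hf_logConcave : ∀ x y t : ℝ, 0 ≤ t → t ≤ 1 →
      f x ^ t * f y ^ (1 - t) ≤ f (t * x + (1 - t) * y))
    (hg : ConvexOn ℝ Set.univ g)
    (hfL2 : MemLp f 2 μ) (hgL2 : MemLp g 2 μ)
    (h_orth : cov μ f (fun x => x) = 0) :
    cov μ f g ≤ 0 := by
  set m := ∫ y, f y ∂μ with hm
  have hfInt : Integrable f μ := hfL2.integrable one_le_two
  have hgInt : Integrable g μ := hgL2.integrable one_le_two
  have hhL2 : MemLp (fun x => f x - m) 2 μ := hfL2.sub (memLp_const m)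
  have hhInt : Integrable (fun x => f x - m) μ := hfInt.sub (integrable_const m)
  have hh0 : ∫ x, (f x - m) ∂μ = 0 := by
    rw [integral_sub hfInt (integrable_const m), integral_const]
    simp [← hm]
  have hxInt : Integrable (fun x => (f x - m) * x) μ := aux_mul_int hhL2 hμ2
  -- orthogonality to x
  have hhx0 : ∫ x, (f x - m) * x ∂μ = 0 := by
    have h1 : cov μ f (fun x => x) =
        ∫ x, ((f x - m) * x - (f x - m) * (∫ y, y ∂μ)) ∂μ := by
      unfold cov
      exact integral_congr_ae (Filter.Eventually.of_forall fun x => by ring)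
    rw [integral_sub hxInt (hhInt.mul_const _), integral_mul_const, hh0] at h1
    rw [h_orth] at h1
    linarith [h1]
  -- key reduction: find an affine minorant/majorant making the product nonpositive
  have key : ∀ a b : ℝ, (∀ᵐ x ∂μ, (f x - m) * (g x - (a + b * x)) ≤ 0) →
      cov μ f g ≤ 0 := by
    intro a b hab
    have h1 : Integrable (fun x => (f x - m) * (g x - (a + b * x))) μ :=
      aux_mul_int hhL2 (hgL2.sub ((memLp_const a).add (hμ2.const_mul b)))
    have h2 : Integrable (fun x => b * ((f x - m) * x) + (a - ∫ y, g y ∂μ) * (f x - m)) μ :=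
      (hxInt.const_mul b).add (hhInt.const_mul _)
    have hsplit : cov μ f g = ∫ x, (f x - m) * (g x - (a + b * x)) ∂μ := by
      unfold cov
      rw [← hm]
      have : ∫ x, (f x - m) * (g x - ∫ y, g y ∂μ) ∂μ =
          ∫ x, ((f x - m) * (g x - (a + b * x)) +
            (b * ((f x - m) * x) + (a - ∫ y, g y ∂μ) * (f x - m))) ∂μ :=
        integral_congr_ae (Filter.Eventually.of_forall fun x => by ring)
      rw [this, integral_add h1 h2, integral_add (hxInt.const_mul b) (hhInt.const_mul _),
        integral_const_mul, integral_const_mul, hhx0, hh0]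
      ring
    rw [hsplit]
    exact integral_nonpos_of_ae hab
  -- quasiconcavity of f
  have quasi : ∀ x z y : ℝ, x ≤ z → z ≤ y → min (f x) (f y) ≤ f z := by
    intro x z y hxz hzy
    rcases eq_or_lt_of_le (hxz.trans hzy) with hxy | hxy
    · subst hxy
      obtain rfl : z = x := le_antisymm hzy hxz
      simp
    · set t := (y - z)/(y - x) with ht
      have hyx : (0:ℝ) < y - x := by linarith
      have ht0 : 0 ≤ t := div_nonneg (by linarith) hyx.le
      have ht1 : t ≤ 1 := (div_le_one hyx).mpr (by linarith)
      have hz : t * x + (1 - t) * y = z := by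
        rw [ht]
        field_simp
        ring
      have hlog := hf_logConcave x y t ht0 ht1
      rw [hz] at hlog
      rcases le_or_gt (min (f x) (f y)) 0 with hmin | hmin
      · exact hmin.trans (hf_nonneg z)
      · have h1 : min (f x) (f y) ^ t ≤ f x ^ t :=
          Real.rpow_le_rpow hmin.le (min_le_left _ _) ht0
        have h2 : min (f x) (f y) ^ (1 - t) ≤ f y ^ (1 - t) :=
          Real.rpow_le_rpow hmin.le (min_le_right _ _) (by linarith)
        have heq : min (f x) (f y) = min (f x) (f y) ^ t * min (f x) (f y) ^ (1 - t) := by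
          rw [← Real.rpow_add hmin]
          simp
        calc min (f x) (f y) = min (f x) (f y) ^ t * min (f x) (f y) ^ (1 - t) := heq
          _ ≤ f x ^ t * f y ^ (1 - t) := by
              apply mul_le_mul h1 h2 (Real.rpow_nonneg hmin.le _)
                (Real.rpow_nonneg (hf_nonneg x) _)
          _ ≤ f z := hlog
  set I := {x : ℝ | m < f x} with hI
  have hIoc : ∀ ⦃x z y : ℝ⦄, x ∈ I → y ∈ I → x ≤ z → z ≤ y → z ∈ I := by
    intro x z y hx hy hxz hzy
    exact lt_of_lt_of_le (lt_min hx hy) (quasi x z y hxz hzy)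
  have hnotI : ∀ x, x ∉ I → f x - m ≤ 0 := fun x hx => by
    simpa [hI] using hx
  have hinI : ∀ x, x ∈ I → 0 ≤ f x - m := fun x hx => by
    have : m < f x := hx
    linarith
  -- slope inequality for g
  have hslope : ∀ u v w : ℝ, u < v → v < w →
      (g v - g u)/(v - u) ≤ (g w - g v)/(w - v) := fun u v w h1 h2 =>
    hg.slope_mono_adjacent (Set.mem_univ u) (Set.mem_univ w) h1 h2
  rcases Set.eq_empty_or_nonempty I with hIe | ⟨x₀, hx₀⟩
  · -- f ≤ m everywhere, so f = m a.e.
    have hle : ∀ x, 0 ≤ m - f x := by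
      intro x
      have : x ∉ I := by rw [hIe]; exact Set.notMem_empty x
      have := hnotI x this
      linarith
    have hint0 : ∫ x, (m - f x) ∂μ = 0 := by
      have : ∫ x, (m - f x) ∂μ = - ∫ x, (f x - m) ∂μ := by
        rw [← integral_neg]
        exact integral_congr_ae (Filter.Eventually.of_forall fun x => by ring)
      rw [this, hh0]; ring
    have hae : (fun x => m - f x) =ᵐ[μ] 0 :=
      (integral_eq_zero_iff_of_nonneg hle ((integrable_const m).sub hfInt)).mp hint0
    apply key 0 0
    filter_upwards [hae] with x hx
    have : f x - m = 0 := by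
      simp only [Pi.zero_apply] at hx
      linarith
    rw [this, zero_mul]
  · by_cases hBB : BddBelow I
    · by_cases hBA : BddAbove I
      · -- bounded case: chord of g over [p, q]
        set p := sInf I with hp
        set q := sSup I with hq
        have hpq : p ≤ q := csInf_le_csSup ⟨x₀, hx₀⟩ hBB hBA
        have hIsub : ∀ x ∈ I, p ≤ x ∧ x ≤ q := fun x hx =>
          ⟨csInf_le hBB hx, le_csSup hBA hx⟩
        have hmem : ∀ x, p < x → x < q → x ∈ I := by
          intro x h1 h2
          obtain ⟨u, huI, hux⟩ := exists_lt_of_csInf_lt ⟨x₀, hx₀⟩ h1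
          obtain ⟨v, hvI, hxv⟩ := exists_lt_of_lt_csSup ⟨x₀, hx₀⟩ h2
          exact hIoc huI hvI hux.le hxv.le
        rcases eq_or_lt_of_le hpq with hpq' | hpq'
        · -- degenerate: I = {p}; supporting line of g at p
          set T := (fun y => (g y - g p)/(y - p)) '' Set.Ioi p with hT
          have hTne : T.Nonempty := ⟨_, ⟨p + 1, by simp, rfl⟩⟩
          have hTbdd : BddBelow T := by
            refine ⟨(g p - g (p-1))/(p - (p-1)), ?_⟩
            rintro _ ⟨y, hy, rfl⟩
            exact hslope (p-1) p y (by linarith) hy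
          set b := sInf T with hb
          have hub : ∀ x, g p + b * (x - p) ≤ g x := by
            intro x
            rcases lt_trichotomy x p with h | h | h
            · have h1 : (g p - g x)/(p - x) ≤ b := by
                apply le_csInf hTne
                rintro _ ⟨y, hy, rfl⟩
                exact hslope x p y h hy
              have hpx : (0:ℝ) < p - x := by linarith
              have h2 := (div_le_iff₀ hpx).mp h1
              have h3 : b * (x - p) = -(b * (p - x)) := by ring
              linarith
            · subst h; simp
            · have h1 : b ≤ (g x - g p)/(x - p) := csInf_le hTbdd ⟨x, h, rfl⟩
              have hpx : (0:ℝ) < x - p := by linarith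
              have h2 := (le_div_iff₀ hpx).mp h1
              linarith
          apply key (g p - b * p) b
          apply Filter.Eventually.of_forall
          intro x
          by_cases hx : x ∈ I
          · obtain ⟨h1, h2⟩ := hIsub x hx
            have hxp : x = p := le_antisymm (by rw [hpq']; exact h2) h1
            rw [hxp]
            have hz : g p - (g p - b * p + b * p) = 0 := by ring
            rw [hz, mul_zero]
          · have h1 := hnotI x hx
            have h2 := hub x
            refine mul_nonpos_iff.mpr (Or.inr ⟨h1, ?_⟩)
            have h3 : b * (x - p) = b * x - b * p := by ring
            linarith
        · -- p < q: chord
          set b := (g q - g p)/(q - p) with hb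
          have hqp : (0:ℝ) < q - p := by linarith
          have hbq : g q = g p + b * (q - p) := by
            rw [hb]
            field_simp
            ring
          have hin : ∀ x, p ≤ x → x ≤ q → g x ≤ g p + b * (x - p) := by
            intro x h1 h2
            set t := (q - x)/(q - p) with ht
            have ht0 : 0 ≤ t := div_nonneg (by linarith) hqp.le
            have ht1 : 0 ≤ 1 - t := by
              have : t ≤ 1 := (div_le_one hqp).mpr (by linarith)
              linarith
            have hcomb := hg.2 (Set.mem_univ p) (Set.mem_univ q) ht0 ht1 (by ring)
            have hxc : t * p + (1 - t) * q = x := by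
              rw [ht]
              field_simp
              ring
            simp only [smul_eq_mul] at hcomb
            rw [hxc] at hcomb
            have hbx : b * (x - p) = (1 - t) * (g q - g p) := by
              rw [hb, ht]
              field_simp
              ring
            calc g x ≤ t * g p + (1 - t) * g q := hcomb
              _ = g p + (1 - t) * (g q - g p) := by ring
              _ = g p + b * (x - p) := by rw [hbx]
          have hout : ∀ x, x ≤ p ∨ q ≤ x → g p + b * (x - p) ≤ g x := by
            intro x hx
            rcases hx with hx | hx
            · rcases eq_or_lt_of_le hx with hx' | hx'
              · subst hx'; simp
              · have h1 : (g p - g x)/(p - x) ≤ (g q - g p)/(q - p) :=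
                  hslope x p q hx' hpq'
                rw [← hb] at h1
                have hpx : (0:ℝ) < p - x := by linarith
                have h2 := (div_le_iff₀ hpx).mp h1
                have h3 : b * (x - p) = -(b * (p - x)) := by ring
                linarith
            · rcases eq_or_lt_of_le hx with hx' | hx'
              · rw [← hx']
                linarith [hbq]
              · have h1 : (g q - g p)/(q - p) ≤ (g x - g q)/(x - q) :=
                  hslope p q x hpq' hx'
                rw [← hb] at h1
                have hqx : (0:ℝ) < x - q := by linarith
                have h2 := (le_div_iff₀ hqx).mp h1
                have h3 : b * (x - p) = b * (x - q) + b * (q - p) := by ring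
                linarith [hbq]
          apply key (g p - b * p) b
          apply Filter.Eventually.of_forall
          intro x
          have hiff : g p - b * p + b * x = g p + b * (x - p) := by ring
          by_cases hx : x ∈ I
          · obtain ⟨h1, h2⟩ := hIsub x hx
            have h3 := hin x h1 h2
            exact mul_nonpos_iff.mpr (Or.inl ⟨hinI x hx, by linarith⟩)
          · have hfle := hnotI x hx
            have hgge : g p + b * (x - p) ≤ g x := by
              rcases le_or_gt x p with h | h
              · exact hout x (Or.inl h)
              · rcases le_or_gt q x with h' | h'
                · exact hout x (Or.inr h')
                · exact absurd (hmem x h h') hx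
            exact mul_nonpos_iff.mpr (Or.inr ⟨hfle, by linarith⟩)
      · -- I ⊇ (p, ∞)
        set p := sInf I with hp
        have hmem : ∀ x, p < x → x ∈ I := by
          intro x h1
          obtain ⟨u, huI, hux⟩ := exists_lt_of_csInf_lt ⟨x₀, hx₀⟩ h1
          obtain ⟨v, hvI, hxv⟩ := not_bddAbove_iff.mp hBA x
          exact hIoc huI hvI hux.le hxv.le
        have hφnn : ∀ x, 0 ≤ (f x - m) * (x - p) := by
          intro x
          rcases lt_trichotomy x p with h | h | h
          · have hxI : x ∉ I := fun hx => absurd (csInf_le hBB hx) (by linarith)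
            have := hnotI x hxI
            nlinarith
          · subst h; simp
          · have := hinI x (hmem x h)
            nlinarith
        have hφInt : Integrable (fun x => (f x - m) * (x - p)) μ :=
          aux_mul_int hhL2 (hμ2.sub (memLp_const p))
        have hφ0 : ∫ x, (f x - m) * (x - p) ∂μ = 0 := by
          have h1 : ∫ x, (f x - m) * (x - p) ∂μ =
              ∫ x, ((f x - m) * x - (f x - m) * p) ∂μ :=
            integral_congr_ae (Filter.Eventually.of_forall fun x => by ring)
          rw [h1, integral_sub hxInt (hhInt.mul_const p), integral_mul_const, hhx0, hh0]
          ring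
        have hae : (fun x => (f x - m) * (x - p)) =ᵐ[μ] 0 :=
          (integral_eq_zero_iff_of_nonneg hφnn hφInt).mp hφ0
        apply key (g p) 0
        filter_upwards [hae] with x hx
        simp only [Pi.zero_apply] at hx
        rcases mul_eq_zero.mp hx with h | h
        · rw [h, zero_mul]
        · have hxp : x = p := by linarith
          subst hxp
          simp
    · by_cases hBA : BddAbove I
      · -- I ⊇ (-∞, q)
        set q := sSup I with hq
        have hmem : ∀ x, x < q → x ∈ I := by
          intro x h1
          obtain ⟨v, hvI, hxv⟩ := exists_lt_of_lt_csSup ⟨x₀, hx₀⟩ h1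
          obtain ⟨u, huI, hux⟩ := not_bddBelow_iff.mp hBB x
          exact hIoc huI hvI hux.le hxv.le
        have hφnn : ∀ x, 0 ≤ (f x - m) * (q - x) := by
          intro x
          rcases lt_trichotomy x q with h | h | h
          · have := hinI x (hmem x h)
            nlinarith
          · subst h; simp
          · have hxI : x ∉ I := fun hx => absurd (le_csSup hBA hx) (by linarith)
            have := hnotI x hxI
            nlinarith
        have hφInt : Integrable (fun x => (f x - m) * (q - x)) μ :=
          aux_mul_int hhL2 ((memLp_const q).sub hμ2)
        have hφ0 : ∫ x, (f x - m) * (q - x) ∂μ = 0 := by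
          have h1 : ∫ x, (f x - m) * (q - x) ∂μ =
              ∫ x, ((f x - m) * q - (f x - m) * x) ∂μ :=
            integral_congr_ae (Filter.Eventually.of_forall fun x => by ring)
          rw [h1, integral_sub (hhInt.mul_const q) hxInt, integral_mul_const, hhx0, hh0]
          ring
        have hae : (fun x => (f x - m) * (q - x)) =ᵐ[μ] 0 :=
          (integral_eq_zero_iff_of_nonneg hφnn hφInt).mp hφ0
        apply key (g q) 0
        filter_upwards [hae] with x hx
        simp only [Pi.zero_apply] at hx
        rcases mul_eq_zero.mp hx with h | h
        · rw [h, zero_mul]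
        · have hxq : x = q := by linarith
          subst hxq
          simp
      · -- I = ℝ : contradiction
        exfalso
        have hall : ∀ x, x ∈ I := by
          intro x
          obtain ⟨u, huI, hux⟩ := not_bddBelow_iff.mp hBB x
          obtain ⟨v, hvI, hxv⟩ := not_bddAbove_iff.mp hBA x
          exact hIoc huI hvI hux.le hxv.le
        have hpos : ∀ x, 0 < f x - m := fun x => sub_pos.mpr (hall x)
        have hae : (fun x => f x - m) =ᵐ[μ] 0 :=
          (integral_eq_zero_iff_of_nonneg (fun x => (hpos x).le) hhInt).mp hh0
        have hne : (MeasureTheory.ae μ).NeBot :=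
          MeasureTheory.ae_neBot.mpr (IsProbabilityMeasure.ne_zero μ)
        obtain ⟨x, hx⟩ := hae.exists
        simp only [Pi.zero_apply] at hx
        exact absurd hx (ne_of_gt (hpos x))
end

section
/- Let μ be a probability measure on ℝ. Let f, g : ℝ → ℝ be nonnegative quasi-concave functions that are both even, with f, g ∈ L²(μ). Then Cov_μ(f, g) ≥ 0. -/
open MeasureTheory

/-- An even quasi-concave function is antitone in the absolute value. -/
lemma even_qc_antitone_abs (f : ℝ → ℝ)
    (hqc : ∀ x y t : ℝ, 0 ≤ t → t ≤ 1 → min (f x) (f y) ≤ f (t * x + (1 - t) * y))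
    (heven : ∀ x, f (-x) = f x) {x y : ℝ} (h : |x| ≤ |y|) : f y ≤ f x := by
  have key : ∀ a b : ℝ, 0 ≤ a → a ≤ b → f b ≤ f a := by
    intro a b ha hab
    rcases eq_or_lt_of_le (ha.trans hab) with hb | hb
    · have : a = b := le_antisymm hab (by linarith [hb.symm ▸ ha])
      simp [this]
    · set t := (a + b) / (2 * b) with ht
      have hb2 : (2 : ℝ) * b ≠ 0 := by positivity
      have h1 : t * b + (1 - t) * (-b) = a := by
        have h2 : t * (2 * b) = a + b := by rw [ht]; exact div_mul_cancel₀ _ hb2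
        linarith
      have ht0 : 0 ≤ t := by positivity
      have ht1 : t ≤ 1 := by
        rw [ht, div_le_one (by positivity)]; linarith
      have := hqc b (-b) t ht0 ht1
      rw [heven b, min_self, h1] at this
      exact this
  have hx : f x = f |x| := by
    rcases abs_choice x with hc | hc
    · rw [hc]
    · rw [hc, heven]
  have hy : f y = f |y| := by
    rcases abs_choice y with hc | hc
    · rw [hc]
    · rw [hc, heven]
  rw [hx, hy]
  exact key _ _ (abs_nonneg x) h

/-- Let `μ` be a probability measure on `ℝ` and let `f, g ∈ L²(μ)` be nonnegative
quasi-concave even functions. Then `Cov_μ(f, g) ≥ 0`. -/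
theorem cov_nonneg_of_quasiConcave_even (μ : Measure ℝ) [IsProbabilityMeasure μ]
    (f g : ℝ → ℝ)
    (hf_nonneg : ∀ x, 0 ≤ f x) (hg_nonneg : ∀ x, 0 ≤ g x)
    (hf_qc : ∀ x y t : ℝ, 0 ≤ t → t ≤ 1 → min (f x) (f y) ≤ f (t * x + (1 - t) * y))
    (hg_qc : ∀ x y t : ℝ, 0 ≤ t → t ≤ 1 → min (g x) (g y) ≤ g (t * x + (1 - t) * y))
    (hf_even : ∀ x, f (-x) = f x) (hg_even : ∀ x, g (-x) = g x)
    (hfL2 : MemLp f 2 μ) (hgL2 : MemLp g 2 μ) :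
    0 ≤ cov μ f g := by
  -- integrability facts
  have hf1 : Integrable f μ := hfL2.integrable one_le_two
  have hg1 : Integrable g μ := hgL2.integrable one_le_two
  have hfg : Integrable (fun x => f x * g x) μ := by
    refine Integrable.mono' ((hfL2.integrable_sq.add hgL2.integrable_sq).div_const 2)
      (hfL2.1.mul hgL2.1) (Filter.Eventually.of_forall fun x => ?_)
    simp only [Real.norm_eq_abs, abs_mul, Pi.add_apply]
    nlinarith [abs_nonneg (f x), abs_nonneg (g x), sq_abs (f x), sq_abs (g x),
      sq_nonneg (|f x| - |g x|)]
  set a := ∫ y, f y ∂μ with ha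
  set b := ∫ y, g y ∂μ with hb
  -- rewrite covariance
  have hcov : cov μ f g = (∫ x, f x * g x ∂μ) - a * b := by
    have : ∀ x, (f x - a) * (g x - b) = f x * g x - b * f x - a * g x + a * b := by
      intro x; ring
    have hA : Integrable (fun x => f x * g x - b * f x) μ := hfg.sub (hf1.const_mul b)
    have hB : Integrable (fun x => f x * g x - b * f x - a * g x) μ := hA.sub (hg1.const_mul a)
    rw [cov]
    show ∫ x, (f x - a) * (g x - b) ∂μ = _
    simp_rw [this]
    rw [integral_add hB (integrable_const (a * b)), integral_sub hA (hg1.const_mul a),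
      integral_sub hfg (hf1.const_mul b), integral_const_mul, integral_const_mul,
      integral_const, probReal_univ]
    simp only [← ha, ← hb, ENNReal.toReal_one, smul_eq_mul, one_mul]
    ring
  rw [hcov]
  -- product-measure trick
  have hmono : ∀ x y : ℝ, 0 ≤ (f x - f y) * (g x - g y) := by
    intro x y
    rcases le_total |x| |y| with h | h
    · have h1 := even_qc_antitone_abs f hf_qc hf_even h
      have h2 := even_qc_antitone_abs g hg_qc hg_even h
      exact mul_nonneg (by linarith) (by linarith)
    · have h1 := even_qc_antitone_abs f hf_qc hf_even h
      have h2 := even_qc_antitone_abs g hg_qc hg_even h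
      have := mul_nonneg (by linarith : (0:ℝ) ≤ f y - f x) (by linarith : (0:ℝ) ≤ g y - g x)
      nlinarith
  have hmap1 : (μ.prod μ).map Prod.fst = μ := by
    rw [Measure.map_fst_prod]; simp
  have hmap2 : (μ.prod μ).map Prod.snd = μ := by
    rw [Measure.map_snd_prod]; simp
  have hI1 : Integrable (fun z : ℝ × ℝ => f z.1 * g z.1) (μ.prod μ) := by
    have h := (integrable_map_measure (g := fun x => f x * g x) (f := (Prod.fst : ℝ × ℝ → ℝ))
      (by rw [hmap1]; exact hfg.1) measurable_fst.aemeasurable).mp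
      (by rw [hmap1]; exact hfg)
    exact h
  have hI2 : Integrable (fun z : ℝ × ℝ => f z.2 * g z.2) (μ.prod μ) := by
    have h := (integrable_map_measure (g := fun x => f x * g x) (f := (Prod.snd : ℝ × ℝ → ℝ))
      (by rw [hmap2]; exact hfg.1) measurable_snd.aemeasurable).mp
      (by rw [hmap2]; exact hfg)
    exact h
  have key : (0:ℝ) ≤ ∫ z, (f z.1 - f z.2) * (g z.1 - g z.2) ∂(μ.prod μ) :=
    integral_nonneg fun z => hmono _ _
  have expand : (∫ z, (f z.1 - f z.2) * (g z.1 - g z.2) ∂(μ.prod μ))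
      = 2 * ((∫ x, f x * g x ∂μ) - a * b) := by
    have heq : (fun z : ℝ × ℝ => (f z.1 - f z.2) * (g z.1 - g z.2))
        = fun z : ℝ × ℝ => (f z.1 * g z.1 + f z.2 * g z.2)
          - (f z.1 * g z.2 + g z.1 * f z.2) := by
      funext z; ring
    have hS1 : Integrable (fun z : ℝ × ℝ => f z.1 * g z.1 + f z.2 * g z.2) (μ.prod μ) :=
      hI1.add hI2
    have hS2 : Integrable (fun z : ℝ × ℝ => f z.1 * g z.2 + g z.1 * f z.2) (μ.prod μ) :=
      (hf1.mul_prod hg1).add (hg1.mul_prod hf1)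
    have e1 : ∫ z : ℝ × ℝ, f z.1 * g z.1 ∂(μ.prod μ) = ∫ x, f x * g x ∂μ := by
      have h := integral_map (μ := μ.prod μ) (φ := (Prod.fst : ℝ × ℝ → ℝ))
        measurable_fst.aemeasurable (f := fun x => f x * g x) (by rw [hmap1]; exact hfg.1)
      rw [hmap1] at h
      exact h.symm
    have e2 : ∫ z : ℝ × ℝ, f z.2 * g z.2 ∂(μ.prod μ) = ∫ x, f x * g x ∂μ := by
      have h := integral_map (μ := μ.prod μ) (φ := (Prod.snd : ℝ × ℝ → ℝ))
        measurable_snd.aemeasurable (f := fun x => f x * g x) (by rw [hmap2]; exact hfg.1)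
      rw [hmap2] at h
      exact h.symm
    rw [heq, integral_sub hS1 hS2,
      integral_add hI1 hI2, integral_add (hf1.mul_prod hg1) (hg1.mul_prod hf1),
      integral_prod_mul, integral_prod_mul, e1, e2]
    simp only [← ha, ← hb]
    ring
  rw [expand] at key
  linarith
end

section
/- Let μ = μ₁ ⊗ ⋯ ⊗ μ_d be a product probability measure on ℝ^d such that each marginal μ_i is even (symmetric under x ↦ −x) and log-concave. Let f = e^{−φ} be an unconditional positive log-concave function and let g : ℝ^d → ℝ be a coordinatewise convex function, with f, g ∈ L²(μ). Then Cov_μ(f, g) ≤ 0. -/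
open MeasureTheory

/-- A function on `ℝ^d` is unconditional if it is invariant under sign flips of
each coordinate. -/
def Unconditional {d : ℕ} (f : (Fin d → ℝ) → ℝ) : Prop :=
  ∀ ε : Fin d → ℝ, (∀ i, ε i = 1 ∨ ε i = -1) →
    ∀ x : Fin d → ℝ, f (fun i => ε i * x i) = f x

section Helpers

variable {α : Type*} [MeasurableSpace α] {μ : Measure α}

lemma integrable_mul_of_memL2 {f g : α → ℝ} (hf : MemLp f 2 μ) (hg : MemLp g 2 μ) :
    Integrable (fun x => f x * g x) μ := by
  refine Integrable.mono' ((hf.integrable_sq.add hg.integrable_sq).div_const 2)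
    (hf.aestronglyMeasurable.mul hg.aestronglyMeasurable) ?_
  refine Filter.Eventually.of_forall fun x => ?_
  simp only [Pi.add_apply]
  rw [Real.norm_eq_abs, abs_mul]
  nlinarith [sq_nonneg (|f x| - |g x|), abs_nonneg (f x), abs_nonneg (g x), sq_abs (f x),
    sq_abs (g x)]

lemma sq_integral_le [IsProbabilityMeasure μ] {f : α → ℝ} (hf : MemLp f 2 μ) :
    (∫ x, f x ∂μ) ^ 2 ≤ ∫ x, f x ^ 2 ∂μ := by
  have h1 := ProbabilityTheory.variance_nonneg f μ
  rw [ProbabilityTheory.variance_eq_sub hf] at h1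
  simp only [Pi.pow_apply] at h1
  linarith

lemma cov_eq' [IsProbabilityMeasure μ] {f g : α → ℝ} (hf : MemLp f 2 μ) (hg : MemLp g 2 μ) :
    ∫ x, (f x - ∫ y, f y ∂μ) * (g x - ∫ y, g y ∂μ) ∂μ
      = (∫ x, f x * g x ∂μ) - (∫ x, f x ∂μ) * (∫ x, g x ∂μ) := by
  have hfi := hf.integrable one_le_two
  have hgi := hg.integrable one_le_two
  have hfgi := integrable_mul_of_memL2 hf hg
  set a := ∫ x, f x ∂μ with ha
  set b := ∫ x, g x ∂μ with hb
  have hpt : (fun x => (f x - a) * (g x - b))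
      = fun x => f x * g x - a * g x - b * f x + a * b := by
    funext x; ring
  have i1 : Integrable (fun x => f x * g x - a * g x) μ := hfgi.sub (hgi.const_mul a)
  have i2 : Integrable (fun x => f x * g x - a * g x - b * f x) μ := i1.sub (hfi.const_mul b)
  rw [hpt, integral_add i2 (integrable_const (a * b)), integral_sub i1 (hfi.const_mul b),
    integral_sub hfgi (hgi.const_mul a),
    integral_const_mul, integral_const_mul, integral_const]
  simp [measure_univ]
  ring

lemma even_convexOn_mono {u : ℝ → ℝ} (he : ∀ r, u (-r) = u r)
    (hc : ConvexOn ℝ Set.univ u) {s t : ℝ} (h : |s| ≤ |t|) : u s ≤ u t := by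
  have hst : s ∈ segment ℝ (-|t|) |t| := by
    rw [segment_eq_Icc (neg_le_self (abs_nonneg t))]
    exact abs_le.mp h
  have hmax := hc.le_on_segment (Set.mem_univ (-|t|)) (Set.mem_univ |t|) hst
  have h1 : u (-|t|) = u |t| := he _
  have h2 : u |t| = u t := by
    rcases abs_choice t with h' | h'
    · rw [h']
    · rw [h']; exact he t
  rw [h1, max_self, h2] at hmax
  exact hmax

lemma even_part_convexOn {v : ℝ → ℝ} (hv : ConvexOn ℝ Set.univ v) :
    ConvexOn ℝ Set.univ (fun r => (v r + v (-r)) / 2) := by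
  refine ⟨convex_univ, fun p _ q _ a b ha hb hab => ?_⟩
  have h1 := hv.2 (Set.mem_univ p) (Set.mem_univ q) ha hb hab
  have h2 := hv.2 (Set.mem_univ (-p)) (Set.mem_univ (-q)) ha hb hab
  simp only [smul_eq_mul] at h1 h2 ⊢
  rw [show -(a * p + b * q) = a * (-p) + b * (-q) by ring]
  linarith

lemma cons_combo {d : ℕ} (a b s t : ℝ) (x y : Fin d → ℝ) :
    a • (Fin.cons s x : Fin (d+1) → ℝ) + b • (Fin.cons t y : Fin (d+1) → ℝ)
      = (Fin.cons (a * s + b * t) (a • x + b • y) : Fin (d+1) → ℝ) := by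
  funext i
  refine Fin.cases ?_ (fun j => ?_) i <;> simp

lemma cons_mul {d : ℕ} (c t : ℝ) (ε x : Fin d → ℝ) :
    (fun i => (Fin.cons c ε : Fin (d+1) → ℝ) i * (Fin.cons t x : Fin (d+1) → ℝ) i)
      = (Fin.cons (c * t) (fun j => ε j * x j) : Fin (d+1) → ℝ) := by
  funext i
  refine Fin.cases ?_ (fun j => ?_) i <;> simp

end Helpers

theorem aux_cov_nonpos (d : ℕ) (μi : Fin d → Measure ℝ)
    (hP : ∀ i, IsProbabilityMeasure (μi i))
    (hsymm : ∀ i, Measure.map (fun x : ℝ => -x) (μi i) = μi i)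
    (φ : (Fin d → ℝ) → ℝ) (f g : (Fin d → ℝ) → ℝ)
    (hf_def : f = fun x => Real.exp (-φ x))
    (hφ_convex : ConvexOn ℝ Set.univ φ)
    (hf_uncond : Unconditional f)
    (hg_coordconvex : ∀ (i : Fin d) (x : Fin d → ℝ),
      ConvexOn ℝ Set.univ (fun t => g (Function.update x i t)))
    (hfL2 : MemLp f 2 (Measure.pi μi)) (hgL2 : MemLp g 2 (Measure.pi μi)) :
    cov (Measure.pi μi) f g ≤ 0 := by
  induction d with
  | zero =>
    haveI : ∀ i, IsProbabilityMeasure (μi i) := hP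
    haveI : Subsingleton (Fin 0 → ℝ) := ⟨fun a b => funext fun i => i.elim0⟩
    have hconst : ∀ x : Fin 0 → ℝ, f x = f (fun i => i.elim0) :=
      fun x => congrArg f (Subsingleton.elim _ _)
    have h1 : ∫ y, f y ∂(Measure.pi μi) = f (fun i => i.elim0) := by
      rw [show f = fun _ => f (fun i => i.elim0) from funext hconst, integral_const]
      simp
    have h0 : ∀ x : Fin 0 → ℝ,
        (f x - ∫ y, f y ∂(Measure.pi μi)) * (g x - ∫ y, g y ∂(Measure.pi μi)) = 0 := by
      intro x
      rw [h1, hconst x, sub_self, zero_mul]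
    unfold cov
    rw [integral_congr_ae (Filter.Eventually.of_forall h0), integral_zero]
  | succ d ih =>
    haveI : ∀ i, IsProbabilityMeasure (μi i) := hP
    -- pointwise structure lemmas
    have hfeven : ∀ (t : ℝ) (x : Fin d → ℝ), f (Fin.cons (-t) x) = f (Fin.cons t x) := by
      intro t x
      have h := hf_uncond (Fin.cons (-1) (fun _ => 1))
        (fun i => Fin.cases (Or.inr rfl) (fun j => Or.inl rfl) i) (Fin.cons t x)
      rw [cons_mul] at h
      simpa using h
    have hφeven : ∀ (t : ℝ) (x : Fin d → ℝ), φ (Fin.cons (-t) x) = φ (Fin.cons t x) := by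
      intro t x
      have h := hfeven t x
      rw [hf_def] at h
      exact neg_injective (Real.exp_injective h)
    have hφconsconvex : ∀ t : ℝ,
        ConvexOn ℝ Set.univ (fun x : Fin d → ℝ => φ (Fin.cons t x)) := by
      intro t
      refine ⟨convex_univ, fun x _ y _ a b ha hb hab => ?_⟩
      have h := hφ_convex.2 (Set.mem_univ (Fin.cons t x)) (Set.mem_univ (Fin.cons t y)) ha hb hab
      rw [cons_combo, show a * t + b * t = t by rw [← add_mul, hab, one_mul]] at h
      exact h
    have hφtconvex : ∀ x : Fin d → ℝ,
        ConvexOn ℝ Set.univ (fun t : ℝ => φ (Fin.cons t x)) := by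
      intro x
      refine ⟨convex_univ, fun s _ t _ a b ha hb hab => ?_⟩
      have h := hφ_convex.2 (Set.mem_univ (Fin.cons s x)) (Set.mem_univ (Fin.cons t x)) ha hb hab
      rw [cons_combo, Convex.combo_self hab] at h
      simpa using h
    have hfmono : ∀ (s t : ℝ) (x : Fin d → ℝ), |s| ≤ |t| →
        f (Fin.cons t x) ≤ f (Fin.cons s x) := by
      intro s t x hst
      have h := even_convexOn_mono (fun r => hφeven r x) (hφtconvex x) hst
      rw [hf_def]
      exact Real.exp_le_exp.mpr (neg_le_neg h)
    have hgtconvex : ∀ x : Fin d → ℝ,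
        ConvexOn ℝ Set.univ (fun t : ℝ => g (Fin.cons t x)) := by
      intro x
      have h := hg_coordconvex 0 (Fin.cons 0 x)
      have he : (fun t : ℝ => g (Function.update (Fin.cons 0 x) 0 t))
          = fun t : ℝ => g (Fin.cons t x) := by
        funext t; rw [Fin.update_cons_zero]
      rwa [he] at h
    have hgmono : ∀ (s t : ℝ) (x : Fin d → ℝ), |s| ≤ |t| →
        (g (Fin.cons s x) + g (Fin.cons (-s) x)) / 2
          ≤ (g (Fin.cons t x) + g (Fin.cons (-t) x)) / 2 := by
      intro s t x hst
      have hconv := even_part_convexOn (hgtconvex x)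
      have heven : ∀ r : ℝ,
          (g (Fin.cons (-r) x) + g (Fin.cons (-(-r)) x)) / 2
            = (g (Fin.cons r x) + g (Fin.cons (-r) x)) / 2 := by
        intro r; rw [neg_neg]; ring
      exact even_convexOn_mono heven hconv hst
    have hunc' : ∀ t : ℝ, Unconditional (fun x : Fin d → ℝ => f (Fin.cons t x)) := by
      intro t ε hε x
      have h := hf_uncond (Fin.cons 1 ε)
        (fun i => Fin.cases (Or.inl rfl) (fun j => hε j) i) (Fin.cons t x)
      rw [cons_mul] at h
      simpa using h
    -- the product structure
    set ν := μi 0 with hνdef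
    set m := Measure.pi (fun j : Fin d => μi j.succ) with hmdef
    haveI : IsProbabilityMeasure m := by
      rw [hmdef]; infer_instance
    haveI : IsProbabilityMeasure ν := hP 0
    have hmp : MeasurePreserving (MeasurableEquiv.piFinSuccAbove (fun _ : Fin (d+1) => ℝ) 0)
        (Measure.pi μi) (ν.prod m) := measurePreserving_piFinSuccAbove μi 0
    set e := MeasurableEquiv.piFinSuccAbove (fun _ : Fin (d+1) => ℝ) 0 with hedef
    have hmps : MeasurePreserving e.symm (ν.prod m) (Measure.pi μi) := hmp.symm e
    set f₁ : ℝ × (Fin d → ℝ) → ℝ := fun p => f (Fin.cons p.1 p.2) with hf₁def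
    set g₁ : ℝ × (Fin d → ℝ) → ℝ := fun p => g (Fin.cons p.1 p.2) with hg₁def
    have hfe : ∀ p : ℝ × (Fin d → ℝ), f (e.symm p) = f₁ p := by
      intro p
      simp only [hedef, MeasurableEquiv.piFinSuccAbove_symm_apply, Fin.insertNthEquiv,
        Equiv.coe_fn_mk, Fin.insertNth_zero']
      rfl
    have hge : ∀ p : ℝ × (Fin d → ℝ), g (e.symm p) = g₁ p := by
      intro p
      simp only [hedef, MeasurableEquiv.piFinSuccAbove_symm_apply, Fin.insertNthEquiv,
        Equiv.coe_fn_mk, Fin.insertNth_zero']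
      rfl
    -- transport of integrals and L² membership
    have hIf : ∫ y, f y ∂(Measure.pi μi) = ∫ p, f₁ p ∂(ν.prod m) := by
      rw [← hmps.integral_comp' f]
      exact integral_congr_ae (Filter.Eventually.of_forall hfe)
    have hIg : ∫ y, g y ∂(Measure.pi μi) = ∫ p, g₁ p ∂(ν.prod m) := by
      rw [← hmps.integral_comp' g]
      exact integral_congr_ae (Filter.Eventually.of_forall hge)
    have hf₁L2 : MemLp f₁ 2 (ν.prod m) := by
      have h1 : MemLp (f ∘ e.symm) 2 (ν.prod m) := by
        have := hfL2
        rw [← hmps.map_eq] at this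
        exact (MeasurableEquiv.memLp_map_measure_iff e.symm).mp this
      have h2 : f ∘ e.symm = f₁ := funext hfe
      rwa [h2] at h1
    have hg₁L2 : MemLp g₁ 2 (ν.prod m) := by
      have h1 : MemLp (g ∘ e.symm) 2 (ν.prod m) := by
        have := hgL2
        rw [← hmps.map_eq] at this
        exact (MeasurableEquiv.memLp_map_measure_iff e.symm).mp this
      have h2 : g ∘ e.symm = g₁ := funext hge
      rwa [h2] at h1
    have hcovtrans : cov (Measure.pi μi) f g = cov (ν.prod m) f₁ g₁ := by
      unfold cov
      rw [hIf, hIg, ← hmp.integral_comp'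
        (fun p => (f₁ p - ∫ q, f₁ q ∂(ν.prod m)) * (g₁ p - ∫ q, g₁ q ∂(ν.prod m)))]
      refine integral_congr_ae (Filter.Eventually.of_forall fun x => ?_)
      have h1 : f₁ (e x) = f x := by rw [← hfe (e x), e.symm_apply_apply]
      have h2 : g₁ (e x) = g x := by rw [← hge (e x), e.symm_apply_apply]
      simp only [h1, h2]
    rw [hcovtrans]
    -- the marginal functions
    set F : ℝ → ℝ := fun t => ∫ x, f₁ (t, x) ∂m with hFdef
    set G : ℝ → ℝ := fun t => ∫ x, g₁ (t, x) ∂m with hGdef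
    set K : ℝ → ℝ := fun t => ∫ x, f₁ (t, x) * g₁ (t, x) ∂m with hKdef
    set H : ℝ → ℝ := fun t => (G t + G (-t)) / 2 with hHdef
    have hf₁i : Integrable f₁ (ν.prod m) := hf₁L2.integrable one_le_two
    have hg₁i : Integrable g₁ (ν.prod m) := hg₁L2.integrable one_le_two
    have hfg₁i : Integrable (fun p => f₁ p * g₁ p) (ν.prod m) :=
      integrable_mul_of_memL2 hf₁L2 hg₁L2
    have hf₁sq : Integrable (fun p => f₁ p ^ 2) (ν.prod m) := hf₁L2.integrable_sq
    have hg₁sq : Integrable (fun p => g₁ p ^ 2) (ν.prod m) := hg₁L2.integrable_sq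
    have hFi : Integrable F ν := hf₁i.integral_prod_left
    have hGi : Integrable G ν := hg₁i.integral_prod_left
    have hKi : Integrable K ν := hfg₁i.integral_prod_left
    have hFm : AEStronglyMeasurable F ν := hf₁i.aestronglyMeasurable.integral_prod_right'
    have hGm : AEStronglyMeasurable G ν := hg₁i.aestronglyMeasurable.integral_prod_right'
    have hnegmp : MeasurePreserving (fun t : ℝ => -t) ν ν := ⟨measurable_neg, hsymm 0⟩
    have hintneg : ∀ u : ℝ → ℝ, ∫ t, u (-t) ∂ν = ∫ t, u t ∂ν := by
      intro u
      exact hnegmp.integral_comp (MeasurableEquiv.neg ℝ).measurableEmbedding u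
    have hGnegi : Integrable (fun t => G (-t)) ν := by
      have := (hnegmp.integrable_comp hGm).mpr hGi
      exact this
    have hL2F : MemLp F 2 ν := by
      rw [memLp_two_iff_integrable_sq hFm]
      have hmaj : Integrable (fun t => ∫ x, f₁ (t, x) ^ 2 ∂m) ν := hf₁sq.integral_prod_left
      refine hmaj.mono' (hFm.pow 2) ?_
      have hslice₁ : ∀ᵐ t ∂ν, Integrable (fun x => f₁ (t, x)) m := hf₁i.prod_right_ae
      have hslice₂ : ∀ᵐ t ∂ν, Integrable (fun x => f₁ (t, x) ^ 2) m := hf₁sq.prod_right_ae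
      filter_upwards [hslice₁, hslice₂] with t h1 h2
      have hsliceL2 : MemLp (fun x => f₁ (t, x)) 2 m :=
        (memLp_two_iff_integrable_sq h1.aestronglyMeasurable).mpr h2
      have := sq_integral_le hsliceL2
      rw [Real.norm_eq_abs, abs_of_nonneg (sq_nonneg _)]
      exact this
    have hL2G : MemLp G 2 ν := by
      rw [memLp_two_iff_integrable_sq hGm]
      have hmaj : Integrable (fun t => ∫ x, g₁ (t, x) ^ 2 ∂m) ν := hg₁sq.integral_prod_left
      refine hmaj.mono' (hGm.pow 2) ?_
      have hslice₁ : ∀ᵐ t ∂ν, Integrable (fun x => g₁ (t, x)) m := hg₁i.prod_right_ae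
      have hslice₂ : ∀ᵐ t ∂ν, Integrable (fun x => g₁ (t, x) ^ 2) m := hg₁sq.prod_right_ae
      filter_upwards [hslice₁, hslice₂] with t h1 h2
      have hsliceL2 : MemLp (fun x => g₁ (t, x)) 2 m :=
        (memLp_two_iff_integrable_sq h1.aestronglyMeasurable).mpr h2
      have := sq_integral_le hsliceL2
      rw [Real.norm_eq_abs, abs_of_nonneg (sq_nonneg _)]
      exact this
    have hGnegm : AEStronglyMeasurable (fun t => G (-t)) ν := by
      have := hGm.comp_quasiMeasurePreserving hnegmp.quasiMeasurePreserving
      exact this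
    have hL2Gneg : MemLp (fun t => G (-t)) 2 ν := by
      rw [memLp_two_iff_integrable_sq hGnegm]
      have h2 : Integrable (fun t => G t ^ 2) ν := hL2G.integrable_sq
      have := (hnegmp.integrable_comp h2.aestronglyMeasurable).mpr h2
      exact this
    have hL2H : MemLp H 2 ν := by
      have h1 : H = fun t => 2⁻¹ * (G t + G (-t)) := by
        funext t; rw [hHdef]; simp [div_eq_inv_mul]
      rw [h1]
      exact (hL2G.add hL2Gneg).const_mul _
    have hHi : Integrable H ν := hL2H.integrable one_le_two
    have hFHi : Integrable (fun t => F t * H t) ν := integrable_mul_of_memL2 hL2F hL2H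
    have hFGi : Integrable (fun t => F t * G t) ν := integrable_mul_of_memL2 hL2F hL2G
    have hFGnegi : Integrable (fun t => F t * G (-t)) ν := integrable_mul_of_memL2 hL2F hL2Gneg
    -- the good set
    have hGood : ∀ᵐ t ∂ν, Integrable (fun x => f₁ (t, x)) m ∧ Integrable (fun x => g₁ (t, x)) m
        ∧ Integrable (fun x => g₁ (-t, x)) m ∧ K t - F t * G t ≤ 0 := by
      have h1 : ∀ᵐ t ∂ν, Integrable (fun x => f₁ (t, x)) m := hf₁i.prod_right_ae
      have h2 : ∀ᵐ t ∂ν, Integrable (fun x => g₁ (t, x)) m := hg₁i.prod_right_ae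
      have h3 : ∀ᵐ t ∂ν, Integrable (fun x => g₁ (-t, x)) m :=
        hnegmp.quasiMeasurePreserving.ae h2
      have h4 : ∀ᵐ t ∂ν, Integrable (fun x => f₁ (t, x) ^ 2) m := hf₁sq.prod_right_ae
      have h5 : ∀ᵐ t ∂ν, Integrable (fun x => g₁ (t, x) ^ 2) m := hg₁sq.prod_right_ae
      filter_upwards [h1, h2, h3, h4, h5] with t ht1 ht2 ht3 ht4 ht5
      refine ⟨ht1, ht2, ht3, ?_⟩
      have hfL2t : MemLp (fun x => f₁ (t, x)) 2 m :=
        (memLp_two_iff_integrable_sq ht1.aestronglyMeasurable).mpr ht4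
      have hgL2t : MemLp (fun x => g₁ (t, x)) 2 m :=
        (memLp_two_iff_integrable_sq ht2.aestronglyMeasurable).mpr ht5
      have hcovt : cov m (fun x => f₁ (t, x)) (fun x => g₁ (t, x)) ≤ 0 := by
        refine ih (fun j => μi j.succ) (fun j => hP j.succ) (fun j => hsymm j.succ)
          (fun x => φ (Fin.cons t x)) _ _ ?_ (hφconsconvex t) (hunc' t) ?_ hfL2t hgL2t
        · funext x
          show f (Fin.cons t x) = _
          rw [hf_def]
        · intro j x
          have hcv := hg_coordconvex j.succ (Fin.cons t x)
          have heq : (fun s => g (Function.update (Fin.cons t x) j.succ s))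
              = fun s => g₁ (t, Function.update x j s) := by
            funext s
            show g (Function.update (Fin.cons t x) j.succ s) = g (Fin.cons t (Function.update x j s))
            rw [Fin.cons_update]
          rw [heq] at hcv
          exact hcv
      have hce := cov_eq' hfL2t hgL2t
      unfold cov at hcovt
      rw [hce] at hcovt
      exact hcovt
    -- monotone structure of F and H
    have hFmono : ∀ s t : ℝ, Integrable (fun x => f₁ (s, x)) m →
        Integrable (fun x => f₁ (t, x)) m → |s| ≤ |t| → F t ≤ F s := by
      intro s t hs ht hst
      exact integral_mono ht hs (fun x => hfmono s t x hst)
    have hHmono : ∀ s t : ℝ, Integrable (fun x => g₁ (s, x)) m →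
        Integrable (fun x => g₁ (-s, x)) m → Integrable (fun x => g₁ (t, x)) m →
        Integrable (fun x => g₁ (-t, x)) m → |s| ≤ |t| → H s ≤ H t := by
      intro s t hs1 hs2 ht1 ht2 hst
      have h1 : G s + G (-s) = ∫ x, (g₁ (s, x) + g₁ (-s, x)) ∂m := (integral_add hs1 hs2).symm
      have h2 : G t + G (-t) = ∫ x, (g₁ (t, x) + g₁ (-t, x)) ∂m := (integral_add ht1 ht2).symm
      have h3 : (∫ x, (g₁ (s, x) + g₁ (-s, x)) ∂m) ≤ ∫ x, (g₁ (t, x) + g₁ (-t, x)) ∂m := by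
        refine integral_mono (hs1.add hs2) (ht1.add ht2) (fun x => ?_)
        have := hgmono s t x hst
        simp only
        linarith
      rw [hHdef]
      simp only
      simp only [h1, h2]
      linarith
    -- the double-integral trick
    have hIeq : ∀ s : ℝ, ∫ t, (F s - F t) * (H s - H t) ∂ν
        = F s * H s - F s * (∫ t, H t ∂ν) - H s * (∫ t, F t ∂ν) + ∫ t, F t * H t ∂ν := by
      intro s
      have hpt : (fun t => (F s - F t) * (H s - H t))
          = fun t => F s * H s - F s * H t - H s * F t + F t * H t := by
        funext t; ring
      have i1 : Integrable (fun t => F s * H s - F s * H t) ν :=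
        (integrable_const _).sub (hHi.const_mul (F s))
      have i2 : Integrable (fun t => F s * H s - F s * H t - H s * F t) ν :=
        i1.sub (hFi.const_mul (H s))
      rw [hpt, integral_add i2 hFHi, integral_sub i1 (hFi.const_mul (H s)),
        integral_sub (integrable_const _) (hHi.const_mul (F s)),
        integral_const_mul (F s) H, integral_const_mul (H s) F, integral_const]
      simp [measure_univ]
    have hInonpos : ∀ᵐ s ∂ν, (∫ t, (F s - F t) * (H s - H t) ∂ν) ≤ 0 := by
      filter_upwards [hGood] with s hs
      refine integral_nonpos_of_ae ?_
      filter_upwards [hGood] with t ht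
      rcases le_total |s| |t| with hst | hst
      · have h1 : F t ≤ F s := hFmono s t hs.1 ht.1 hst
        have h2 : H s ≤ H t := hHmono s t hs.2.1 hs.2.2.1 ht.2.1 ht.2.2.1 hst
        exact mul_nonpos_iff.mpr (Or.inl ⟨by linarith, by linarith⟩)
      · have h1 : F s ≤ F t := hFmono t s ht.1 hs.1 hst
        have h2 : H t ≤ H s := hHmono t s ht.2.1 ht.2.2.1 hs.2.1 hs.2.2.1 hst
        exact mul_nonpos_iff.mpr (Or.inr ⟨by linarith, by linarith⟩)
    have key2 : (∫ t, F t * H t ∂ν) ≤ (∫ t, F t ∂ν) * (∫ t, H t ∂ν) := by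
      have h0 : (∫ s, (∫ t, (F s - F t) * (H s - H t) ∂ν) ∂ν) ≤ 0 :=
        integral_nonpos_of_ae hInonpos
      have h1 : (∫ s, (∫ t, (F s - F t) * (H s - H t) ∂ν) ∂ν)
          = 2 * (∫ t, F t * H t ∂ν) - 2 * ((∫ t, F t ∂ν) * (∫ t, H t ∂ν)) := by
        rw [integral_congr_ae (Filter.Eventually.of_forall hIeq)]
        have i1 : Integrable (fun s => F s * H s - F s * (∫ t, H t ∂ν)) ν :=
          hFHi.sub (hFi.mul_const _)
        have i2 : Integrable
            (fun s => F s * H s - F s * (∫ t, H t ∂ν) - H s * (∫ t, F t ∂ν)) ν :=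
          i1.sub (hHi.mul_const _)
        rw [integral_add i2 (integrable_const _), integral_sub i1 (hHi.mul_const _),
          integral_sub hFHi (hFi.mul_const _),
          integral_mul_const, integral_mul_const, integral_const]
        simp [measure_univ]
        ring
      linarith
    -- symmetry identities
    have hFeven : ∀ t : ℝ, F (-t) = F t := by
      intro t
      rw [hFdef]
      exact integral_congr_ae (Filter.Eventually.of_forall fun x => hfeven t x)
    have hHG : ∫ t, H t ∂ν = ∫ t, G t ∂ν := by
      have h1 : (∫ t, H t ∂ν) = (∫ t, (G t + G (-t)) ∂ν) / 2 := by
        rw [hHdef]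
        exact integral_div 2 _
      rw [h1, integral_add hGi hGnegi, hintneg G]
      ring
    have hFH : ∫ t, F t * H t ∂ν = ∫ t, F t * G t ∂ν := by
      have e1 : ∀ t : ℝ, F t * H t = (F t * G t + F t * G (-t)) / 2 := by
        intro t; rw [hHdef]; ring
      have e2 : ∀ t : ℝ, F t * G (-t) = (fun r => F r * G r) (-t) := by
        intro t
        show F t * G (-t) = F (-t) * G (-t)
        rw [hFeven]
      calc ∫ t, F t * H t ∂ν = ∫ t, (F t * G t + F t * G (-t)) / 2 ∂ν :=
            integral_congr_ae (Filter.Eventually.of_forall e1)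
        _ = ((∫ t, F t * G t ∂ν) + ∫ t, F t * G (-t) ∂ν) / 2 := by
            rw [integral_div 2 _, integral_add hFGi hFGnegi]
        _ = ∫ t, F t * G t ∂ν := by
            rw [integral_congr_ae (Filter.Eventually.of_forall e2),
              hintneg (fun r => F r * G r)]
            ring
    -- assemble
    have hcovprod : cov (ν.prod m) f₁ g₁
        = (∫ t, K t ∂ν) - (∫ t, F t ∂ν) * (∫ t, G t ∂ν) := by
      unfold cov
      rw [cov_eq' hf₁L2 hg₁L2]
      rw [integral_prod _ hfg₁i, integral_prod _ hf₁i, integral_prod _ hg₁i]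
    have hFGle : (∫ t, F t * G t ∂ν) ≤ (∫ t, F t ∂ν) * (∫ t, G t ∂ν) := by
      rw [← hFH, ← hHG]
      exact key2
    have hterm1 : (∫ t, (K t - F t * G t) ∂ν) ≤ 0 := by
      refine integral_nonpos_of_ae ?_
      filter_upwards [hGood] with t ht
      exact ht.2.2.2
    have hsplit : (∫ t, K t ∂ν) - (∫ t, F t * G t ∂ν) = ∫ t, (K t - F t * G t) ∂ν :=
      (integral_sub hKi hFGi).symm
    rw [hcovprod]
    have h2 : (∫ t, K t ∂ν) - (∫ t, F t * G t ∂ν) ≤ 0 := by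
      rw [hsplit]; exact hterm1
    linarith


/-- Theorem 1.7(1): for a product probability measure with even, log-concave marginals,
an unconditional positive log-concave function `f = e^{-φ}` (with `φ` convex) and a
coordinatewise convex function `g`, both in `L²(μ)`, one has `Cov_μ(f,g) ≤ 0`. -/
theorem cov_nonpos_of_unconditional_logConcave (d : ℕ) (μi : Fin d → Measure ℝ)
    [∀ i, IsProbabilityMeasure (μi i)]
    (hsymm : ∀ i, Measure.map (fun x : ℝ => -x) (μi i) = μi i)
    (hlogconc : ∀ i, ∃ ρ : ℝ → ℝ, (∀ x, 0 ≤ ρ x) ∧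
      μi i = volume.withDensity (fun x => ENNReal.ofReal (ρ x)) ∧
      (∀ x y t : ℝ, 0 ≤ t → t ≤ 1 → ρ x ^ t * ρ y ^ (1 - t) ≤ ρ (t * x + (1 - t) * y)))
    (φ : (Fin d → ℝ) → ℝ) (f g : (Fin d → ℝ) → ℝ)
    (hf_def : f = fun x => Real.exp (-φ x))
    (hφ_convex : ConvexOn ℝ Set.univ φ)
    (hf_uncond : Unconditional f)
    (hg_coordconvex : ∀ (i : Fin d) (x : Fin d → ℝ),
      ConvexOn ℝ Set.univ (fun t => g (Function.update x i t)))
    (hfL2 : MemLp f 2 (Measure.pi μi)) (hgL2 : MemLp g 2 (Measure.pi μi)) :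
    cov (Measure.pi μi) f g ≤ 0 :=
  aux_cov_nonpos d μi (fun i => inferInstance) hsymm φ f g hf_def hφ_convex hf_uncond
    hg_coordconvex hfL2 hgL2
end

section
/- Let μ = μ₁ ⊗ ⋯ ⊗ μ_d be a product probability measure on ℝ^d. Let f, g : ℝ^d → ℝ be nonnegative functions in L²(μ) that are both unconditional and coordinatewise quasi-concave. Then Cov_μ(f, g) ≥ 0. -/
open MeasureTheory

/-- A function on `ℝ^d` is coordinatewise quasi-concave if it is quasi-concave in
each coordinate when the other coordinates are fixed. -/
def CoordinatewiseQuasiConcave {d : ℕ} (f : (Fin d → ℝ) → ℝ) : Prop :=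
  ∀ (i : Fin d) (x : Fin d → ℝ) (s u t : ℝ), 0 ≤ t → t ≤ 1 →
    min (f (Function.update x i s)) (f (Function.update x i u)) ≤
      f (Function.update x i (t * s + (1 - t) * u))

open Function


theorem chebyshev_int {α : Type*} [MeasurableSpace α] (μ : Measure α) [IsProbabilityMeasure μ]
    (f g : α → ℝ) (hf : Integrable f μ) (hg : Integrable g μ)
    (hfg : Integrable (fun x => f x * g x) μ)
    (h : ∀ x y, 0 ≤ (f x - f y) * (g x - g y)) :
    (∫ x, f x ∂μ) * (∫ x, g x ∂μ) ≤ ∫ x, f x * g x ∂μ := by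
  set If := ∫ x, f x ∂μ with hIf
  set Ig := ∫ x, g x ∂μ with hIg
  set Ifg := ∫ x, f x * g x ∂μ with hIfg
  have key : ∀ x, 0 ≤ f x * g x - f x * Ig - g x * If + Ifg := by
    intro x
    have h0 : 0 ≤ ∫ y, (f x - f y) * (g x - g y) ∂μ := integral_nonneg (h x)
    have heq : ∫ y, (f x - f y) * (g x - g y) ∂μ
        = f x * g x - f x * Ig - g x * If + Ifg := by
      have hrw : (fun y => (f x - f y) * (g x - g y))
          = fun y => (f x * g x - f x * g y - g x * f y) + f y * g y := by
        funext y; ring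
      have i1 : Integrable (fun y => f x * g x - f x * g y) μ :=
        (integrable_const (f x * g x)).sub (hg.const_mul (f x))
      have i2 : Integrable (fun y => f x * g x - f x * g y - g x * f y) μ :=
        i1.sub (hf.const_mul (g x))
      have e1 : ∫ y, ((f x * g x - f x * g y - g x * f y) + f y * g y) ∂μ
          = (∫ y, (f x * g x - f x * g y - g x * f y) ∂μ) + Ifg := integral_add i2 hfg
      have e2 : ∫ y, (f x * g x - f x * g y - g x * f y) ∂μ
          = (∫ y, (f x * g x - f x * g y) ∂μ) - ∫ y, g x * f y ∂μ :=
        integral_sub i1 (hf.const_mul (g x))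
      have e3 : ∫ y, (f x * g x - f x * g y) ∂μ
          = (∫ y, (f x * g x : ℝ) ∂μ) - ∫ y, f x * g y ∂μ :=
        integral_sub (integrable_const _) (hg.const_mul (f x))
      rw [hrw, e1, e2, e3, integral_const_mul (f x) g, integral_const_mul (g x) f, integral_const]
      simp [measure_univ, hIf, hIg]
    linarith [heq ▸ h0]
  have h1 : 0 ≤ ∫ x, (f x * g x - f x * Ig - g x * If + Ifg) ∂μ := integral_nonneg key
  have i1 : Integrable (fun x => f x * g x - f x * Ig) μ := hfg.sub (hf.mul_const Ig)
  have i2 : Integrable (fun x => f x * g x - f x * Ig - g x * If) μ := i1.sub (hg.mul_const If)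
  have e1 : ∫ x, ((f x * g x - f x * Ig - g x * If) + Ifg) ∂μ
      = (∫ x, (f x * g x - f x * Ig - g x * If) ∂μ) + Ifg := by
    rw [integral_add i2 (integrable_const Ifg), integral_const]; simp [measure_univ]
  have e2 : ∫ x, (f x * g x - f x * Ig - g x * If) ∂μ
      = (∫ x, (f x * g x - f x * Ig) ∂μ) - ∫ x, g x * If ∂μ := integral_sub i1 (hg.mul_const If)
  have e3 : ∫ x, (f x * g x - f x * Ig) ∂μ = Ifg - ∫ x, f x * Ig ∂μ :=
    integral_sub hfg (hf.mul_const Ig)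
  rw [e1, e2, e3, integral_mul_const, integral_mul_const] at h1
  nlinarith [h1]



noncomputable def ins {d : ℕ} (t : ℝ) (x : Fin d → ℝ) : Fin (d + 1) → ℝ :=
  Fin.insertNth (α := fun _ => ℝ) 0 t x

theorem ins_zero {d : ℕ} (t : ℝ) (x : Fin d → ℝ) : ins t x 0 = t := by
  simp [ins]

theorem ins_succ {d : ℕ} (t : ℝ) (x : Fin d → ℝ) (m : Fin d) : ins t x m.succ = x m := by
  have := Fin.insertNth_apply_succAbove (α := fun _ => ℝ) (i := (0 : Fin (d+1)))
    (x := t) (p := x) (j := m)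
  simpa [ins, Fin.succAbove_zero] using this

theorem ins_update {d : ℕ} (t b : ℝ) (x : Fin d → ℝ) (j : Fin d) :
    ins t (update x j b) = update (ins t x) j.succ b := by
  funext k
  induction k using Fin.cases with
  | zero => rw [ins_zero, update_of_ne (Fin.succ_ne_zero j).symm, ins_zero]
  | succ m =>
    rw [ins_succ]
    rcases eq_or_ne m j with rfl | hmj
    · rw [update_self, update_self]
    · rw [update_of_ne hmj, update_of_ne (fun hc => hmj (Fin.succ_injective _ hc)), ins_succ]

theorem ins_head {d : ℕ} (s t : ℝ) (x : Fin d → ℝ) :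
    ins s x = update (ins t x) 0 s := by
  funext k
  induction k using Fin.cases with
  | zero => rw [ins_zero, update_self]
  | succ m => rw [ins_succ, update_of_ne (Fin.succ_ne_zero m), ins_succ]

/-- coordinatewise nonincreasing in absolute value -/
def CoordDec {d : ℕ} (f : (Fin d → ℝ) → ℝ) : Prop :=
  ∀ (i : Fin d) (x : Fin d → ℝ) (a b : ℝ), |a| ≤ |b| →
    f (update x i b) ≤ f (update x i a)

theorem coordDec_of_uncond_qc {d : ℕ} (f : (Fin d → ℝ) → ℝ)
    (hu : Unconditional f) (hq : CoordinatewiseQuasiConcave f) : CoordDec f := by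
  intro i x a b hab
  classical
  -- flip lemma
  have flip : ∀ c : ℝ, f (update x i (-c)) = f (update x i c) := by
    intro c
    have h := hu (fun j => if j = i then -1 else 1)
      (fun j => by by_cases h : j = i <;> simp [h]) (update x i c)
    have harg : (fun j => (if j = i then (-1 : ℝ) else 1) * update x i c j)
        = update x i (-c) := by
      funext j
      rcases eq_or_ne j i with rfl | hj
      · simp
      · simp [hj, update_of_ne hj]
    rw [harg] at h
    exact h
  have habs : ∀ c : ℝ, f (update x i c) = f (update x i |c|) := by
    intro c
    rcases abs_choice c with h | h
    · rw [h]
    · rw [← flip, h]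
  rw [habs a, habs b]
  rcases eq_or_lt_of_le (abs_nonneg b) with hb0 | hb0
  · have ha0 : |a| = 0 := le_antisymm (hab.trans hb0.ge) (abs_nonneg a)
    rw [ha0, ← hb0]
  · set t := (|b| - |a|) / (2 * |b|) with ht
    have ht0 : 0 ≤ t := div_nonneg (by linarith) (by linarith)
    have ht1 : t ≤ 1 := by
      rw [div_le_one (by linarith)]
      have := abs_nonneg a; linarith
    have key := hq i x (-|b|) |b| t ht0 ht1
    have harg : t * (-|b|) + (1 - t) * |b| = |a| := by
      have h2 : t * (2 * |b|) = |b| - |a| := by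
        rw [ht]; exact div_mul_cancel₀ _ (ne_of_gt (by linarith))
      linarith
    rw [harg] at key
    have : min (f (update x i (-|b|))) (f (update x i |b|)) = f (update x i |b|) := by
      rw [flip]; exact min_self _
    rw [this] at key
    exact key

theorem le_zero_of_coordDec {d : ℕ} (f : (Fin d → ℝ) → ℝ) (hdec : CoordDec f)
    (x : Fin d → ℝ) : f x ≤ f (fun _ => 0) := by
  classical
  have h : ∀ s : Finset (Fin d), f x ≤ f (fun i => if i ∈ s then 0 else x i) := by
    intro s
    induction s using Finset.induction_on with
    | empty => simp
    | @insert a s ha ih =>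
      refine ih.trans ?_
      set m : Fin d → ℝ := fun i => if i ∈ insert a s then 0 else x i with hm
      have h1 : (fun i => if i ∈ s then 0 else x i) = update m a (x a) := by
        funext i
        rcases eq_or_ne i a with rfl | hia
        · simp [ha]
        · simp [hm, update_of_ne hia, Finset.mem_insert, hia]
      have h2 : m = update m a 0 := by
        funext i
        rcases eq_or_ne i a with rfl | hia
        · simp [hm]
        · rw [update_of_ne hia]
      rw [h1]
      conv_rhs => rw [h2]
      exact hdec a m 0 (x a) (by simp)
  have := h Finset.univ
  simpa using this

theorem harris : ∀ (d : ℕ) (μi : Fin d → Measure ℝ)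
    (_ : ∀ i, IsProbabilityMeasure (μi i)) (f g : (Fin d → ℝ) → ℝ) (Cf Cg : ℝ),
    (∀ x, 0 ≤ f x) → (∀ x, f x ≤ Cf) → (∀ x, 0 ≤ g x) → (∀ x, g x ≤ Cg) →
    CoordDec f → CoordDec g →
    AEStronglyMeasurable f (Measure.pi μi) → AEStronglyMeasurable g (Measure.pi μi) →
    (∫ x, f x ∂Measure.pi μi) * (∫ x, g x ∂Measure.pi μi) ≤ ∫ x, f x * g x ∂Measure.pi μi := by
  intro d
  induction d with
  | zero =>
    intro μi hprob f g Cf Cg hf0 hfC hg0 hgC hdf hdg hmf hmg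
    haveI := hprob
    have hf : f = fun _ => f (fun i => i.elim0) := by
      funext x; congr 1; funext i; exact i.elim0
    have hg : g = fun _ => g (fun i => i.elim0) := by
      funext x; congr 1; funext i; exact i.elim0
    rw [hf, hg]
    simp [integral_const, measure_univ]
  | succ d ih =>
    intro μ hprob f g Cf Cg hf0 hfC hg0 hgC hdf hdg hmf hmg
    haveI := hprob
    set μ₀ := μ 0 with hμ₀
    set ν := Measure.pi (fun j : Fin d => μ ((0 : Fin (d + 1)).succAbove j)) with hν
    haveI : ∀ j : Fin d, IsProbabilityMeasure (μ ((0 : Fin (d + 1)).succAbove j)) :=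
      fun j => hprob _
    have mp := measurePreserving_piFinSuccAbove μ 0
    set e := MeasurableEquiv.piFinSuccAbove (fun _ : Fin (d + 1) => ℝ) 0 with he
    have mps : MeasurePreserving e.symm (μ₀.prod ν) (Measure.pi μ) := mp.symm
    have hsymm : ∀ p : ℝ × (Fin d → ℝ), e.symm p = ins p.1 p.2 := by
      intro p
      simp only [he, MeasurableEquiv.piFinSuccAbove_symm_apply, Fin.insertNthEquiv_apply]
      rfl
    set f' : ℝ × (Fin d → ℝ) → ℝ := fun p => f (ins p.1 p.2) with hf'
    set g' : ℝ × (Fin d → ℝ) → ℝ := fun p => g (ins p.1 p.2) with hg'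
    have hfe : f' = fun p => f (e.symm p) := by funext p; rw [hsymm]
    have hge : g' = fun p => g (e.symm p) := by funext p; rw [hsymm]
    -- basic facts
    have hCf0 : 0 ≤ Cf := le_trans (hf0 (fun _ => 0)) (hfC _)
    have hCg0 : 0 ≤ Cg := le_trans (hg0 (fun _ => 0)) (hgC _)
    have hf'm : AEStronglyMeasurable f' (μ₀.prod ν) := by
      rw [hfe]; exact hmf.comp_quasiMeasurePreserving mps.quasiMeasurePreserving
    have hg'm : AEStronglyMeasurable g' (μ₀.prod ν) := by
      rw [hge]; exact hmg.comp_quasiMeasurePreserving mps.quasiMeasurePreserving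
    have hf'int : Integrable f' (μ₀.prod ν) := by
      refine Integrable.mono' (integrable_const Cf) hf'm (ae_of_all _ fun p => ?_)
      rw [Real.norm_eq_abs, abs_of_nonneg (hf0 _)]; exact hfC _
    have hg'int : Integrable g' (μ₀.prod ν) := by
      refine Integrable.mono' (integrable_const Cg) hg'm (ae_of_all _ fun p => ?_)
      rw [Real.norm_eq_abs, abs_of_nonneg (hg0 _)]; exact hgC _
    have hfg'int : Integrable (fun p => f' p * g' p) (μ₀.prod ν) := by
      refine Integrable.mono' (integrable_const (Cf * Cg)) (hf'm.mul hg'm)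
        (ae_of_all _ fun p => ?_)
      rw [Real.norm_eq_abs, abs_of_nonneg (mul_nonneg (hf0 _) (hg0 _))]
      exact mul_le_mul (hfC _) (hgC _) (hg0 _) hCf0
    -- marginals
    set F : (Fin d → ℝ) → ℝ :=
      fun x' => (∫⁻ t, ENNReal.ofReal (f' (t, x')) ∂μ₀).toReal with hF
    set G : (Fin d → ℝ) → ℝ :=
      fun x' => (∫⁻ t, ENNReal.ofReal (g' (t, x')) ∂μ₀).toReal with hG
    have hbnd : ∀ (h : (Fin (d + 1) → ℝ) → ℝ) (C : ℝ), (∀ x, h x ≤ C) →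
        ∀ x', ∫⁻ t, ENNReal.ofReal (h (ins t x')) ∂μ₀ ≤ ENNReal.ofReal C := by
      intro h C hC x'
      calc ∫⁻ t, ENNReal.ofReal (h (ins t x')) ∂μ₀
          ≤ ∫⁻ _, ENNReal.ofReal C ∂μ₀ :=
            lintegral_mono fun t => ENNReal.ofReal_le_ofReal (hC _)
        _ = ENNReal.ofReal C := by simp [measure_univ]
    have hF0 : ∀ x', 0 ≤ F x' := fun x' => ENNReal.toReal_nonneg
    have hG0 : ∀ x', 0 ≤ G x' := fun x' => ENNReal.toReal_nonneg
    have hFC : ∀ x', F x' ≤ Cf :=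
      fun x' => ENNReal.toReal_le_of_le_ofReal hCf0 (hbnd f Cf hfC x')
    have hGC : ∀ x', G x' ≤ Cg :=
      fun x' => ENNReal.toReal_le_of_le_ofReal hCg0 (hbnd g Cg hgC x')
    have hFdec : CoordDec F := by
      intro j x' a b hab
      refine ENNReal.toReal_mono
        (lt_of_le_of_lt (hbnd f Cf hfC _) ENNReal.ofReal_lt_top).ne ?_
      refine lintegral_mono fun t => ENNReal.ofReal_le_ofReal ?_
      show f (ins t (update x' j b)) ≤ f (ins t (update x' j a))
      rw [ins_update, ins_update]
      exact hdf j.succ (ins t x') a b hab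
    have hGdec : CoordDec G := by
      intro j x' a b hab
      refine ENNReal.toReal_mono
        (lt_of_le_of_lt (hbnd g Cg hgC _) ENNReal.ofReal_lt_top).ne ?_
      refine lintegral_mono fun t => ENNReal.ofReal_le_ofReal ?_
      show g (ins t (update x' j b)) ≤ g (ins t (update x' j a))
      rw [ins_update, ins_update]
      exact hdg j.succ (ins t x') a b hab
    -- a.e. identification of F, G with the section integrals
    have hsecf := hf'int.prod_left_ae
    have hsecg := hg'int.prod_left_ae
    have hsecfg := hfg'int.prod_left_ae
    have hFae : F =ᵐ[ν] fun x' => ∫ t, f' (t, x') ∂μ₀ := by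
      filter_upwards [hsecf] with x' hx'
      rw [integral_eq_lintegral_of_nonneg_ae (ae_of_all _ fun t => hf0 _) hx'.1]
    have hGae : G =ᵐ[ν] fun x' => ∫ t, g' (t, x') ∂μ₀ := by
      filter_upwards [hsecg] with x' hx'
      rw [integral_eq_lintegral_of_nonneg_ae (ae_of_all _ fun t => hg0 _) hx'.1]
    have hFm : AEStronglyMeasurable F ν :=
      ((hf'm.prod_swap).integral_prod_right').congr hFae.symm
    have hGm : AEStronglyMeasurable G ν :=
      ((hg'm.prod_swap).integral_prod_right').congr hGae.symm
    -- key pointwise a.e. inequality via 1-d Chebyshev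
    have hkey : ∀ᵐ x' ∂ν, F x' * G x' ≤ ∫ t, f' (t, x') * g' (t, x') ∂μ₀ := by
      filter_upwards [hsecf, hsecg, hsecfg, hFae, hGae] with x' h1 h2 h3 h4 h5
      rw [h4, h5]
      refine chebyshev_int μ₀ _ _ h1 h2 h3 ?_
      intro t s
      have hfd : ∀ a b : ℝ, |a| ≤ |b| → f' (b, x') ≤ f' (a, x') := by
        intro a b h
        have := hdf 0 (ins a x') a b h
        rwa [← ins_head, ← ins_head a a x'] at this
      have hgd : ∀ a b : ℝ, |a| ≤ |b| → g' (b, x') ≤ g' (a, x') := by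
        intro a b h
        have := hdg 0 (ins a x') a b h
        rwa [← ins_head, ← ins_head a a x'] at this
      rcases le_total |t| |s| with h | h
      · have h1' := hfd t s h
        have h2' := hgd t s h
        nlinarith
      · have h1' := hfd s t h
        have h2' := hgd s t h
        nlinarith
    -- integrability on ν
    have hFGint : Integrable (fun x' => F x' * G x') ν := by
      refine Integrable.mono' (integrable_const (Cf * Cg)) (hFm.mul hGm)
        (ae_of_all _ fun x' => ?_)
      rw [Real.norm_eq_abs, abs_of_nonneg (mul_nonneg (hF0 _) (hG0 _))]
      exact mul_le_mul (hFC _) (hGC _) (hG0 _) hCf0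
    have hInner : Integrable (fun x' => ∫ t, f' (t, x') * g' (t, x') ∂μ₀) ν :=
      hfg'int.integral_prod_right
    -- chain of (in)equalities
    have step1 : ∫ x', F x' * G x' ∂ν ≤ ∫ x', (∫ t, f' (t, x') * g' (t, x') ∂μ₀) ∂ν :=
      integral_mono_ae hFGint hInner hkey
    have step2 : ∫ x', (∫ t, f' (t, x') * g' (t, x') ∂μ₀) ∂ν
        = ∫ p, f' p * g' p ∂(μ₀.prod ν) := (integral_prod_symm _ hfg'int).symm
    have hIfg : ∫ p, f' p * g' p ∂(μ₀.prod ν) = ∫ x, f x * g x ∂(Measure.pi μ) := by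
      have := mps.integral_comp e.symm.measurableEmbedding (fun x => f x * g x)
      rw [← this]
      refine integral_congr_ae (ae_of_all _ fun p => ?_)
      simp only [hfe, hge]
    have hIF : ∫ x', F x' ∂ν = ∫ x, f x ∂(Measure.pi μ) := by
      rw [integral_congr_ae hFae, ← integral_prod_symm _ hf'int]
      have := mps.integral_comp e.symm.measurableEmbedding f
      rw [← this]
      exact integral_congr_ae (ae_of_all _ fun p => by simp only [hfe])
    have hIG : ∫ x', G x' ∂ν = ∫ x, g x ∂(Measure.pi μ) := by
      rw [integral_congr_ae hGae, ← integral_prod_symm _ hg'int]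
      have := mps.integral_comp e.symm.measurableEmbedding g
      rw [← this]
      exact integral_congr_ae (ae_of_all _ fun p => by simp only [hge])
    have step3 := ih (fun j : Fin d => μ ((0 : Fin (d + 1)).succAbove j))
      (fun j => hprob _) F G Cf Cg hF0 hFC hG0 hGC hFdec hGdec hFm hGm
    calc (∫ x, f x ∂Measure.pi μ) * (∫ x, g x ∂Measure.pi μ)
        = (∫ x', F x' ∂ν) * (∫ x', G x' ∂ν) := by rw [hIF, hIG]
      _ ≤ ∫ x', F x' * G x' ∂ν := step3
      _ ≤ ∫ x', (∫ t, f' (t, x') * g' (t, x') ∂μ₀) ∂ν := step1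
      _ = ∫ p, f' p * g' p ∂(μ₀.prod ν) := step2
      _ = ∫ x, f x * g x ∂(Measure.pi μ) := hIfg


/-- Theorem 1.7(2): for a product probability measure `μ` on `ℝ^d` and nonnegative
functions `f, g ∈ L²(μ)` that are both unconditional and coordinatewise quasi-concave,
one has `Cov_μ(f, g) ≥ 0`. -/
theorem cov_nonneg_of_unconditional_quasiConcave (d : ℕ) (μi : Fin d → Measure ℝ)
    [∀ i, IsProbabilityMeasure (μi i)]
    (f g : (Fin d → ℝ) → ℝ)
    (hf_nonneg : ∀ x, 0 ≤ f x) (hg_nonneg : ∀ x, 0 ≤ g x)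
    (hf_uncond : Unconditional f) (hg_uncond : Unconditional g)
    (hf_qc : CoordinatewiseQuasiConcave f) (hg_qc : CoordinatewiseQuasiConcave g)
    (hfL2 : MemLp f 2 (Measure.pi μi)) (hgL2 : MemLp g 2 (Measure.pi μi)) :
    0 ≤ cov (Measure.pi μi) f g := by
  set π := Measure.pi μi with hπ
  have hdf : CoordDec f := coordDec_of_uncond_qc f hf_uncond hf_qc
  have hdg : CoordDec g := coordDec_of_uncond_qc g hg_uncond hg_qc
  set Cf := f (fun _ => 0) with hCf
  set Cg := g (fun _ => 0) with hCg
  have hfC : ∀ x, f x ≤ Cf := fun x => le_zero_of_coordDec f hdf x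
  have hgC : ∀ x, g x ≤ Cg := fun x => le_zero_of_coordDec g hdg x
  have hmf : AEStronglyMeasurable f π := hfL2.aestronglyMeasurable
  have hmg : AEStronglyMeasurable g π := hgL2.aestronglyMeasurable
  have hCf0 : 0 ≤ Cf := hf_nonneg _
  have hCg0 : 0 ≤ Cg := hg_nonneg _
  have intf : Integrable f π := by
    refine Integrable.mono' (integrable_const Cf) hmf (ae_of_all _ fun x => ?_)
    rw [Real.norm_eq_abs, abs_of_nonneg (hf_nonneg x)]; exact hfC x
  have intg : Integrable g π := by
    refine Integrable.mono' (integrable_const Cg) hmg (ae_of_all _ fun x => ?_)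
    rw [Real.norm_eq_abs, abs_of_nonneg (hg_nonneg x)]; exact hgC x
  have intfg : Integrable (fun x => f x * g x) π := by
    refine Integrable.mono' (integrable_const (Cf * Cg)) (hmf.mul hmg)
      (ae_of_all _ fun x => ?_)
    rw [Real.norm_eq_abs, abs_of_nonneg (mul_nonneg (hf_nonneg x) (hg_nonneg x))]
    exact mul_le_mul (hfC x) (hgC x) (hg_nonneg x) hCf0
  have key := harris d μi inferInstance f g Cf Cg hf_nonneg hfC hg_nonneg hgC
    hdf hdg hmf hmg
  set If := ∫ x, f x ∂π with hIf
  set Ig := ∫ x, g x ∂π with hIg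
  set Ifg := ∫ x, f x * g x ∂π with hIfg
  have hcov : cov π f g = Ifg - If * Ig := by
    have hrw : (fun x => (f x - If) * (g x - Ig))
        = fun x => (f x * g x - f x * Ig - If * g x) + If * Ig := by
      funext x; ring
    have i1 : Integrable (fun x => f x * g x - f x * Ig) π := intfg.sub (intf.mul_const Ig)
    have i2 : Integrable (fun x => f x * g x - f x * Ig - If * g x) π :=
      i1.sub (intg.const_mul If)
    have e1 : ∫ x, ((f x * g x - f x * Ig - If * g x) + If * Ig) ∂π
        = (∫ x, (f x * g x - f x * Ig - If * g x) ∂π) + If * Ig := by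
      rw [integral_add i2 (integrable_const (If * Ig)), integral_const]
      simp [measure_univ]
    have e2 : ∫ x, (f x * g x - f x * Ig - If * g x) ∂π
        = (∫ x, (f x * g x - f x * Ig) ∂π) - ∫ x, If * g x ∂π :=
      integral_sub i1 (intg.const_mul If)
    have e3 : ∫ x, (f x * g x - f x * Ig) ∂π = Ifg - ∫ x, f x * Ig ∂π :=
      integral_sub intfg (intf.mul_const Ig)
    show (∫ x, (f x - If) * (g x - Ig) ∂π) = Ifg - If * Ig
    rw [hrw, e1, e2, e3, integral_mul_const, integral_const_mul]
    ring
  rw [hcov]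
  linarith [key]
end

section
/- Let f : ℝ → (0, ∞) be a positive continuous function and let F be a primitive of f (F′ = f). Then f is log-concave if and only if for every triple x₁ < x₂ < x₃ of real numbers, the 3×3 determinant with rows (1, 1, 1), (f(x₁), f(x₂), f(x₃)), (F(x₁), F(x₂), F(x₃)) is nonnegative. -/
open Set


lemma keyM (f F : ℝ → ℝ) (hF : ∀ x, HasDerivAt F (f x) x)
    {c A y a b : ℝ} (hab : a ≤ b)
    (hd : ∀ t ∈ Set.Icc a b, 0 ≤ c * (f t - A * Real.exp (c * (t - y)))) :
    c * F a - A * Real.exp (c * (a - y)) ≤ c * F b - A * Real.exp (c * (b - y)) := by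
  set K : ℝ → ℝ := fun t => c * F t - A * Real.exp (c * (t - y)) with hK
  have hKd : ∀ t, HasDerivAt K (c * (f t - A * Real.exp (c * (t - y)))) t := by
    intro t
    have h0 : HasDerivAt (fun s : ℝ => c * (s - y)) c t := by
      simpa using ((hasDerivAt_id t).sub_const y).const_mul c
    have h2 : HasDerivAt (fun s => A * Real.exp (c * (s - y)))
        (A * (Real.exp (c * (t - y)) * c)) t := (h0.exp).const_mul A
    have h1 : HasDerivAt (fun s => c * F s) (c * f t) t := (hF t).const_mul c
    have := h1.sub h2
    exact this.congr_deriv (by ring)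
  have hmono : MonotoneOn K (Set.Icc a b) := by
    apply monotoneOn_of_deriv_nonneg (convex_Icc a b)
    · exact fun t _ => (hKd t).differentiableAt.continuousAt.continuousWithinAt
    · exact fun t _ => (hKd t).differentiableAt.differentiableWithinAt
    · intro t ht
      rw [(hKd t).deriv]
      exact hd t (interior_subset ht)
  exact hmono (Set.left_mem_Icc.mpr hab) (Set.right_mem_Icc.mpr hab) hab

lemma keyA (f F : ℝ → ℝ) (hF : ∀ x, HasDerivAt F (f x) x)
    {c A y a b : ℝ} (hab : a ≤ b)
    (hd : ∀ t ∈ Set.Icc a b, c * (f t - A * Real.exp (c * (t - y))) ≤ 0) :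
    c * F b - A * Real.exp (c * (b - y)) ≤ c * F a - A * Real.exp (c * (a - y)) := by
  have h := keyM (fun x => -f x) (fun x => -F x) (fun x => (hF x).neg)
      (c := c) (A := -A) (y := y) hab (by
        intro t ht
        have h1 := hd t ht
        have : c * (-f t - -A * Real.exp (c * (t - y)))
            = -(c * (f t - A * Real.exp (c * (t - y)))) := by ring
        rw [this]
        linarith)
  linarith

lemma keyGM (f F : ℝ → ℝ) (hF : ∀ x, HasDerivAt F (f x) x)
    {γ A y a b : ℝ} (hab : a ≤ b)
    (hd : ∀ t ∈ Set.Icc a b, 0 ≤ γ * (f t - A - γ * (F t - F y))) :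
    (A + γ * (F a - F y)) * Real.exp (-γ * (a - y))
      ≤ (A + γ * (F b - F y)) * Real.exp (-γ * (b - y)) := by
  set G : ℝ → ℝ := fun t => (A + γ * (F t - F y)) * Real.exp (-γ * (t - y)) with hG
  have hGd : ∀ t, HasDerivAt G
      (Real.exp (-γ * (t - y)) * (γ * (f t - A - γ * (F t - F y)))) t := by
    intro t
    have h0 : HasDerivAt (fun s : ℝ => -γ * (s - y)) (-γ) t := by
      simpa using ((hasDerivAt_id t).sub_const y).const_mul (-γ)
    have h2 : HasDerivAt (fun s => Real.exp (-γ * (s - y)))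
        (Real.exp (-γ * (t - y)) * -γ) t := h0.exp
    have h1 : HasDerivAt (fun s => A + γ * (F s - F y)) (γ * f t) t := by
      simpa using (((hF t).sub_const (F y)).const_mul γ).const_add A
    have := h1.mul h2
    exact this.congr_deriv (by ring)
  have hmono : MonotoneOn G (Set.Icc a b) := by
    apply monotoneOn_of_deriv_nonneg (convex_Icc a b)
    · exact fun t _ => (hGd t).differentiableAt.continuousAt.continuousWithinAt
    · exact fun t _ => (hGd t).differentiableAt.differentiableWithinAt
    · intro t ht
      rw [(hGd t).deriv]
      exact mul_nonneg (Real.exp_pos _).le (hd t (interior_subset ht))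
  exact hmono (Set.left_mem_Icc.mpr hab) (Set.right_mem_Icc.mpr hab) hab

lemma keyGA (f F : ℝ → ℝ) (hF : ∀ x, HasDerivAt F (f x) x)
    {γ A y a b : ℝ} (hab : a ≤ b)
    (hd : ∀ t ∈ Set.Icc a b, γ * (f t - A - γ * (F t - F y)) ≤ 0) :
    (A + γ * (F b - F y)) * Real.exp (-γ * (b - y))
      ≤ (A + γ * (F a - F y)) * Real.exp (-γ * (a - y)) := by
  have h := keyGM (fun x => -f x) (fun x => -F x) (fun x => (hF x).neg)
      (γ := γ) (A := -A) (y := y) hab (by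
        intro t ht
        have h1 := hd t ht
        have : γ * (-f t - -A - γ * (-F t - -F y))
            = -(γ * (f t - A - γ * (F t - F y))) := by ring
        rw [this]
        linarith)
  have ea : (-A + γ * (-F a - -F y)) * Real.exp (-γ * (a - y))
      = -((A + γ * (F a - F y)) * Real.exp (-γ * (a - y))) := by ring
  have eb : (-A + γ * (-F b - -F y)) * Real.exp (-γ * (b - y))
      = -((A + γ * (F b - F y)) * Real.exp (-γ * (b - y))) := by ring
  rw [ea, eb] at h
  linarith
set_option maxHeartbeats 1000000 in
lemma fwd (f F : ℝ → ℝ) (hf_pos : ∀ x, 0 < f x)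
    (hF : ∀ x, HasDerivAt F (f x) x)
    (hcv : ConcaveOn ℝ Set.univ (fun x => Real.log (f x))) :
    ∀ x₁ x₂ x₃ : ℝ, x₁ < x₂ → x₂ < x₃ →
      (f x₃ - f x₂) * (F x₂ - F x₁) ≤ (f x₂ - f x₁) * (F x₃ - F x₂) := by
  have hFm : StrictMono F := strictMono_of_hasDerivAt_pos hF hf_pos
  set h : ℝ → ℝ := fun x => Real.log (f x) with hh
  have hfh : ∀ t, f t = Real.exp (h t) := fun t => (Real.exp_log (hf_pos t)).symm
  have hslope : ∀ a b c' : ℝ, a < b → b < c' →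
      (h c' - h b) / (c' - b) ≤ (h b - h a) / (b - a) := by
    intro a b c' hab hbc
    exact (concaveOn_iff_slope_anti_adjacent.mp hcv).2 (Set.mem_univ a) (Set.mem_univ c') hab hbc
  have hslope' : ∀ a b c' : ℝ, a < b → b < c' →
      (h c' - h b) * (b - a) ≤ (h b - h a) * (c' - b) := by
    intro a b c' hab hbc
    have := hslope a b c' hab hbc
    rw [div_le_div_iff₀ (by linarith) (by linarith)] at this
    linarith
  intro x₁ x₂ x₃ h12 h23
  have hD₁ : (0:ℝ) < F x₂ - F x₁ := sub_pos.mpr (hFm h12)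
  have hD₂ : (0:ℝ) < F x₃ - F x₂ := sub_pos.mpr (hFm h23)
  set S : Set ℝ := {r : ℝ | ∃ t, x₂ < t ∧ r = (h t - h x₂) / (t - x₂)} with hS
  have hbdd : BddAbove S := by
    refine ⟨(h x₂ - h (x₂ - 1)) / (x₂ - (x₂ - 1)), ?_⟩
    rintro r ⟨t, ht, rfl⟩
    exact hslope (x₂ - 1) x₂ t (by linarith) ht
  have hne : S.Nonempty := ⟨(h (x₂+1) - h x₂) / (x₂ + 1 - x₂), x₂ + 1, by linarith, rfl⟩
  set c := sSup S with hc
  have hub : ∀ t, x₂ < t → h t - h x₂ ≤ c * (t - x₂) := by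
    intro t ht
    have h1 : (h t - h x₂) / (t - x₂) ≤ c := le_csSup hbdd ⟨t, ht, rfl⟩
    rw [div_le_iff₀ (by linarith)] at h1
    linarith
  have hlb : ∀ t, t < x₂ → c * (x₂ - t) ≤ h x₂ - h t := by
    intro t ht
    have h1 : c ≤ (h x₂ - h t) / (x₂ - t) := by
      apply csSup_le hne
      rintro r ⟨s, hs, rfl⟩
      exact hslope t x₂ s ht hs
    rw [le_div_iff₀ (by linarith)] at h1
    linarith
  have hsupp : ∀ t, h t ≤ h x₂ + c * (t - x₂) := by
    intro t
    rcases lt_trichotomy t x₂ with hlt | heq | hgt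
    · have := hlb t hlt; nlinarith
    · rw [heq]; simp
    · have := hub t hgt; linarith
  have hmaj : ∀ t, f t ≤ f x₂ * Real.exp (c * (t - x₂)) := by
    intro t
    calc f t = Real.exp (h t) := hfh t
      _ ≤ Real.exp (h x₂ + c * (t - x₂)) := Real.exp_le_exp.mpr (hsupp t)
      _ = f x₂ * Real.exp (c * (t - x₂)) := by rw [Real.exp_add, ← hfh x₂]
  set s₁ := (h x₂ - h x₁) / (x₂ - x₁) with hs₁
  set s₂ := (h x₃ - h x₂) / (x₃ - x₂) with hs₂
  have hs₁c : c ≤ s₁ := by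
    apply csSup_le hne
    rintro r ⟨s, hs, rfl⟩
    exact hslope x₁ x₂ s h12 hs
  have hs₂c : s₂ ≤ c := le_csSup hbdd ⟨x₃, h23, rfl⟩
  have hid₁ : s₁ * (x₂ - x₁) = h x₂ - h x₁ := by
    rw [hs₁]; exact div_mul_cancel₀ _ (by linarith : x₂ - x₁ ≠ 0)
  have hid₂ : s₂ * (x₃ - x₂) = h x₃ - h x₂ := by
    rw [hs₂]; exact div_mul_cancel₀ _ (by linarith : x₃ - x₂ ≠ 0)
  have hfx₁ : f x₁ = f x₂ * Real.exp (s₁ * (x₁ - x₂)) := by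
    rw [hfh x₁, hfh x₂, ← Real.exp_add]
    congr 1
    nlinarith [hid₁]
  have hfx₃ : f x₃ = f x₂ * Real.exp (s₂ * (x₃ - x₂)) := by
    rw [hfh x₃, hfh x₂, ← Real.exp_add]
    congr 1
    linarith
  -- chord lower bounds
  have hch1 : ∀ t ∈ Set.Icc x₁ x₂, f x₂ * Real.exp (s₁ * (t - x₂)) ≤ f t := by
    rintro t ⟨ht1, ht2⟩
    have key : h x₂ - h t ≤ s₁ * (x₂ - t) := by
      rcases eq_or_lt_of_le ht1 with rfl | h1
      · nlinarith [hid₁]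
      rcases eq_or_lt_of_le ht2 with rfl | h2
      · simp
      · have hA := hslope' x₁ t x₂ h1 h2
        rw [hs₁, div_mul_eq_mul_div, le_div_iff₀ (by linarith : (0:ℝ) < x₂ - x₁)]
        nlinarith [hA]
    calc f x₂ * Real.exp (s₁ * (t - x₂)) = Real.exp (h x₂ + s₁ * (t - x₂)) := by
          rw [hfh x₂, ← Real.exp_add]
      _ ≤ Real.exp (h t) := Real.exp_le_exp.mpr (by linarith)
      _ = f t := (hfh t).symm
  have hch2 : ∀ t ∈ Set.Icc x₂ x₃, f x₂ * Real.exp (s₂ * (t - x₂)) ≤ f t := by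
    rintro t ⟨ht1, ht2⟩
    have key : s₂ * (t - x₂) ≤ h t - h x₂ := by
      rcases eq_or_lt_of_le ht1 with rfl | h1
      · simp
      rcases eq_or_lt_of_le ht2 with rfl | h2
      · linarith
      · have hA := hslope' x₂ t x₃ h1 h2
        rw [hs₂, div_mul_eq_mul_div, div_le_iff₀ (by linarith : (0:ℝ) < x₃ - x₂)]
        nlinarith [hA]
    calc f x₂ * Real.exp (s₂ * (t - x₂)) = Real.exp (h x₂ + s₂ * (t - x₂)) := by
          rw [hfh x₂, ← Real.exp_add]
      _ ≤ Real.exp (h t) := Real.exp_le_exp.mpr (by linarith)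
      _ = f t := (hfh t).symm
  -- main inequalities
  have hN₂ : f x₃ - f x₂ ≤ c * (F x₃ - F x₂) := by
    rcases le_or_gt 0 c with hcpos | hcneg
    · rcases le_or_gt 0 s₂ with hs2pos | hs2neg
      · have hk := keyM f F hF (c := s₂) (A := f x₂) (y := x₂) (a := x₂) (b := x₃) h23.le
          (fun t ht => mul_nonneg hs2pos (sub_nonneg.mpr (hch2 t ht)))
        have e0 : Real.exp (s₂ * (x₂ - x₂)) = 1 := by simp
        rw [e0] at hk
        have h2 : f x₂ * Real.exp (s₂ * (x₃ - x₂)) - f x₂ ≤ s₂ * (F x₃ - F x₂) := by linarith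
        have h3 : s₂ * (F x₃ - F x₂) ≤ c * (F x₃ - F x₂) :=
          mul_le_mul_of_nonneg_right hs₂c hD₂.le
        rw [hfx₃]; linarith
      · have : Real.exp (s₂ * (x₃ - x₂)) < 1 := by
          rw [Real.exp_lt_one_iff]; nlinarith
        nlinarith [hf_pos x₂, mul_nonneg hcpos hD₂.le, hfx₃]
    · have hk := keyM f F hF (c := c) (A := f x₂) (y := x₂) (a := x₂) (b := x₃) h23.le
        (fun t ht => by
          have h1 := mul_nonneg (neg_nonneg.mpr hcneg.le)
            (neg_nonneg.mpr (sub_nonpos.mpr (hmaj t)))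
          rw [neg_mul_neg] at h1
          exact h1)
      have e0 : Real.exp (c * (x₂ - x₂)) = 1 := by simp
      rw [e0] at hk
      have h2 : f x₂ * Real.exp (c * (x₃ - x₂)) - f x₂ ≤ c * (F x₃ - F x₂) := by linarith
      have h3 : Real.exp (s₂ * (x₃ - x₂)) ≤ Real.exp (c * (x₃ - x₂)) :=
        Real.exp_le_exp.mpr (mul_le_mul_of_nonneg_right hs₂c (by linarith))
      have h4 : f x₂ * Real.exp (s₂ * (x₃ - x₂)) ≤ f x₂ * Real.exp (c * (x₃ - x₂)) :=
        mul_le_mul_of_nonneg_left h3 (hf_pos x₂).le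
      rw [hfx₃]
      linarith
  have hN₁ : c * (F x₂ - F x₁) ≤ f x₂ - f x₁ := by
    rcases le_or_gt 0 c with hcpos | hcneg
    · have hk := keyA f F hF (c := c) (A := f x₂) (y := x₂) (a := x₁) (b := x₂) h12.le
        (fun t ht => mul_nonpos_of_nonneg_of_nonpos hcpos (sub_nonpos.mpr (hmaj t)))
      have e0 : Real.exp (c * (x₂ - x₂)) = 1 := by simp
      rw [e0] at hk
      have h2 : c * (F x₂ - F x₁) ≤ f x₂ - f x₂ * Real.exp (c * (x₁ - x₂)) := by linarith
      have h3 : Real.exp (s₁ * (x₁ - x₂)) ≤ Real.exp (c * (x₁ - x₂)) :=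
        Real.exp_le_exp.mpr (by nlinarith)
      have h4 : f x₂ * Real.exp (s₁ * (x₁ - x₂)) ≤ f x₂ * Real.exp (c * (x₁ - x₂)) :=
        mul_le_mul_of_nonneg_left h3 (hf_pos x₂).le
      rw [hfx₁]
      linarith
    · rcases le_or_gt 0 s₁ with hs1pos | hs1neg
      · have : Real.exp (s₁ * (x₁ - x₂)) ≤ 1 := by
          rw [← Real.exp_zero]; exact Real.exp_le_exp.mpr (by nlinarith)
        nlinarith [hf_pos x₂, hfx₁]
      · have hk := keyA f F hF (c := s₁) (A := f x₂) (y := x₂) (a := x₁) (b := x₂) h12.le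
          (fun t ht => mul_nonpos_of_nonpos_of_nonneg hs1neg.le (sub_nonneg.mpr (hch1 t ht)))
        have e0 : Real.exp (s₁ * (x₂ - x₂)) = 1 := by simp
        rw [e0] at hk
        have h2 : s₁ * (F x₂ - F x₁) ≤ f x₂ - f x₂ * Real.exp (s₁ * (x₁ - x₂)) := by linarith
        have h3 : c * (F x₂ - F x₁) ≤ s₁ * (F x₂ - F x₁) :=
          mul_le_mul_of_nonneg_right hs₁c hD₁.le
        rw [hfx₁]; linarith
  nlinarith [mul_le_mul_of_nonneg_right hN₂ hD₁.le, mul_le_mul_of_nonneg_right hN₁ hD₂.le]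

set_option maxHeartbeats 1000000 in
lemma bwd (f F : ℝ → ℝ) (hf_pos : ∀ x, 0 < f x)
    (hF : ∀ x, HasDerivAt F (f x) x)
    (H : ∀ x₁ x₂ x₃ : ℝ, x₁ < x₂ → x₂ < x₃ →
      (f x₃ - f x₂) * (F x₂ - F x₁) ≤ (f x₂ - f x₁) * (F x₃ - F x₂)) :
    ConcaveOn ℝ Set.univ (fun x => Real.log (f x)) := by
  have hFm : StrictMono F := strictMono_of_hasDerivAt_pos hF hf_pos
  have hD : ∀ a b : ℝ, a < b → (0:ℝ) < F b - F a := fun a b hab => sub_pos.mpr (hFm hab)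
  set h : ℝ → ℝ := fun x => Real.log (f x) with hh
  have hfh : ∀ t, f t = Real.exp (h t) := fun t => (Real.exp_log (hf_pos t)).symm
  rw [concaveOn_iff_slope_anti_adjacent]
  refine ⟨convex_univ, ?_⟩
  intro x y z _ _ hxy hyz
  -- product forms of slope monotonicity for the ratio R
  have hr2a : ∀ a b c' : ℝ, a < b → b < c' →
      (f c' - f a) * (F b - F a) ≤ (f b - f a) * (F c' - F a) := by
    intro a b c' hab hbc
    nlinarith [H a b c' hab hbc]
  have hr2b : ∀ a b c' : ℝ, a < b → b < c' →
      (f c' - f b) * (F c' - F a) ≤ (f c' - f a) * (F c' - F b) := by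
    intro a b c' hab hbc
    nlinarith [H a b c' hab hbc]
  set S : Set ℝ := {r : ℝ | ∃ t, y < t ∧ r = (f t - f y) / (F t - F y)} with hS
  have hbdd : BddAbove S := by
    refine ⟨(f y - f (y - 1)) / (F y - F (y - 1)), ?_⟩
    rintro r ⟨t, ht, rfl⟩
    rw [div_le_div_iff₀ (hD y t ht) (hD (y - 1) y (by linarith))]
    have := H (y - 1) y t (by linarith) ht
    linarith
  have hne : S.Nonempty := ⟨(f (y + 1) - f y) / (F (y + 1) - F y), y + 1, by linarith, rfl⟩
  set γ := sSup S with hγdef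
  have hub : ∀ t, y < t → f t - f y ≤ γ * (F t - F y) := by
    intro t ht
    have h1 : (f t - f y) / (F t - F y) ≤ γ := le_csSup hbdd ⟨t, ht, rfl⟩
    rw [div_le_iff₀ (hD y t ht)] at h1
    linarith
  have hlb : ∀ t, t < y → γ * (F y - F t) ≤ f y - f t := by
    intro t ht
    have h1 : γ ≤ (f y - f t) / (F y - F t) := by
      apply csSup_le hne
      rintro r ⟨s, hs, rfl⟩
      rw [div_le_div_iff₀ (hD y s hs) (hD t y ht)]
      have := H t y s ht hs
      linarith
    rw [le_div_iff₀ (hD t y ht)] at h1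
    linarith
  have hsupp : ∀ t, f t ≤ f y + γ * (F t - F y) := by
    intro t
    rcases lt_trichotomy t y with hlt | heq | hgt
    · have := hlb t hlt; nlinarith
    · rw [heq]; simp
    · have := hub t hgt; linarith
  -- main two inequalities
  have main : h z - h y ≤ γ * (z - y) ∧ γ * (y - x) ≤ h y - h x := by
    constructor
    · -- upper bound on the right
      rcases le_or_gt 0 γ with hγpos | hγneg
      · have hk := keyGA f F hF (γ := γ) (A := f y) (y := y) (a := y) (b := z) hyz.le
          (fun t _ => mul_nonpos_of_nonneg_of_nonpos hγpos (by linarith [hsupp t]))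
        have e0 : (f y + γ * (F y - F y)) * Real.exp (-γ * (y - y)) = f y := by simp
        rw [e0] at hk
        have h1 : f z ≤ f y + γ * (F z - F y) := hsupp z
        have h2 : (f y + γ * (F z - F y)) ≤ f y * Real.exp (γ * (z - y)) := by
          have he : Real.exp (-γ * (z - y)) = (Real.exp (γ * (z - y)))⁻¹ := by
            rw [← Real.exp_neg]; ring_nf
          rw [he, ← div_eq_mul_inv, div_le_iff₀ (Real.exp_pos _)] at hk
          linarith
        have h3 : f z ≤ Real.exp (h y + γ * (z - y)) := by
          rw [Real.exp_add, ← hfh y]; linarith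
        have := Real.exp_le_exp.mp (by rw [← hfh z] ; exact h3 : Real.exp (h z) ≤ Real.exp (h y + γ * (z - y)))
        linarith
      · -- γ < 0 : use the chord slope ρ₂
        set ρ₂ := (f z - f y) / (F z - F y) with hρ₂
        have hρ₂γ : ρ₂ ≤ γ := le_csSup hbdd ⟨z, hyz, rfl⟩
        have hρ₂id : ρ₂ * (F z - F y) = f z - f y :=
          div_mul_cancel₀ _ (hD y z hyz).ne'
        have hch : ∀ t ∈ Set.Icc y z, f y + ρ₂ * (F t - F y) ≤ f t := by
          rintro t ⟨ht1, ht2⟩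
          rcases eq_or_lt_of_le ht1 with rfl | h1
          · simp
          rcases eq_or_lt_of_le ht2 with rfl | h2
          · linarith [hρ₂id]
          · have hA := hr2a y t z h1 h2
            have : ρ₂ * (F t - F y) ≤ f t - f y := by
              rw [hρ₂, div_mul_eq_mul_div, div_le_iff₀ (hD y z hyz)]
              nlinarith [hA]
            linarith
        have hk := keyGA f F hF (γ := ρ₂) (A := f y) (y := y) (a := y) (b := z) hyz.le
          (fun t ht => mul_nonpos_of_nonpos_of_nonneg (by linarith : ρ₂ ≤ 0)
            (by linarith [hch t ht]))
        have e0 : (f y + ρ₂ * (F y - F y)) * Real.exp (-ρ₂ * (y - y)) = f y := by simp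
        rw [e0] at hk
        have h2 : f z ≤ f y * Real.exp (ρ₂ * (z - y)) := by
          have he : Real.exp (-ρ₂ * (z - y)) = (Real.exp (ρ₂ * (z - y)))⁻¹ := by
            rw [← Real.exp_neg]; ring_nf
          rw [he, ← div_eq_mul_inv, div_le_iff₀ (Real.exp_pos _)] at hk
          nlinarith [hρ₂id]
        have h3 : f y * Real.exp (ρ₂ * (z - y)) ≤ f y * Real.exp (γ * (z - y)) := by
          apply mul_le_mul_of_nonneg_left _ (hf_pos y).le
          exact Real.exp_le_exp.mpr (mul_le_mul_of_nonneg_right hρ₂γ (by linarith))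
        have h4 : f z ≤ Real.exp (h y + γ * (z - y)) := by
          rw [Real.exp_add, ← hfh y]; linarith
        have := Real.exp_le_exp.mp (by rw [← hfh z]; exact h4 : Real.exp (h z) ≤ Real.exp (h y + γ * (z - y)))
        linarith
    · -- lower bound on the left
      rcases le_or_gt 0 γ with hγpos | hγneg
      · set ρ₁ := (f y - f x) / (F y - F x) with hρ₁
        have hγρ : γ ≤ ρ₁ := by
          apply csSup_le hne
          rintro r ⟨s, hs, rfl⟩
          rw [div_le_div_iff₀ (hD y s hs) (hD x y hxy)]
          have := H x y s hxy hs
          linarith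
        have hρ₁id : ρ₁ * (F y - F x) = f y - f x :=
          div_mul_cancel₀ _ (hD x y hxy).ne'
        have hch : ∀ t ∈ Set.Icc x y, f y + ρ₁ * (F t - F y) ≤ f t := by
          rintro t ⟨ht1, ht2⟩
          rcases eq_or_lt_of_le ht2 with rfl | h2
          · simp
          rcases eq_or_lt_of_le ht1 with rfl | h1
          · nlinarith [hρ₁id]
          · have hA := hr2b x t y h1 h2
            have : f y - f t ≤ ρ₁ * (F y - F t) := by
              rw [hρ₁, div_mul_eq_mul_div, le_div_iff₀ (hD x y hxy)]
              nlinarith [hA]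
            linarith
        have hρ₁pos : 0 ≤ ρ₁ := le_trans hγpos hγρ
        have hk := keyGM f F hF (γ := ρ₁) (A := f y) (y := y) (a := x) (b := y) hxy.le
          (fun t ht => mul_nonneg hρ₁pos (by linarith [hch t ht]))
        have e0 : (f y + ρ₁ * (F y - F y)) * Real.exp (-ρ₁ * (y - y)) = f y := by simp
        rw [e0] at hk
        have hfx : f y + ρ₁ * (F x - F y) = f x := by nlinarith [hρ₁id]
        rw [hfx] at hk
        have he : -ρ₁ * (x - y) = ρ₁ * (y - x) := by ring
        rw [he] at hk
        -- hk : f x * exp (ρ₁*(y-x)) ≤ f y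
        have h3 : Real.exp (h x + ρ₁ * (y - x)) ≤ Real.exp (h y) := by
          rw [Real.exp_add, ← hfh x, ← hfh y]; exact hk
        have h4 := Real.exp_le_exp.mp h3
        have h5 : γ * (y - x) ≤ ρ₁ * (y - x) :=
          mul_le_mul_of_nonneg_right hγρ (by linarith)
        linarith
      · have hk := keyGM f F hF (γ := γ) (A := f y) (y := y) (a := x) (b := y) hxy.le
          (fun t _ => by
            have h1 := mul_nonneg (neg_nonneg.mpr hγneg.le)
              (neg_nonneg.mpr (by linarith [hsupp t] : f t - f y - γ * (F t - F y) ≤ 0))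
            rw [neg_mul_neg] at h1
            exact h1)
        have e0 : (f y + γ * (F y - F y)) * Real.exp (-γ * (y - y)) = f y := by simp
        rw [e0] at hk
        have he : -γ * (x - y) = γ * (y - x) := by ring
        rw [he] at hk
        have h1 : f x * Real.exp (γ * (y - x)) ≤ (f y + γ * (F x - F y)) * Real.exp (γ * (y - x)) :=
          mul_le_mul_of_nonneg_right (hsupp x) (Real.exp_pos _).le
        have h2 : f x * Real.exp (γ * (y - x)) ≤ f y := le_trans h1 hk
        have h3 : Real.exp (h x + γ * (y - x)) ≤ Real.exp (h y) := by
          rw [Real.exp_add, ← hfh x, ← hfh y]; exact h2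
        have h4 := Real.exp_le_exp.mp h3
        linarith
  obtain ⟨hA, hB⟩ := main
  rw [div_le_div_iff₀ (by linarith) (by linarith)]
  nlinarith [mul_le_mul_of_nonneg_right hA (by linarith : (0:ℝ) ≤ y - x),
    mul_le_mul_of_nonneg_right hB (by linarith : (0:ℝ) ≤ z - y)]

/-- Proposition 2.6: a positive continuous function `f : ℝ → (0,∞)` with primitive `F`
is log-concave if and only if for every triple `x₁ < x₂ < x₃` the determinant of the
matrix with rows `(1,1,1)`, `(f x₁, f x₂, f x₃)`, `(F x₁, F x₂, F x₃)` is nonnegative. -/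
theorem logConcave_iff_det_nonneg (f F : ℝ → ℝ)
    (hf_pos : ∀ x, 0 < f x) (hf_cont : Continuous f)
    (hF : ∀ x, HasDerivAt F (f x) x) :
    ConcaveOn ℝ Set.univ (fun x => Real.log (f x)) ↔
      ∀ x₁ x₂ x₃ : ℝ, x₁ < x₂ → x₂ < x₃ →
        0 ≤ Matrix.det !![1, 1, 1; f x₁, f x₂, f x₃; F x₁, F x₂, F x₃] := by
  constructor
  · intro hcv x₁ x₂ x₃ h12 h23
    have hmain := fwd f F hf_pos hF hcv x₁ x₂ x₃ h12 h23
    rw [Matrix.det_fin_three]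
    simp
    nlinarith [hmain]
  · intro hdet
    apply bwd f F hf_pos hF
    intro x₁ x₂ x₃ h12 h23
    have hmain := hdet x₁ x₂ x₃ h12 h23
    rw [Matrix.det_fin_three] at hmain
    simp at hmain
    nlinarith [hmain]
end

section
/- Let μ be a probability measure on ℝ and let (f₁, …, f_n) and (g₁, …, g_n) be n-tuples of functions in L²(μ). Then det(∫ f_i(x) g_j(x) dμ(x))_{1 ≤ i,j ≤ n} = (1/n!) ∫_{ℝⁿ} det(f_i(x_j))_{1 ≤ i,j ≤ n} · det(g_i(x_j))_{1 ≤ i,j ≤ n} dμ(x₁) ⋯ dμ(x_n). -/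
open MeasureTheory

section Aux

variable {μ : Measure ℝ} [IsProbabilityMeasure μ]

private lemma aux_integrable_mul {f g : ℝ → ℝ} (hf : MemLp f 2 μ) (hg : MemLp g 2 μ) :
    Integrable (fun x => f x * g x) μ := by
  have h : MemLp (f • g) 1 μ := hg.smul hf (hpqr := ⟨by
    rw [inv_one,
      ENNReal.inv_two_add_inv_two]⟩)
  exact memLp_one_iff_integrable.mp h

private lemma aux_pi_integrable {n : ℕ} (F : Fin n → ℝ → ℝ)
    (hF : ∀ j, Integrable (F j) μ) :
    Integrable (fun x : Fin n → ℝ => ∏ j, F j (x j)) (Measure.pi fun _ => μ) := by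
  letI : MeasureSpace ℝ := ⟨μ⟩
  have : SigmaFinite (volume : Measure ℝ) := by
    show SigmaFinite μ; infer_instance
  exact Integrable.fintype_prod (f := F) hF

private lemma aux_pi_integral {n : ℕ} (F : Fin n → ℝ → ℝ) :
    ∫ x : Fin n → ℝ, ∏ j, F j (x j) ∂(Measure.pi fun _ => μ) = ∏ j, ∫ x, F j x ∂μ := by
  letI : MeasureSpace ℝ := ⟨μ⟩
  have : SigmaFinite (volume : Measure ℝ) := by
    show SigmaFinite μ; infer_instance
  exact MeasureTheory.integral_fintype_prod_eq_prod F

end Aux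

/-- Proposition 2.7 (Andreev-type formula): for `n`-tuples of functions
`(f₁,…,f_n)`, `(g₁,…,g_n)` in `L²(μ)`,
`det(∫ f_i g_j dμ) = (1/n!) ∫ det(f_i(x_j)) det(g_i(x_j)) dμ^{⊗n}(x)`. -/
theorem det_integral_eq_integral_det (μ : Measure ℝ) [IsProbabilityMeasure μ]
    (n : ℕ) (f g : Fin n → ℝ → ℝ)
    (hf : ∀ i, MemLp (f i) 2 μ) (hg : ∀ i, MemLp (g i) 2 μ) :
    Matrix.det (Matrix.of fun i j => ∫ x, f i x * g j x ∂μ) =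
      (n.factorial : ℝ)⁻¹ *
        ∫ x : Fin n → ℝ,
          Matrix.det (Matrix.of fun i j => f i (x j)) *
            Matrix.det (Matrix.of fun i j => g i (x j))
          ∂(Measure.pi fun _ => μ) := by
  classical
  set A : Matrix (Fin n) (Fin n) ℝ := Matrix.of fun i j => ∫ x, f i x * g j x ∂μ with hA
  -- rewrite the integrand as a double sum
  have hint : ∀ x : Fin n → ℝ,
      Matrix.det (Matrix.of fun i j => f i (x j)) *
        Matrix.det (Matrix.of fun i j => g i (x j)) =
      ∑ σ : Equiv.Perm (Fin n), ∑ τ : Equiv.Perm (Fin n),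
        ((Equiv.Perm.sign σ : ℤ) : ℝ) * ((Equiv.Perm.sign τ : ℤ) : ℝ) *
          ∏ j, (f (σ j) (x j) * g (τ j) (x j)) := by
    intro x
    rw [Matrix.det_apply, Matrix.det_apply, Finset.sum_mul_sum]
    refine Finset.sum_congr rfl fun σ _ => Finset.sum_congr rfl fun τ _ => ?_
    simp only [Matrix.of_apply, Units.smul_def, zsmul_eq_mul, Finset.prod_mul_distrib]
    ring
  have hterm : ∀ σ τ : Equiv.Perm (Fin n),
      Integrable (fun x : Fin n → ℝ => ∏ j, (f (σ j) (x j) * g (τ j) (x j)))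
        (Measure.pi fun _ => μ) := fun σ τ =>
    aux_pi_integrable _ (fun j => aux_integrable_mul (hf (σ j)) (hg (τ j)))
  have hI : ∫ x : Fin n → ℝ,
        Matrix.det (Matrix.of fun i j => f i (x j)) *
          Matrix.det (Matrix.of fun i j => g i (x j)) ∂(Measure.pi fun _ => μ) =
      ∑ σ : Equiv.Perm (Fin n), ∑ τ : Equiv.Perm (Fin n),
        ((Equiv.Perm.sign σ : ℤ) : ℝ) * ((Equiv.Perm.sign τ : ℤ) : ℝ) *
          ∏ j, A (σ j) (τ j) := by
    simp_rw [hint]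
    rw [integral_finset_sum]
    · refine Finset.sum_congr rfl fun σ _ => ?_
      rw [integral_finset_sum]
      · refine Finset.sum_congr rfl fun τ _ => ?_
        rw [integral_const_mul,
          show (∫ a : Fin n → ℝ, ∏ j, (f (σ j) (a j) * g (τ j) (a j))
              ∂(Measure.pi fun _ => μ)) = ∏ j, ∫ x, f (σ j) x * g (τ j) x ∂μ from
            aux_pi_integral (fun j y => f (σ j) y * g (τ j) y)]
        rfl
      · exact fun τ _ => ((hterm σ τ).const_mul _)
    · exact fun σ _ => integrable_finset_sum _ (fun τ _ => ((hterm σ τ).const_mul _))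
  -- combinatorial identity
  have hcomb : ∀ σ : Equiv.Perm (Fin n),
      (∑ τ : Equiv.Perm (Fin n),
        ((Equiv.Perm.sign σ : ℤ) : ℝ) * ((Equiv.Perm.sign τ : ℤ) : ℝ) *
          ∏ j, A (σ j) (τ j)) = A.det := by
    intro σ
    rw [← Equiv.sum_comp (Equiv.mulRight σ) (fun τ =>
      ((Equiv.Perm.sign σ : ℤ) : ℝ) * ((Equiv.Perm.sign τ : ℤ) : ℝ) * ∏ j, A (σ j) (τ j))]
    rw [← Matrix.det_transpose A, Matrix.det_apply]
    refine Finset.sum_congr rfl fun π _ => ?_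
    have h1 : ∀ j, A (σ j) ((Equiv.mulRight σ π) j) = A (σ j) (π (σ j)) := fun j => rfl
    have h2 : (∏ j, A (σ j) (π (σ j))) = ∏ k, A k (π k) :=
      Equiv.prod_comp σ (fun k => A k (π k))
    have h3 : Equiv.Perm.sign (Equiv.mulRight σ π) = Equiv.Perm.sign π * Equiv.Perm.sign σ := by
      simp [Equiv.Perm.sign_mul]
    have h4 : (∏ i, A.transpose (π i) i) = ∏ k, A k (π k) := by
      simp [Matrix.transpose_apply]
    simp only [h1, h2, h3, h4, Units.smul_def, zsmul_eq_mul, Units.val_mul, Int.cast_mul]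
    have hsq : ((Equiv.Perm.sign σ : ℤ) : ℝ) * ((Equiv.Perm.sign σ : ℤ) : ℝ) = 1 := by
      rcases Int.units_eq_one_or (Equiv.Perm.sign σ) with h | h <;> simp [h]
    calc ((Equiv.Perm.sign σ : ℤ) : ℝ) * (((Equiv.Perm.sign π : ℤ) : ℝ) *
            ((Equiv.Perm.sign σ : ℤ) : ℝ)) * ∏ k, A k (π k)
        = (((Equiv.Perm.sign σ : ℤ) : ℝ) * ((Equiv.Perm.sign σ : ℤ) : ℝ)) *
            (((Equiv.Perm.sign π : ℤ) : ℝ) * ∏ k, A k (π k)) := by ring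
      _ = ((Equiv.Perm.sign π : ℤ) : ℝ) * ∏ k, A k (π k) := by rw [hsq, one_mul]
  rw [hI]
  simp_rw [hcomb]
  rw [Finset.sum_const, Finset.card_univ, Fintype.card_perm, Fintype.card_fin, nsmul_eq_mul]
  rw [← mul_assoc, inv_mul_cancel₀ (by positivity : (n.factorial : ℝ) ≠ 0), one_mul]
end

section
/- Let μ be a probability measure on ℝ and let (u, U) and (v, V) be pairs of functions in L²(μ) each satisfying Assumption (C). Then Cov_μ(U, V) · Cov_μ(u, v) ≥ Cov_μ(u, V) · Cov_μ(U, v). -/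
open MeasureTheory

/-- A pair `(u, U)` satisfies Assumption (C) if for every triple `x₁ < x₂ < x₃`,
the determinant with rows `(1,1,1)`, `(u x₁, u x₂, u x₃)`, `(U x₁, U x₂, U x₃)`
is nonnegative. -/
def AssumptionC (u U : ℝ → ℝ) : Prop :=
  ∀ x₁ x₂ x₃ : ℝ, x₁ < x₂ → x₂ < x₃ →
    0 ≤ Matrix.det !![1, 1, 1; u x₁, u x₂, u x₃; U x₁, U x₂, U x₃]

namespace CovAux

/-! ### Pointwise kernels -/

/-- The pair kernel `(f x - f y) (g x - g y)`. -/
def KK (f g : ℝ → ℝ) (x y : ℝ) : ℝ := (f x - f y) * (g x - g y)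

/-- The pair kernel integrated in its second variable. -/
noncomputable def kk (μ : Measure ℝ) (f g : ℝ → ℝ) (x : ℝ) : ℝ :=
  f x * g x - f x * (∫ y, g y ∂μ) - g x * (∫ y, f y ∂μ) + ∫ y, f y * g y ∂μ

/-- Cross-determinant of two chords of the curve `(u, U)` times the analogous
quantity for `(v, V)`. -/
def GG (u U v V : ℝ → ℝ) (x y z w : ℝ) : ℝ :=
  ((u y - u x) * (U w - U z) - (U y - U x) * (u w - u z)) *
  ((v y - v x) * (V w - V z) - (V y - V x) * (v w - v z))

/-- Symmetrization of `GG` over the three pairings of four points. -/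
def S4 (u U v V : ℝ → ℝ) (x1 x2 x3 x4 : ℝ) : ℝ :=
  GG u U v V x1 x2 x3 x4 + GG u U v V x1 x3 x2 x4 + GG u U v V x1 x4 x2 x3

/-- Consecutive-chord cross product. -/
def c3 (f g : ℝ → ℝ) (x y z : ℝ) : ℝ :=
  (f y - f x) * (g z - g y) - (g y - g x) * (f z - f y)

/-! ### Pointwise nonnegativity of `S4` -/

lemma det_eq_c3 (f g : ℝ → ℝ) (x y z : ℝ) :
    Matrix.det !![1, 1, 1; f x, f y, f z; g x, g y, g z] = c3 f g x y z := by
  rw [Matrix.det_fin_three]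
  simp [Matrix.cons_val_zero, Matrix.cons_val_one, Matrix.head_cons, c3]
  ring

lemma c3_nonneg {f g : ℝ → ℝ} (h : AssumptionC f g) {x y z : ℝ}
    (hxy : x ≤ y) (hyz : y ≤ z) : 0 ≤ c3 f g x y z := by
  rcases hxy.eq_or_lt with rfl | hxy
  · simp [c3]
  rcases hyz.eq_or_lt with rfl | hyz
  · simp [c3]
  have := h x y z hxy hyz
  rwa [det_eq_c3] at this

lemma S4_nonneg_sorted {u U v V : ℝ → ℝ} (huU : AssumptionC u U) (hvV : AssumptionC v V)
    {s1 s2 s3 s4 : ℝ} (h12 : s1 ≤ s2) (h23 : s2 ≤ s3) (h34 : s3 ≤ s4) :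
    0 ≤ S4 u U v V s1 s2 s3 s4 := by
  have e : S4 u U v V s1 s2 s3 s4 =
      c3 u U s1 s2 s3 * c3 v V s1 s2 s3 + c3 u U s2 s3 s4 * c3 v V s2 s3 s4 +
      c3 u U s1 s2 s4 * c3 v V s1 s2 s4 + c3 u U s1 s3 s4 * c3 v V s1 s3 s4 := by
    unfold S4 GG c3; ring
  rw [e]
  have h13 := h12.trans h23
  have h24 := h23.trans h34
  exact add_nonneg (add_nonneg (add_nonneg
    (mul_nonneg (c3_nonneg huU h12 h23) (c3_nonneg hvV h12 h23))
    (mul_nonneg (c3_nonneg huU h23 h34) (c3_nonneg hvV h23 h34)))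
    (mul_nonneg (c3_nonneg huU h12 h24) (c3_nonneg hvV h12 h24)))
    (mul_nonneg (c3_nonneg huU h13 h34) (c3_nonneg hvV h13 h34))

lemma S4_swap12 (u U v V : ℝ → ℝ) (a b c d : ℝ) :
    S4 u U v V a b c d = S4 u U v V b a c d := by unfold S4 GG; ring

lemma S4_swap23 (u U v V : ℝ → ℝ) (a b c d : ℝ) :
    S4 u U v V a b c d = S4 u U v V a c b d := by unfold S4 GG; ring

lemma S4_swap34 (u U v V : ℝ → ℝ) (a b c d : ℝ) :
    S4 u U v V a b c d = S4 u U v V a b d c := by unfold S4 GG; ring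

lemma S4_swappair (u U v V : ℝ → ℝ) (a b c d : ℝ) :
    S4 u U v V a b c d = S4 u U v V c d a b := by unfold S4 GG; ring

lemma S4_nonneg {u U v V : ℝ → ℝ} (huU : AssumptionC u U) (hvV : AssumptionC v V)
    (a b c d : ℝ) : 0 ≤ S4 u U v V a b c d := by
  have H : ∀ a b c d : ℝ, a ≤ b → c ≤ d → a ≤ c → 0 ≤ S4 u U v V a b c d := by
    intro a b c d hab hcd hac
    rcases le_total b c with h | h
    · exact S4_nonneg_sorted huU hvV hab h hcd
    · rcases le_total b d with h' | h'
      · rw [S4_swap23]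
        exact S4_nonneg_sorted huU hvV hac h h'
      · rw [S4_swap23, S4_swap34]
        exact S4_nonneg_sorted huU hvV hac hcd h'
  have H2 : ∀ a b c d : ℝ, a ≤ b → c ≤ d → 0 ≤ S4 u U v V a b c d := by
    intro a b c d hab hcd
    rcases le_total a c with h | h
    · exact H a b c d hab hcd h
    · rw [S4_swappair]; exact H c d a b hcd hab h
  have H1 : ∀ a b c d : ℝ, a ≤ b → 0 ≤ S4 u U v V a b c d := by
    intro a b c d hab
    rcases le_total c d with h | h
    · exact H2 a b c d hab h
    · rw [S4_swap34]; exact H2 a b d c hab h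
  rcases le_total a b with h | h
  · exact H1 a b c d h
  · rw [S4_swap12]; exact H1 b a c d h

/-! ### Integrability and basic integrals -/

variable {μ : Measure ℝ} [IsProbabilityMeasure μ] {f g : ℝ → ℝ}

omit [IsProbabilityMeasure μ] in
lemma intL2 [IsFiniteMeasure μ] (hf : MemLp f 2 μ) : Integrable f μ := hf.integrable one_le_two

omit [IsProbabilityMeasure μ] in
lemma intMul (hf : MemLp f 2 μ) (hg : MemLp g 2 μ) :
    Integrable (fun x => f x * g x) μ := by
  have h : MemLp (f • g) 1 μ := MemLp.smul hg hf
    (hpqr := ⟨by rw [ENNReal.inv_two_add_inv_two, inv_one]⟩)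
  exact memLp_one_iff_integrable.mp h

lemma cov_eq (hf : MemLp f 2 μ) (hg : MemLp g 2 μ) :
    cov μ f g = (∫ x, f x * g x ∂μ) - (∫ x, f x ∂μ) * (∫ x, g x ∂μ) := by
  have hfg := intMul hf hg
  have hif := intL2 hf
  have hig := intL2 hg
  set a := ∫ y, f y ∂μ with ha
  set b := ∫ y, g y ∂μ with hb
  have e : (fun x => (f x - a) * (g x - b))
      = fun x => ((f x * g x - a * g x) - b * f x) + a * b := by
    funext x; ring
  have h1 : Integrable (fun x => a * g x) μ := hig.const_mul a
  have h2 : Integrable (fun x => b * f x) μ := hif.const_mul b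
  have h3 : Integrable (fun x => f x * g x - a * g x) μ := hfg.sub h1
  have h4 : Integrable (fun x => f x * g x - a * g x - b * f x) μ := h3.sub h2
  rw [cov, e]
  rw [integral_add h4 (integrable_const (a * b)), integral_sub h3 h2, integral_sub hfg h1,
    integral_const_mul a g, integral_const_mul b f, integral_const]
  simp only [measure_univ, probReal_univ, ENNReal.toReal_one, one_smul]
  ring

lemma integrable_KK (hf : MemLp f 2 μ) (hg : MemLp g 2 μ) (x : ℝ) :
    Integrable (fun y => KK f g x y) μ := by
  have e : (fun y => KK f g x y)
      = fun y => ((f x * g x - f x * g y) - g x * f y) + f y * g y := by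
    funext y; unfold KK; ring
  have h1 : Integrable (fun y => f x * g x - f x * g y) μ :=
    (integrable_const _).sub ((intL2 hg).const_mul _)
  have h2 : Integrable (fun y => f x * g x - f x * g y - g x * f y) μ :=
    h1.sub ((intL2 hf).const_mul _)
  rw [e]
  exact h2.add (intMul hf hg)

lemma integral_KK (hf : MemLp f 2 μ) (hg : MemLp g 2 μ) (x : ℝ) :
    ∫ y, KK f g x y ∂μ = kk μ f g x := by
  have e : (fun y => KK f g x y)
      = fun y => ((f x * g x - f x * g y) - g x * f y) + f y * g y := by
    funext y; unfold KK; ring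
  have h1 : Integrable (fun y => f x * g x - f x * g y) μ :=
    (integrable_const _).sub ((intL2 hg).const_mul _)
  have h2 : Integrable (fun y => f x * g x - f x * g y - g x * f y) μ :=
    h1.sub ((intL2 hf).const_mul _)
  rw [e, integral_add h2 (intMul hf hg),
    integral_sub h1 ((intL2 hf).const_mul _),
    integral_sub (integrable_const _) ((intL2 hg).const_mul _),
    integral_const_mul (f x) g, integral_const_mul (g x) f, integral_const]
  simp only [measure_univ, probReal_univ, ENNReal.toReal_one, one_smul, kk]

lemma integrable_kk (hf : MemLp f 2 μ) (hg : MemLp g 2 μ) :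
    Integrable (kk μ f g) μ := by
  have h1 : Integrable (fun x => f x * g x - f x * (∫ y, g y ∂μ)) μ :=
    (intMul hf hg).sub ((intL2 hf).mul_const _)
  have h2 : Integrable (fun x => f x * g x - f x * (∫ y, g y ∂μ) - g x * (∫ y, f y ∂μ)) μ :=
    h1.sub ((intL2 hg).mul_const _)
  exact h2.add (integrable_const _)

lemma integral_kk (hf : MemLp f 2 μ) (hg : MemLp g 2 μ) :
    ∫ x, kk μ f g x ∂μ = 2 * cov μ f g := by
  have h1 : Integrable (fun x => f x * g x - f x * (∫ y, g y ∂μ)) μ :=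
    (intMul hf hg).sub ((intL2 hf).mul_const _)
  have h2 : Integrable (fun x => f x * g x - f x * (∫ y, g y ∂μ) - g x * (∫ y, f y ∂μ)) μ :=
    h1.sub ((intL2 hg).mul_const _)
  rw [show (kk μ f g) = fun x => f x * g x - f x * (∫ y, g y ∂μ) - g x * (∫ y, f y ∂μ)
      + ∫ y, f y * g y ∂μ from rfl,
    integral_add h2 (integrable_const _),
    integral_sub h1 ((intL2 hg).mul_const _),
    integral_sub (intMul hf hg) ((intL2 hf).mul_const _),
    integral_mul_const (∫ y, g y ∂μ) f, integral_mul_const (∫ y, f y ∂μ) g,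
    integral_const, cov_eq hf hg]
  simp only [measure_univ, probReal_univ, ENNReal.toReal_one, one_smul]
  ring

/-! ### Integrating `GG` -/

variable {u U v V : ℝ → ℝ}

lemma GG_expand (u U v V : ℝ → ℝ) (x y z w : ℝ) :
    GG u U v V x y z w =
      KK u v x y * KK U V z w + KK U V x y * KK u v z w
      - KK u V x y * KK U v z w - KK U v x y * KK u V z w := by
  unfold GG KK; ring

lemma integrable_GG (hu : MemLp u 2 μ) (hU : MemLp U 2 μ) (hv : MemLp v 2 μ)
    (hV : MemLp V 2 μ) (x y z : ℝ) : Integrable (fun w => GG u U v V x y z w) μ := by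
  have e : (fun w => GG u U v V x y z w) = fun w =>
      KK u v x y * KK U V z w + KK U V x y * KK u v z w
      - KK u V x y * KK U v z w - KK U v x y * KK u V z w := by
    funext w; exact GG_expand u U v V x y z w
  have h1 : Integrable (fun w => KK u v x y * KK U V z w) μ :=
    (integrable_KK hU hV z).const_mul _
  have h2 : Integrable (fun w => KK U V x y * KK u v z w) μ :=
    (integrable_KK hu hv z).const_mul _
  have h3 : Integrable (fun w => KK u V x y * KK U v z w) μ :=
    (integrable_KK hU hv z).const_mul _
  have h4 : Integrable (fun w => KK U v x y * KK u V z w) μ :=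
    (integrable_KK hu hV z).const_mul _
  have h12 : Integrable (fun w => KK u v x y * KK U V z w + KK U V x y * KK u v z w) μ :=
    h1.add h2
  have h123 : Integrable (fun w => KK u v x y * KK U V z w + KK U V x y * KK u v z w
      - KK u V x y * KK U v z w) μ := h12.sub h3
  rw [e]; exact h123.sub h4

lemma integral_GG (hu : MemLp u 2 μ) (hU : MemLp U 2 μ) (hv : MemLp v 2 μ)
    (hV : MemLp V 2 μ) (x y z : ℝ) :
    ∫ w, GG u U v V x y z w ∂μ =
      KK u v x y * kk μ U V z + KK U V x y * kk μ u v z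
      - KK u V x y * kk μ U v z - KK U v x y * kk μ u V z := by
  have e : (fun w => GG u U v V x y z w) = fun w =>
      KK u v x y * KK U V z w + KK U V x y * KK u v z w
      - KK u V x y * KK U v z w - KK U v x y * KK u V z w := by
    funext w; exact GG_expand u U v V x y z w
  have h1 : Integrable (fun w => KK u v x y * KK U V z w) μ :=
    (integrable_KK hU hV z).const_mul _
  have h2 : Integrable (fun w => KK U V x y * KK u v z w) μ :=
    (integrable_KK hu hv z).const_mul _
  have h3 : Integrable (fun w => KK u V x y * KK U v z w) μ :=
    (integrable_KK hU hv z).const_mul _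
  have h4 : Integrable (fun w => KK U v x y * KK u V z w) μ :=
    (integrable_KK hu hV z).const_mul _
  have h12 : Integrable (fun w => KK u v x y * KK U V z w + KK U V x y * KK u v z w) μ :=
    h1.add h2
  have h123 : Integrable (fun w => KK u v x y * KK U V z w + KK U V x y * KK u v z w
      - KK u V x y * KK U v z w) μ := h12.sub h3
  rw [e, integral_sub h123 h4, integral_sub h12 h3,
    integral_add h1 h2, integral_const_mul, integral_const_mul, integral_const_mul,
    integral_const_mul, integral_KK hu hv z, integral_KK hU hV z, integral_KK hU hv z,
    integral_KK hu hV z]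

end CovAux
namespace CovAux

variable {μ : Measure ℝ} [IsProbabilityMeasure μ] {u U v V : ℝ → ℝ}

/-- `S4` with its last variable integrated out. -/
noncomputable def Q3 (μ : Measure ℝ) (u U v V : ℝ → ℝ) (x1 x2 x3 : ℝ) : ℝ :=
  (KK u v x1 x2 * kk μ U V x3 + KK U V x1 x2 * kk μ u v x3
    - KK u V x1 x2 * kk μ U v x3 - KK U v x1 x2 * kk μ u V x3)
  + (KK u v x1 x3 * kk μ U V x2 + KK U V x1 x3 * kk μ u v x2
    - KK u V x1 x3 * kk μ U v x2 - KK U v x1 x3 * kk μ u V x2)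
  + (KK u v x2 x3 * kk μ U V x1 + KK U V x2 x3 * kk μ u v x1
    - KK u V x2 x3 * kk μ U v x1 - KK U v x2 x3 * kk μ u V x1)

lemma stepA (hu : MemLp u 2 μ) (hU : MemLp U 2 μ) (hv : MemLp v 2 μ)
    (hV : MemLp V 2 μ) (x1 x2 x3 : ℝ) :
    ∫ x4, S4 u U v V x1 x2 x3 x4 ∂μ = Q3 μ u U v V x1 x2 x3 := by
  have e : (fun x4 => S4 u U v V x1 x2 x3 x4) = fun x4 =>
      GG u U v V x1 x2 x3 x4 + GG u U v V x1 x3 x2 x4 + GG u U v V x2 x3 x1 x4 := by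
    funext x4; unfold S4 GG; ring
  have hA := integrable_GG hu hU hv hV x1 x2 x3
  have hB := integrable_GG hu hU hv hV x1 x3 x2
  have hC := integrable_GG hu hU hv hV x2 x3 x1
  have hAB : Integrable (fun x4 => GG u U v V x1 x2 x3 x4 + GG u U v V x1 x3 x2 x4) μ :=
    hA.add hB
  rw [e, integral_add hAB hC, integral_add hA hB,
    integral_GG hu hU hv hV x1 x2 x3, integral_GG hu hU hv hV x1 x3 x2,
    integral_GG hu hU hv hV x2 x3 x1, Q3]

end CovAux
namespace CovAux

variable {μ : Measure ℝ} [IsProbabilityMeasure μ] {u U v V : ℝ → ℝ}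

/-- `S4` with its last two variables integrated out. -/
noncomputable def Q2 (μ : Measure ℝ) (u U v V : ℝ → ℝ) (x1 x2 : ℝ) : ℝ :=
  (KK u v x1 x2 * (2 * cov μ U V) + KK U V x1 x2 * (2 * cov μ u v)
    - KK u V x1 x2 * (2 * cov μ U v) - KK U v x1 x2 * (2 * cov μ u V))
  + (kk μ u v x1 * kk μ U V x2 + kk μ U V x1 * kk μ u v x2
    - kk μ u V x1 * kk μ U v x2 - kk μ U v x1 * kk μ u V x2)
  + (kk μ u v x2 * kk μ U V x1 + kk μ U V x2 * kk μ u v x1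
    - kk μ u V x2 * kk μ U v x1 - kk μ U v x2 * kk μ u V x1)

/-- `S4` with its last three variables integrated out. -/
noncomputable def Q1 (μ : Measure ℝ) (u U v V : ℝ → ℝ) (x1 : ℝ) : ℝ :=
  (kk μ u v x1 * (2 * cov μ U V) + kk μ U V x1 * (2 * cov μ u v)
    - kk μ u V x1 * (2 * cov μ U v) - kk μ U v x1 * (2 * cov μ u V))
  + (kk μ u v x1 * (2 * cov μ U V) + kk μ U V x1 * (2 * cov μ u v)
    - kk μ u V x1 * (2 * cov μ U v) - kk μ U v x1 * (2 * cov μ u V))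
  + (2 * cov μ u v * kk μ U V x1 + 2 * cov μ U V * kk μ u v x1
    - 2 * cov μ u V * kk μ U v x1 - 2 * cov μ U v * kk μ u V x1)

lemma stepB (hu : MemLp u 2 μ) (hU : MemLp U 2 μ) (hv : MemLp v 2 μ)
    (hV : MemLp V 2 μ) (x1 x2 : ℝ) :
    ∫ x3, Q3 μ u U v V x1 x2 x3 ∂μ = Q2 μ u U v V x1 x2 := by
  have a1 : Integrable (fun x3 => KK u v x1 x2 * kk μ U V x3) μ :=
    (integrable_kk hU hV).const_mul _
  have a2 : Integrable (fun x3 => KK U V x1 x2 * kk μ u v x3) μ :=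
    (integrable_kk hu hv).const_mul _
  have a3 : Integrable (fun x3 => KK u V x1 x2 * kk μ U v x3) μ :=
    (integrable_kk hU hv).const_mul _
  have a4 : Integrable (fun x3 => KK U v x1 x2 * kk μ u V x3) μ :=
    (integrable_kk hu hV).const_mul _
  have a12 : Integrable (fun x3 => KK u v x1 x2 * kk μ U V x3
      + KK U V x1 x2 * kk μ u v x3) μ := a1.add a2
  have a123 : Integrable (fun x3 => KK u v x1 x2 * kk μ U V x3
      + KK U V x1 x2 * kk μ u v x3 - KK u V x1 x2 * kk μ U v x3) μ := a12.sub a3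
  have gA : Integrable (fun x3 => KK u v x1 x2 * kk μ U V x3 + KK U V x1 x2 * kk μ u v x3
      - KK u V x1 x2 * kk μ U v x3 - KK U v x1 x2 * kk μ u V x3) μ := a123.sub a4
  have b1 : Integrable (fun x3 => KK u v x1 x3 * kk μ U V x2) μ :=
    (integrable_KK hu hv x1).mul_const _
  have b2 : Integrable (fun x3 => KK U V x1 x3 * kk μ u v x2) μ :=
    (integrable_KK hU hV x1).mul_const _
  have b3 : Integrable (fun x3 => KK u V x1 x3 * kk μ U v x2) μ :=
    (integrable_KK hu hV x1).mul_const _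
  have b4 : Integrable (fun x3 => KK U v x1 x3 * kk μ u V x2) μ :=
    (integrable_KK hU hv x1).mul_const _
  have b12 : Integrable (fun x3 => KK u v x1 x3 * kk μ U V x2
      + KK U V x1 x3 * kk μ u v x2) μ := b1.add b2
  have b123 : Integrable (fun x3 => KK u v x1 x3 * kk μ U V x2
      + KK U V x1 x3 * kk μ u v x2 - KK u V x1 x3 * kk μ U v x2) μ := b12.sub b3
  have gB : Integrable (fun x3 => KK u v x1 x3 * kk μ U V x2 + KK U V x1 x3 * kk μ u v x2
      - KK u V x1 x3 * kk μ U v x2 - KK U v x1 x3 * kk μ u V x2) μ := b123.sub b4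
  have c1 : Integrable (fun x3 => KK u v x2 x3 * kk μ U V x1) μ :=
    (integrable_KK hu hv x2).mul_const _
  have c2 : Integrable (fun x3 => KK U V x2 x3 * kk μ u v x1) μ :=
    (integrable_KK hU hV x2).mul_const _
  have c3 : Integrable (fun x3 => KK u V x2 x3 * kk μ U v x1) μ :=
    (integrable_KK hu hV x2).mul_const _
  have c4 : Integrable (fun x3 => KK U v x2 x3 * kk μ u V x1) μ :=
    (integrable_KK hU hv x2).mul_const _
  have c12 : Integrable (fun x3 => KK u v x2 x3 * kk μ U V x1
      + KK U V x2 x3 * kk μ u v x1) μ := c1.add c2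
  have c123 : Integrable (fun x3 => KK u v x2 x3 * kk μ U V x1
      + KK U V x2 x3 * kk μ u v x1 - KK u V x2 x3 * kk μ U v x1) μ := c12.sub c3
  have gC : Integrable (fun x3 => KK u v x2 x3 * kk μ U V x1 + KK U V x2 x3 * kk μ u v x1
      - KK u V x2 x3 * kk μ U v x1 - KK U v x2 x3 * kk μ u V x1) μ := c123.sub c4
  have gAB : Integrable (fun x3 =>
      (KK u v x1 x2 * kk μ U V x3 + KK U V x1 x2 * kk μ u v x3
        - KK u V x1 x2 * kk μ U v x3 - KK U v x1 x2 * kk μ u V x3)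
      + (KK u v x1 x3 * kk μ U V x2 + KK U V x1 x3 * kk μ u v x2
        - KK u V x1 x3 * kk μ U v x2 - KK U v x1 x3 * kk μ u V x2)) μ := gA.add gB
  unfold Q3
  rw [integral_add gAB gC, integral_add gA gB,
    integral_sub a123 a4, integral_sub a12 a3, integral_add a1 a2,
    integral_sub b123 b4, integral_sub b12 b3, integral_add b1 b2,
    integral_sub c123 c4, integral_sub c12 c3, integral_add c1 c2,
    integral_const_mul (KK u v x1 x2) (kk μ U V), integral_const_mul (KK U V x1 x2) (kk μ u v),
    integral_const_mul (KK u V x1 x2) (kk μ U v), integral_const_mul (KK U v x1 x2) (kk μ u V),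
    integral_mul_const (kk μ U V x2) (KK u v x1), integral_mul_const (kk μ u v x2) (KK U V x1),
    integral_mul_const (kk μ U v x2) (KK u V x1), integral_mul_const (kk μ u V x2) (KK U v x1),
    integral_mul_const (kk μ U V x1) (KK u v x2), integral_mul_const (kk μ u v x1) (KK U V x2),
    integral_mul_const (kk μ U v x1) (KK u V x2), integral_mul_const (kk μ u V x1) (KK U v x2),
    integral_kk hu hv, integral_kk hU hV, integral_kk hu hV, integral_kk hU hv,
    integral_KK hu hv x1, integral_KK hU hV x1, integral_KK hu hV x1, integral_KK hU hv x1,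
    integral_KK hu hv x2, integral_KK hU hV x2, integral_KK hu hV x2, integral_KK hU hv x2,
    Q2]

lemma stepC (hu : MemLp u 2 μ) (hU : MemLp U 2 μ) (hv : MemLp v 2 μ)
    (hV : MemLp V 2 μ) (x1 : ℝ) :
    ∫ x2, Q2 μ u U v V x1 x2 ∂μ = Q1 μ u U v V x1 := by
  have a1 : Integrable (fun x2 => KK u v x1 x2 * (2 * cov μ U V)) μ :=
    (integrable_KK hu hv x1).mul_const _
  have a2 : Integrable (fun x2 => KK U V x1 x2 * (2 * cov μ u v)) μ :=
    (integrable_KK hU hV x1).mul_const _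
  have a3 : Integrable (fun x2 => KK u V x1 x2 * (2 * cov μ U v)) μ :=
    (integrable_KK hu hV x1).mul_const _
  have a4 : Integrable (fun x2 => KK U v x1 x2 * (2 * cov μ u V)) μ :=
    (integrable_KK hU hv x1).mul_const _
  have a12 : Integrable (fun x2 => KK u v x1 x2 * (2 * cov μ U V)
      + KK U V x1 x2 * (2 * cov μ u v)) μ := a1.add a2
  have a123 : Integrable (fun x2 => KK u v x1 x2 * (2 * cov μ U V)
      + KK U V x1 x2 * (2 * cov μ u v) - KK u V x1 x2 * (2 * cov μ U v)) μ := a12.sub a3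
  have gA : Integrable (fun x2 => KK u v x1 x2 * (2 * cov μ U V)
      + KK U V x1 x2 * (2 * cov μ u v) - KK u V x1 x2 * (2 * cov μ U v)
      - KK U v x1 x2 * (2 * cov μ u V)) μ := a123.sub a4
  have b1 : Integrable (fun x2 => kk μ u v x1 * kk μ U V x2) μ :=
    (integrable_kk hU hV).const_mul _
  have b2 : Integrable (fun x2 => kk μ U V x1 * kk μ u v x2) μ :=
    (integrable_kk hu hv).const_mul _
  have b3 : Integrable (fun x2 => kk μ u V x1 * kk μ U v x2) μ :=
    (integrable_kk hU hv).const_mul _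
  have b4 : Integrable (fun x2 => kk μ U v x1 * kk μ u V x2) μ :=
    (integrable_kk hu hV).const_mul _
  have b12 : Integrable (fun x2 => kk μ u v x1 * kk μ U V x2
      + kk μ U V x1 * kk μ u v x2) μ := b1.add b2
  have b123 : Integrable (fun x2 => kk μ u v x1 * kk μ U V x2
      + kk μ U V x1 * kk μ u v x2 - kk μ u V x1 * kk μ U v x2) μ := b12.sub b3
  have gB : Integrable (fun x2 => kk μ u v x1 * kk μ U V x2 + kk μ U V x1 * kk μ u v x2
      - kk μ u V x1 * kk μ U v x2 - kk μ U v x1 * kk μ u V x2) μ := b123.sub b4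
  have c1 : Integrable (fun x2 => kk μ u v x2 * kk μ U V x1) μ :=
    (integrable_kk hu hv).mul_const _
  have c2 : Integrable (fun x2 => kk μ U V x2 * kk μ u v x1) μ :=
    (integrable_kk hU hV).mul_const _
  have c3 : Integrable (fun x2 => kk μ u V x2 * kk μ U v x1) μ :=
    (integrable_kk hu hV).mul_const _
  have c4 : Integrable (fun x2 => kk μ U v x2 * kk μ u V x1) μ :=
    (integrable_kk hU hv).mul_const _
  have c12 : Integrable (fun x2 => kk μ u v x2 * kk μ U V x1
      + kk μ U V x2 * kk μ u v x1) μ := c1.add c2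
  have c123 : Integrable (fun x2 => kk μ u v x2 * kk μ U V x1
      + kk μ U V x2 * kk μ u v x1 - kk μ u V x2 * kk μ U v x1) μ := c12.sub c3
  have gC : Integrable (fun x2 => kk μ u v x2 * kk μ U V x1 + kk μ U V x2 * kk μ u v x1
      - kk μ u V x2 * kk μ U v x1 - kk μ U v x2 * kk μ u V x1) μ := c123.sub c4
  have gAB : Integrable (fun x2 =>
      (KK u v x1 x2 * (2 * cov μ U V) + KK U V x1 x2 * (2 * cov μ u v)
        - KK u V x1 x2 * (2 * cov μ U v) - KK U v x1 x2 * (2 * cov μ u V))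
      + (kk μ u v x1 * kk μ U V x2 + kk μ U V x1 * kk μ u v x2
        - kk μ u V x1 * kk μ U v x2 - kk μ U v x1 * kk μ u V x2)) μ := gA.add gB
  unfold Q2
  rw [integral_add gAB gC, integral_add gA gB,
    integral_sub a123 a4, integral_sub a12 a3, integral_add a1 a2,
    integral_sub b123 b4, integral_sub b12 b3, integral_add b1 b2,
    integral_sub c123 c4, integral_sub c12 c3, integral_add c1 c2,
    integral_mul_const (2 * cov μ U V) (KK u v x1), integral_mul_const (2 * cov μ u v) (KK U V x1),
    integral_mul_const (2 * cov μ U v) (KK u V x1), integral_mul_const (2 * cov μ u V) (KK U v x1),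
    integral_const_mul (kk μ u v x1) (kk μ U V), integral_const_mul (kk μ U V x1) (kk μ u v),
    integral_const_mul (kk μ u V x1) (kk μ U v), integral_const_mul (kk μ U v x1) (kk μ u V),
    integral_mul_const (kk μ U V x1) (kk μ u v), integral_mul_const (kk μ u v x1) (kk μ U V),
    integral_mul_const (kk μ U v x1) (kk μ u V), integral_mul_const (kk μ u V x1) (kk μ U v),
    integral_KK hu hv x1, integral_KK hU hV x1, integral_KK hu hV x1, integral_KK hU hv x1,
    integral_kk hu hv, integral_kk hU hV, integral_kk hu hV, integral_kk hU hv,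
    Q1]

lemma stepD (hu : MemLp u 2 μ) (hU : MemLp U 2 μ) (hv : MemLp v 2 μ)
    (hV : MemLp V 2 μ) :
    ∫ x1, Q1 μ u U v V x1 ∂μ
      = 24 * (cov μ U V * cov μ u v - cov μ u V * cov μ U v) := by
  have a1 : Integrable (fun x1 => kk μ u v x1 * (2 * cov μ U V)) μ :=
    (integrable_kk hu hv).mul_const _
  have a2 : Integrable (fun x1 => kk μ U V x1 * (2 * cov μ u v)) μ :=
    (integrable_kk hU hV).mul_const _
  have a3 : Integrable (fun x1 => kk μ u V x1 * (2 * cov μ U v)) μ :=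
    (integrable_kk hu hV).mul_const _
  have a4 : Integrable (fun x1 => kk μ U v x1 * (2 * cov μ u V)) μ :=
    (integrable_kk hU hv).mul_const _
  have a12 : Integrable (fun x1 => kk μ u v x1 * (2 * cov μ U V)
      + kk μ U V x1 * (2 * cov μ u v)) μ := a1.add a2
  have a123 : Integrable (fun x1 => kk μ u v x1 * (2 * cov μ U V)
      + kk μ U V x1 * (2 * cov μ u v) - kk μ u V x1 * (2 * cov μ U v)) μ := a12.sub a3
  have gA : Integrable (fun x1 => kk μ u v x1 * (2 * cov μ U V)
      + kk μ U V x1 * (2 * cov μ u v) - kk μ u V x1 * (2 * cov μ U v)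
      - kk μ U v x1 * (2 * cov μ u V)) μ := a123.sub a4
  have c1 : Integrable (fun x1 => 2 * cov μ u v * kk μ U V x1) μ :=
    (integrable_kk hU hV).const_mul _
  have c2 : Integrable (fun x1 => 2 * cov μ U V * kk μ u v x1) μ :=
    (integrable_kk hu hv).const_mul _
  have c3 : Integrable (fun x1 => 2 * cov μ u V * kk μ U v x1) μ :=
    (integrable_kk hU hv).const_mul _
  have c4 : Integrable (fun x1 => 2 * cov μ U v * kk μ u V x1) μ :=
    (integrable_kk hu hV).const_mul _
  have c12 : Integrable (fun x1 => 2 * cov μ u v * kk μ U V x1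
      + 2 * cov μ U V * kk μ u v x1) μ := c1.add c2
  have c123 : Integrable (fun x1 => 2 * cov μ u v * kk μ U V x1
      + 2 * cov μ U V * kk μ u v x1 - 2 * cov μ u V * kk μ U v x1) μ := c12.sub c3
  have gC : Integrable (fun x1 => 2 * cov μ u v * kk μ U V x1 + 2 * cov μ U V * kk μ u v x1
      - 2 * cov μ u V * kk μ U v x1 - 2 * cov μ U v * kk μ u V x1) μ := c123.sub c4
  have gAB : Integrable (fun x1 =>
      (kk μ u v x1 * (2 * cov μ U V) + kk μ U V x1 * (2 * cov μ u v)
        - kk μ u V x1 * (2 * cov μ U v) - kk μ U v x1 * (2 * cov μ u V))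
      + (kk μ u v x1 * (2 * cov μ U V) + kk μ U V x1 * (2 * cov μ u v)
        - kk μ u V x1 * (2 * cov μ U v) - kk μ U v x1 * (2 * cov μ u V))) μ := gA.add gA
  unfold Q1
  rw [integral_add gAB gC, integral_add gA gA,
    integral_sub a123 a4, integral_sub a12 a3, integral_add a1 a2,
    integral_sub c123 c4, integral_sub c12 c3, integral_add c1 c2,
    integral_mul_const (2 * cov μ U V) (kk μ u v), integral_mul_const (2 * cov μ u v) (kk μ U V),
    integral_mul_const (2 * cov μ U v) (kk μ u V), integral_mul_const (2 * cov μ u V) (kk μ U v),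
    integral_const_mul (2 * cov μ u v) (kk μ U V), integral_const_mul (2 * cov μ U V) (kk μ u v),
    integral_const_mul (2 * cov μ u V) (kk μ U v), integral_const_mul (2 * cov μ U v) (kk μ u V),
    integral_kk hu hv, integral_kk hU hV, integral_kk hu hV, integral_kk hU hv]
  ring

end CovAux
/-- Theorem 2.8: if `(u, U)` and `(v, V)` are pairs in `L²(μ)` satisfying Assumption
(C), then `Cov_μ(U,V) Cov_μ(u,v) ≥ Cov_μ(u,V) Cov_μ(U,v)`. -/
theorem cov_det_nonneg_of_assumptionC (μ : Measure ℝ) [IsProbabilityMeasure μ]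
    (u U v V : ℝ → ℝ)
    (huL2 : MemLp u 2 μ) (hUL2 : MemLp U 2 μ)
    (hvL2 : MemLp v 2 μ) (hVL2 : MemLp V 2 μ)
    (huU : AssumptionC u U) (hvV : AssumptionC v V) :
    cov μ U V * cov μ u v ≥ cov μ u V * cov μ U v := by
  have key : (0:ℝ) ≤ ∫ x1, ∫ x2, ∫ x3, ∫ x4,
      CovAux.S4 u U v V x1 x2 x3 x4 ∂μ ∂μ ∂μ ∂μ :=
    integral_nonneg fun x1 => integral_nonneg fun x2 => integral_nonneg fun x3 =>
      integral_nonneg fun x4 => CovAux.S4_nonneg huU hvV x1 x2 x3 x4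
  have e1 : (∫ x1, ∫ x2, ∫ x3, ∫ x4, CovAux.S4 u U v V x1 x2 x3 x4 ∂μ ∂μ ∂μ ∂μ)
      = 24 * (cov μ U V * cov μ u v - cov μ u V * cov μ U v) := by
    simp_rw [CovAux.stepA huL2 hUL2 hvL2 hVL2, CovAux.stepB huL2 hUL2 hvL2 hVL2,
      CovAux.stepC huL2 hUL2 hvL2 hVL2]
    exact CovAux.stepD huL2 hUL2 hvL2 hVL2
  rw [e1] at key
  linarith
end

section
/- Let μ be a probability measure on ℝ with cumulative distribution function F_μ. For all absolutely continuous functions f, g ∈ L²(μ) (with suitable integrability of the derivatives), one has Cov_μ(f, g) = ∬_{ℝ²} f′(x) k_μ(x, y) g′(y) dx dy, where k_μ(x, y) = F_μ(min(x, y)) − F_μ(x) F_μ(y). -/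
open MeasureTheory

/-- The cumulative distribution function of a measure on `ℝ`. -/
noncomputable def cdf (μ : Measure ℝ) (x : ℝ) : ℝ := (μ (Set.Iic x)).toReal

/-- The Hoeffding kernel `k_μ(x,y) = F_μ(x ∧ y) − F_μ(x) F_μ(y)`. -/
noncomputable def hoeffdingKernel (μ : Measure ℝ) (x y : ℝ) : ℝ :=
  cdf μ (min x y) - cdf μ x * cdf μ y

open Set
open scoped ENNReal NNReal

noncomputable def hstep (s x y : ℝ) : ℝ :=
  (if s ≤ x then (1:ℝ) else 0) - (if s ≤ y then (1:ℝ) else 0)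

lemma hstep_mul (s t x y : ℝ) :
    hstep s x y * hstep t x y =
      (if max s t ≤ x ∧ y < min s t then (1:ℝ) else 0)
        + (if max s t ≤ y ∧ x < min s t then (1:ℝ) else 0) := by
  unfold hstep
  by_cases h1 : s ≤ x <;> by_cases h2 : s ≤ y <;> by_cases h3 : t ≤ x <;> by_cases h4 : t ≤ y <;>
    simp [*, ← not_le, max_le_iff, lt_min_iff] <;> norm_num <;> linarith

lemma hstep_eq_indicator {x y : ℝ} (hxy : y ≤ x) (s : ℝ) :
    hstep s x y = (Ioc y x).indicator (fun _ => (1:ℝ)) s := by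
  unfold hstep
  by_cases h1 : s ≤ x <;> by_cases h2 : s ≤ y <;>
    simp [*, ← not_le, Set.indicator_apply, Set.mem_Ioc] <;> norm_num <;> linarith

lemma hstep_neg_eq_indicator {x y : ℝ} (hxy : x ≤ y) (s : ℝ) :
    hstep s x y = - (Ioc x y).indicator (fun _ => (1:ℝ)) s := by
  unfold hstep
  by_cases h1 : s ≤ x <;> by_cases h2 : s ≤ y <;>
    simp [*, ← not_le, Set.indicator_apply, Set.mem_Ioc] <;> norm_num <;> linarith

lemma hstep_ne_zero_of_mem {x y s : ℝ} (hs : s ∈ Set.uIoc x y) : hstep s x y ≠ 0 := by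
  rcases le_total y x with h | h
  · rw [hstep_eq_indicator h]
    rw [Set.uIoc_of_ge h] at hs
    simp [Set.indicator_apply, hs]
  · rw [hstep_neg_eq_indicator h]
    rw [Set.uIoc_of_le h] at hs
    simp [Set.indicator_apply, hs]

lemma measurable_hstep2 :
    Measurable (fun q : (ℝ × ℝ) × ℝ × ℝ => hstep q.1.1 q.2.1 q.2.2 * hstep q.1.2 q.2.1 q.2.2) := by
  unfold hstep
  apply Measurable.mul <;> apply Measurable.sub <;>
    exact Measurable.ite (measurableSet_le (by fun_prop) (by fun_prop))
      measurable_const measurable_const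

lemma measurable_hstep_left (x y : ℝ) : Measurable (fun s : ℝ => hstep s x y) := by
  unfold hstep
  apply Measurable.sub <;>
    exact Measurable.ite (measurableSet_le measurable_id measurable_const)
      measurable_const measurable_const

variable {μ : Measure ℝ} [IsProbabilityMeasure μ]

lemma int_hstep_mul (s t : ℝ) :
    ∫ z : ℝ × ℝ, hstep s z.1 z.2 * hstep t z.1 z.2 ∂(μ.prod μ) =
      2 * ((μ (Set.Ici (max s t))).toReal * (μ (Set.Iio (min s t))).toReal) := by
  have hA : MeasurableSet (Set.Ici (max s t) ×ˢ Set.Iio (min s t)) :=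
    measurableSet_Ici.prod measurableSet_Iio
  have hB : MeasurableSet (Set.Iio (min s t) ×ˢ Set.Ici (max s t)) :=
    measurableSet_Iio.prod measurableSet_Ici
  have key : ∀ z : ℝ × ℝ, hstep s z.1 z.2 * hstep t z.1 z.2 =
      (Set.Ici (max s t) ×ˢ Set.Iio (min s t)).indicator (fun _ => (1:ℝ)) z
        + (Set.Iio (min s t) ×ˢ Set.Ici (max s t)).indicator (fun _ => (1:ℝ)) z := by
    intro z
    rw [hstep_mul]
    simp [Set.indicator_apply, Set.mem_prod, and_comm]
  simp only [key]
  rw [integral_add ((integrable_const (1:ℝ)).indicator hA) ((integrable_const (1:ℝ)).indicator hB),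
    integral_indicator_const _ hA, integral_indicator_const _ hB,
    measureReal_def, measureReal_def, Measure.prod_prod, Measure.prod_prod]
  simp only [smul_eq_mul, mul_one]
  rw [ENNReal.toReal_mul, ENNReal.toReal_mul]
  ring

lemma lint_hstep_mul (s t : ℝ) :
    ∫⁻ z : ℝ × ℝ, ‖hstep s z.1 z.2 * hstep t z.1 z.2‖₊ ∂(μ.prod μ) =
      2 * (μ (Set.Ici (max s t)) * μ (Set.Iio (min s t))) := by
  have key : ∀ z : ℝ × ℝ, (‖hstep s z.1 z.2 * hstep t z.1 z.2‖₊ : ℝ≥0∞) =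
      (Set.Ici (max s t) ×ˢ Set.Iio (min s t)).indicator 1 z
        + (Set.Iio (min s t) ×ˢ Set.Ici (max s t)).indicator 1 z := by
    intro z
    rw [hstep_mul]
    have mA : z ∈ Set.Ici (max s t) ×ˢ Set.Iio (min s t) ↔
        (max s t ≤ z.1 ∧ z.2 < min s t) := by simp [Set.mem_prod]
    have mB : z ∈ Set.Iio (min s t) ×ˢ Set.Ici (max s t) ↔
        (max s t ≤ z.2 ∧ z.1 < min s t) := by simp [Set.mem_prod, and_comm]
    rw [Set.indicator_apply, Set.indicator_apply]
    by_cases hA : max s t ≤ z.1 ∧ z.2 < min s t <;>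
      by_cases hB : max s t ≤ z.2 ∧ z.1 < min s t
    · exact absurd (((le_max_left s t).trans hA.1).trans_lt
        (hB.2.trans_le (min_le_left s t))) (lt_irrefl _)
    · rw [if_pos hA, if_neg hB, if_pos (mA.mpr hA), if_neg (fun h => hB (mB.mp h))]
      norm_num
    · rw [if_neg hA, if_pos hB, if_neg (fun h => hA (mA.mp h)), if_pos (mB.mpr hB)]
      norm_num
    · rw [if_neg hA, if_neg hB, if_neg (fun h => hA (mA.mp h)), if_neg (fun h => hB (mB.mp h))]
      norm_num
  simp only [key]
  rw [lintegral_add_left (measurable_one.indicator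
      (measurableSet_Ici.prod measurableSet_Iio)),
    lintegral_indicator_one (measurableSet_Ici.prod measurableSet_Iio),
    lintegral_indicator_one (measurableSet_Iio.prod measurableSet_Ici),
    Measure.prod_prod, Measure.prod_prod]
  ring


lemma atoms_countable : Set.Countable {u : ℝ | μ {u} ≠ 0} := by
  have h := Measure.countable_meas_level_set_pos (μ := μ) (g := (id : ℝ → ℝ)) measurable_id
  simpa [Set.setOf_eq_eq_singleton, pos_iff_ne_zero] using h

lemma measure_Iio_eq (u : ℝ) (hu : μ {u} = 0) : μ (Set.Iio u) = μ (Set.Iic u) := by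
  have h : μ (Set.Iic u) = μ (Set.Iio u) + μ {u} := by
    rw [← Set.Iio_union_right]
    exact measure_union (by simp) (measurableSet_singleton u)
  rw [h, hu, add_zero]

lemma measure_Ici_toReal (u : ℝ) (hu : μ {u} = 0) :
    (μ (Set.Ici u)).toReal = 1 - cdf μ u := by
  have h1 : μ (Set.Ici u) = 1 - μ (Set.Iio u) := by
    rw [← Set.compl_Iio, measure_compl measurableSet_Iio (measure_ne_top μ _), measure_univ]
  rw [h1, measure_Iio_eq u hu, ENNReal.toReal_sub_of_le prob_le_one ENNReal.one_ne_top]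
  simp [cdf]

lemma kernel_eq (s t : ℝ) (hs : μ {s} = 0) (ht : μ {t} = 0) :
    hoeffdingKernel μ s t = (μ (Set.Ici (max s t))).toReal * (μ (Set.Iio (min s t))).toReal := by
  rcases le_total s t with h | h
  · rw [max_eq_right h, min_eq_left h, measure_Ici_toReal t ht, measure_Iio_eq s hs]
    unfold hoeffdingKernel
    rw [min_eq_left h]
    show cdf μ s - cdf μ s * cdf μ t = (1 - cdf μ t) * cdf μ s
    ring
  · rw [max_eq_left h, min_eq_right h, measure_Ici_toReal s hs, measure_Iio_eq t ht]
    unfold hoeffdingKernel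
    rw [min_eq_right h]
    show cdf μ t - cdf μ s * cdf μ t = (1 - cdf μ s) * cdf μ t
    ring

lemma int_deriv_hstep {f f' : ℝ → ℝ} (hf : ∀ x, HasDerivAt f (f' x) x) (x y : ℝ)
    (hi : Integrable (fun s => f' s * hstep s x y) volume) :
    ∫ s, f' s * hstep s x y = f x - f y := by
  rcases le_total y x with hxy | hxy
  · have heq : (fun s => f' s * hstep s x y) = (Set.Ioc y x).indicator f' := by
      funext s
      rw [hstep_eq_indicator hxy]
      by_cases hs : s ∈ Set.Ioc y x <;> simp [Set.indicator_apply, hs]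
    rw [heq] at hi ⊢
    rw [integral_indicator measurableSet_Ioc]
    have hii : IntervalIntegrable f' volume y x := by
      rw [intervalIntegrable_iff, Set.uIoc_of_le hxy]
      exact (integrable_indicator_iff measurableSet_Ioc).1 hi
    have := intervalIntegral.integral_eq_sub_of_hasDerivAt
      (f := f) (f' := f') (a := y) (b := x) (fun u _ => hf u) hii
    rw [intervalIntegral.integral_of_le hxy] at this
    exact this
  · have heq : (fun s => f' s * hstep s x y) = fun s => - (Set.Ioc x y).indicator f' s := by
      funext s
      rw [hstep_neg_eq_indicator hxy]
      by_cases hs : s ∈ Set.Ioc x y <;> simp [Set.indicator_apply, hs]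
    rw [heq] at hi ⊢
    rw [integral_neg, integral_indicator measurableSet_Ioc]
    have hii : IntervalIntegrable f' volume x y := by
      rw [intervalIntegrable_iff, Set.uIoc_of_le hxy]
      have hi' : Integrable (fun s => (Set.Ioc x y).indicator f' s) volume := by
        refine hi.neg.congr (Filter.Eventually.of_forall fun s => ?_)
        simp
      exact (integrable_indicator_iff measurableSet_Ioc).1 hi'
    have := intervalIntegral.integral_eq_sub_of_hasDerivAt
      (f := f) (f' := f') (a := x) (b := y) (fun u _ => hf u) hii
    rw [intervalIntegral.integral_of_le hxy] at this
    rw [this]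
    ring

lemma eq_of_deriv_ae_zero {g g' : ℝ → ℝ} (hg : ∀ x, HasDerivAt g (g' x) x) (x y : ℝ)
    (h0 : ∀ᵐ t ∂volume, t ∈ Set.uIoc x y → g' t = 0) : g x = g y := by
  have hcont : Continuous g := by
    rw [continuous_iff_continuousAt]; exact fun t => (hg t).continuousAt
  -- the image of [[x,y]] under g is null
  have himg : volume (g '' Set.uIcc x y) = 0 := by
    have hle := MeasureTheory.addHaar_image_le_lintegral_abs_det_fderiv (μ := volume)
      measurableSet_uIcc
      (fun t _ => ((hg t).hasFDerivAt).hasFDerivWithinAt (s := Set.uIcc x y))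
    simp only [ContinuousLinearMap.det_toSpanSingleton] at hle
    have hz : ∫⁻ t in Set.uIcc x y, ENNReal.ofReal |g' t| ∂volume = 0 := by
      have h0' : ∀ᵐ t ∂(volume.restrict (Set.uIcc x y)),
          ENNReal.ofReal |g' t| = 0 := by
        have huIcc : ∀ᵐ t ∂volume, t ∈ Set.uIcc x y → t ∈ Set.uIoc x y ∨ t = min x y := by
          filter_upwards with t ht
          rcases eq_or_ne t (min x y) with h | h
          · exact Or.inr h
          · left
            rw [Set.uIoc, Set.mem_Ioc]
            rw [Set.uIcc, Set.mem_Icc] at ht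
            exact ⟨lt_of_le_of_ne ht.1 (Ne.symm h), ht.2⟩
        have h0'' : ∀ᵐ t ∂(volume : Measure ℝ),
            t ∈ Set.uIcc x y → ENNReal.ofReal |g' t| = 0 := by
          filter_upwards [h0, huIcc,
            (ae_iff.2 (by simpa using volume_singleton (a := min x y)) :
              ∀ᵐ t ∂(volume : Measure ℝ), t ≠ min x y)] with t h1 h2 h3 ht
          rcases h2 ht with h4 | h4
          · rw [h1 h4]; simp
          · exact absurd h4 h3
        exact (ae_restrict_iff' measurableSet_uIcc).2 h0''
      rw [lintegral_congr_ae h0']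
      simp
    have := le_trans hle (le_of_eq hz)
    exact le_antisymm this zero_le
  by_contra hne
  have hsub : Set.uIcc (g x) (g y) ⊆ g '' Set.uIcc x y :=
    intermediate_value_uIcc hcont.continuousOn
  have : volume (Set.uIcc (g x) (g y)) = 0 :=
    le_antisymm (le_trans (measure_mono hsub) (le_of_eq himg)) zero_le
  rw [Set.uIcc, Real.volume_Icc, ENNReal.ofReal_eq_zero] at this
  have hlt : (0:ℝ) < max (g x) (g y) - min (g x) (g y) := by
    rcases lt_or_gt_of_ne hne with h | h
    · rw [max_eq_right h.le, min_eq_left h.le]; linarith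
    · rw [max_eq_left h.le, min_eq_right h.le]; linarith
  linarith

lemma cov_eq_integral_mul_sub {f g : ℝ → ℝ} (hfi : Integrable f μ) (hgi : Integrable g μ)
    (hfgi : Integrable (fun x => f x * g x) μ) :
    cov μ f g = (∫ x, f x * g x ∂μ) - (∫ x, f x ∂μ) * ∫ x, g x ∂μ := by
  unfold cov
  set a := ∫ x, f x ∂μ with ha
  set b := ∫ x, g x ∂μ with hb
  have heq : (fun x => (f x - a) * (g x - b)) =
      fun x => (f x * g x + a * b) - (a * g x + b * f x) := by
    funext x; ring
  have Ia : Integrable (fun x => f x * g x + a * b) μ := by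
    exact hfgi.add (integrable_const _)
  have Ib : Integrable (fun x => a * g x + b * f x) μ := by
    exact (hgi.const_mul a).add (hfi.const_mul b)
  rw [heq, integral_sub Ia Ib,
    integral_add hfgi (integrable_const _),
    integral_add (hgi.const_mul a) (hfi.const_mul b),
    integral_const_mul, integral_const_mul, integral_const]
  simp only [measureReal_def, measure_univ, ENNReal.toReal_one, one_smul, smul_eq_mul]
  rw [integral_const_mul]
  ring

lemma double_integral_sub_mul {f g : ℝ → ℝ} (hfi : Integrable f μ) (hgi : Integrable g μ)
    (hfgi : Integrable (fun x => f x * g x) μ) :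
    ∫ z : ℝ × ℝ, (f z.1 - f z.2) * (g z.1 - g z.2) ∂(μ.prod μ) = 2 * cov μ f g := by
  have I1 : Integrable (fun z : ℝ × ℝ => f z.1 * g z.1) (μ.prod μ) := by
    have := hfgi.mul_prod (integrable_const (1:ℝ)) (ν := μ)
    simpa using this
  have I2 : Integrable (fun z : ℝ × ℝ => f z.2 * g z.2) (μ.prod μ) := by
    have := (integrable_const (1:ℝ)).mul_prod hfgi (μ := μ)
    simpa using this
  have I3 : Integrable (fun z : ℝ × ℝ => f z.1 * g z.2) (μ.prod μ) := hfi.mul_prod hgi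
  have I4 : Integrable (fun z : ℝ × ℝ => f z.2 * g z.1) (μ.prod μ) := by
    have := hgi.mul_prod hfi (ν := μ)
    refine this.congr (Filter.Eventually.of_forall fun z => ?_)
    ring
  have h1 : ∫ z : ℝ × ℝ, f z.1 * g z.1 ∂(μ.prod μ) = ∫ x, f x * g x ∂μ := by
    have := integral_prod_mul (μ := μ) (ν := μ) (fun x => f x * g x) (fun _ => (1:ℝ))
    simpa using this
  have h2 : ∫ z : ℝ × ℝ, f z.2 * g z.2 ∂(μ.prod μ) = ∫ x, f x * g x ∂μ := by
    have := integral_prod_mul (μ := μ) (ν := μ) (fun _ => (1:ℝ)) (fun x => f x * g x)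
    simpa using this
  have h3 : ∫ z : ℝ × ℝ, f z.1 * g z.2 ∂(μ.prod μ) = (∫ x, f x ∂μ) * ∫ x, g x ∂μ :=
    integral_prod_mul (μ := μ) (ν := μ) f g
  have h4 : ∫ z : ℝ × ℝ, f z.2 * g z.1 ∂(μ.prod μ) = (∫ x, f x ∂μ) * ∫ x, g x ∂μ := by
    have := integral_prod_mul (μ := μ) (ν := μ) g f
    rw [show (∫ z : ℝ × ℝ, f z.2 * g z.1 ∂(μ.prod μ)) =
        ∫ z : ℝ × ℝ, g z.1 * f z.2 ∂(μ.prod μ) from by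
      congr 1; funext z; ring]
    rw [this]; ring
  have expand : (fun z : ℝ × ℝ => (f z.1 - f z.2) * (g z.1 - g z.2)) =
      fun z => (f z.1 * g z.1 + f z.2 * g z.2) - (f z.1 * g z.2 + f z.2 * g z.1) := by
    funext z; ring
  have Ic : Integrable (fun z : ℝ × ℝ => f z.1 * g z.1 + f z.2 * g z.2) (μ.prod μ) := by
    exact I1.add I2
  have Id : Integrable (fun z : ℝ × ℝ => f z.1 * g z.2 + f z.2 * g z.1) (μ.prod μ) := by
    exact I3.add I4
  rw [expand, integral_sub Ic Id, integral_add I1 I2, integral_add I3 I4,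
    h1, h2, h3, h4, cov_eq_integral_mul_sub hfi hgi hfgi]
  ring

lemma measurable_hstep14 :
    Measurable (fun q : (ℝ × ℝ) × ℝ × ℝ => hstep q.1.1 q.2.1 q.2.2) := by
  unfold hstep
  apply Measurable.sub <;>
    exact Measurable.ite (measurableSet_le (by fun_prop) (by fun_prop))
      measurable_const measurable_const

lemma measurable_hstep24 :
    Measurable (fun q : (ℝ × ℝ) × ℝ × ℝ => hstep q.1.2 q.2.1 q.2.2) := by
  unfold hstep
  apply Measurable.sub <;>
    exact Measurable.ite (measurableSet_le (by fun_prop) (by fun_prop))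
      measurable_const measurable_const

lemma measurable_hstep_right (s : ℝ) : Measurable (fun z : ℝ × ℝ => hstep s z.1 z.2) := by
  unfold hstep
  apply Measurable.sub <;>
    exact Measurable.ite (measurableSet_le measurable_const (by fun_prop))
      measurable_const measurable_const

/-- Theorem 3.1 (Hoeffding's covariance identity): for a probability measure `μ` on `ℝ`
and absolutely continuous `f, g ∈ L²(μ)` with suitable integrability of the derivatives,
`Cov_μ(f,g) = ∬ f'(x) k_μ(x,y) g'(y) dx dy`. -/
theorem hoeffding_covariance_identity (μ : Measure ℝ) [IsProbabilityMeasure μ]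
    (f g f' g' : ℝ → ℝ)
    (hf : ∀ x, HasDerivAt f (f' x) x) (hg : ∀ x, HasDerivAt g (g' x) x)
    (hfL2 : MemLp f 2 μ) (hgL2 : MemLp g 2 μ)
    (hint : Integrable
      (fun p : ℝ × ℝ => f' p.1 * hoeffdingKernel μ p.1 p.2 * g' p.2)
      (volume.prod volume)) :
    cov μ f g =
      ∫ p : ℝ × ℝ, f' p.1 * hoeffdingKernel μ p.1 p.2 * g' p.2
        ∂(volume.prod volume) := by
  have hf'm : Measurable f' := by
    have : f' = deriv f := funext fun x => ((hf x).deriv).symm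
    rw [this]; exact measurable_deriv f
  have hg'm : Measurable g' := by
    have : g' = deriv g := funext fun x => ((hg x).deriv).symm
    rw [this]; exact measurable_deriv g
  -- a.e. both coordinates are non-atoms of μ
  have hDnull : (volume : Measure ℝ) {u | μ {u} ≠ 0} = 0 :=
    (atoms_countable (μ := μ)).measure_zero _
  have hae : ∀ᵐ p : ℝ × ℝ ∂(volume.prod volume), μ {p.1} = 0 ∧ μ {p.2} = 0 := by
    have h1 : (volume.prod volume) ({u | μ {u} ≠ 0} ×ˢ (Set.univ : Set ℝ)) = 0 := by
      rw [Measure.prod_prod, hDnull, zero_mul]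
    have h2 : (volume.prod volume) ((Set.univ : Set ℝ) ×ˢ {u | μ {u} ≠ 0}) = 0 := by
      rw [Measure.prod_prod, hDnull, mul_zero]
    rw [ae_iff]
    refine measure_mono_null ?_ (measure_union_null h1 h2)
    intro p hp
    simp only [Set.mem_setOf_eq, not_and_or] at hp
    rcases hp with h | h
    · exact Or.inl ⟨h, trivial⟩
    · exact Or.inr ⟨trivial, h⟩
  -- the global integrand
  have hΦm : Measurable (fun q : (ℝ × ℝ) × ℝ × ℝ =>
      (f' q.1.1 * hstep q.1.1 q.2.1 q.2.2) * (g' q.1.2 * hstep q.1.2 q.2.1 q.2.2)) :=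
    ((hf'm.comp (measurable_fst.comp measurable_fst)).mul measurable_hstep14).mul
      ((hg'm.comp (measurable_snd.comp measurable_fst)).mul measurable_hstep24)
  -- integrability of the 4-variable function
  have hΦ : Integrable (fun q : (ℝ × ℝ) × ℝ × ℝ =>
      (f' q.1.1 * hstep q.1.1 q.2.1 q.2.2) * (g' q.1.2 * hstep q.1.2 q.2.1 q.2.2))
      ((volume.prod volume).prod (μ.prod μ)) := by
    refine ⟨hΦm.aestronglyMeasurable, ?_⟩
    rw [HasFiniteIntegral]
    rw [lintegral_prod _ hΦm.enorm.aemeasurable]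
    simp only [enorm_eq_nnnorm]
    have inner_eq : ∀ p : ℝ × ℝ,
        (∫⁻ z : ℝ × ℝ, ‖(f' p.1 * hstep p.1 z.1 z.2) * (g' p.2 * hstep p.2 z.1 z.2)‖₊
          ∂(μ.prod μ)) =
        (‖f' p.1 * g' p.2‖₊ : ℝ≥0∞) *
          (2 * (μ (Set.Ici (max p.1 p.2)) * μ (Set.Iio (min p.1 p.2)))) := by
      intro p
      have hpt : ∀ z : ℝ × ℝ,
          (‖(f' p.1 * hstep p.1 z.1 z.2) * (g' p.2 * hstep p.2 z.1 z.2)‖₊ : ℝ≥0∞) =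
          (‖f' p.1 * g' p.2‖₊ : ℝ≥0∞) * ‖hstep p.1 z.1 z.2 * hstep p.2 z.1 z.2‖₊ := by
        intro z
        rw [← ENNReal.coe_mul, ← nnnorm_mul]
        congr 2
        ring
      simp only [hpt]
      rw [lintegral_const_mul _ (Measurable.nnnorm (f := fun z : ℝ × ℝ =>
          hstep p.1 z.1 z.2 * hstep p.2 z.1 z.2) ((measurable_hstep_right p.1).mul
          (measurable_hstep_right p.2))).coe_nnreal_ennreal]
      rw [lint_hstep_mul]
    simp only [inner_eq]
    -- compare with the integrability hypothesis
    have hcong : ∀ᵐ p : ℝ × ℝ ∂(volume.prod volume),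
        (‖f' p.1 * g' p.2‖₊ : ℝ≥0∞) *
            (2 * (μ (Set.Ici (max p.1 p.2)) * μ (Set.Iio (min p.1 p.2)))) =
          2 * ‖f' p.1 * hoeffdingKernel μ p.1 p.2 * g' p.2‖₊ := by
      filter_upwards [hae] with p hp
      have hkk := kernel_eq (μ := μ) p.1 p.2 hp.1 hp.2
      have hfin : μ (Set.Ici (max p.1 p.2)) * μ (Set.Iio (min p.1 p.2)) ≠ ∞ :=
        ENNReal.mul_ne_top (measure_ne_top μ _) (measure_ne_top μ _)
      have hknn : (‖hoeffdingKernel μ p.1 p.2‖₊ : ℝ≥0∞) =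
          μ (Set.Ici (max p.1 p.2)) * μ (Set.Iio (min p.1 p.2)) := by
        rw [hkk]
        rw [← enorm_eq_nnnorm, Real.enorm_eq_ofReal (mul_nonneg ENNReal.toReal_nonneg ENNReal.toReal_nonneg)]
        rw [← ENNReal.toReal_mul, ENNReal.ofReal_toReal hfin]
      have hnorm : (‖f' p.1 * hoeffdingKernel μ p.1 p.2 * g' p.2‖₊ : ℝ≥0∞) =
          (‖f' p.1 * g' p.2‖₊ : ℝ≥0∞) * ‖hoeffdingKernel μ p.1 p.2‖₊ := by
        rw [← ENNReal.coe_mul, ← nnnorm_mul]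
        congr 2
        ring
      rw [hnorm, hknn]
      ring
    have hcdfm : Measurable (cdf μ) :=
      Monotone.measurable (fun a b hab => ENNReal.toReal_mono (measure_ne_top μ _)
        (measure_mono (Set.Iic_subset_Iic.mpr hab)))
    have hkm : Measurable (fun p : ℝ × ℝ => hoeffdingKernel μ p.1 p.2) := by
      unfold hoeffdingKernel
      exact (hcdfm.comp (measurable_fst.min measurable_snd)).sub
        ((hcdfm.comp measurable_fst).mul (hcdfm.comp measurable_snd))
    rw [lintegral_congr_ae hcong, lintegral_const_mul _ (by
      exact (((hf'm.comp measurable_fst).mul hkm).mul (hg'm.comp measurable_snd)).nnnorm.coe_nnreal_ennreal)]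
    exact ENNReal.mul_lt_top (by simp) hint.2
  -- integrable pieces for the covariance expansion
  have hfi : Integrable f μ := hfL2.integrable one_le_two
  have hgi : Integrable g μ := hgL2.integrable one_le_two
  have hfgi : Integrable (fun x => f x * g x) μ := by
    have h := hgL2.smul (φ := f) hfL2 (r := 1) (hpqr := ⟨by norm_num [ENNReal.inv_two_add_inv_two]⟩)
    have h2 := memLp_one_iff_integrable.mp h
    refine h2.congr (Filter.Eventually.of_forall fun x => ?_)
    simp [smul_eq_mul]
  have step1 : (∫ p : ℝ × ℝ, f' p.1 * hoeffdingKernel μ p.1 p.2 * g' p.2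
        ∂(volume.prod volume))
      = ∫ p : ℝ × ℝ, 2⁻¹ * ∫ z : ℝ × ℝ,
          (f' p.1 * hstep p.1 z.1 z.2) * (g' p.2 * hstep p.2 z.1 z.2) ∂(μ.prod μ)
        ∂(volume.prod volume) := by
    refine integral_congr_ae ?_
    filter_upwards [hae] with p hp
    have h1 : (fun z : ℝ × ℝ => (f' p.1 * hstep p.1 z.1 z.2) * (g' p.2 * hstep p.2 z.1 z.2))
        = fun z => (f' p.1 * g' p.2) * (hstep p.1 z.1 z.2 * hstep p.2 z.1 z.2) := by
      funext z; ring
    rw [h1, integral_const_mul, int_hstep_mul, kernel_eq p.1 p.2 hp.1 hp.2]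
    ring
  have hsw : (∫ p : ℝ × ℝ, (∫ z : ℝ × ℝ,
          (f' p.1 * hstep p.1 z.1 z.2) * (g' p.2 * hstep p.2 z.1 z.2) ∂(μ.prod μ))
        ∂(volume.prod volume))
      = ∫ z : ℝ × ℝ, (∫ p : ℝ × ℝ,
          (f' p.1 * hstep p.1 z.1 z.2) * (g' p.2 * hstep p.2 z.1 z.2)
            ∂(volume.prod volume)) ∂(μ.prod μ) :=
    integral_integral_swap hΦ
  have hsec : ∀ᵐ z ∂(μ.prod μ), Integrable
      (fun p : ℝ × ℝ => (f' p.1 * hstep p.1 z.1 z.2) * (g' p.2 * hstep p.2 z.1 z.2))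
      (volume.prod volume) := by
    have h := hΦ.swap.prod_right_ae
    filter_upwards [h] with z hz
    exact hz
  have step3 : (∫ z : ℝ × ℝ, (∫ p : ℝ × ℝ,
          (f' p.1 * hstep p.1 z.1 z.2) * (g' p.2 * hstep p.2 z.1 z.2)
            ∂(volume.prod volume)) ∂(μ.prod μ))
      = ∫ z : ℝ × ℝ, (f z.1 - f z.2) * (g z.1 - g z.2) ∂(μ.prod μ) := by
    refine integral_congr_ae ?_
    filter_upwards [hsec] with z hz
    have hips : (∫ p : ℝ × ℝ,
          (f' p.1 * hstep p.1 z.1 z.2) * (g' p.2 * hstep p.2 z.1 z.2)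
            ∂(volume.prod volume))
        = (∫ s, f' s * hstep s z.1 z.2) * (∫ t, g' t * hstep t z.1 z.2) :=
      integral_prod_mul (f := fun s => f' s * hstep s z.1 z.2)
        (g := fun t => g' t * hstep t z.1 z.2)
    rw [hips]
    have hF1m : Measurable (fun s => f' s * hstep s z.1 z.2) :=
      hf'm.mul (measurable_hstep_left z.1 z.2)
    have hG1m : Measurable (fun t => g' t * hstep t z.1 z.2) :=
      hg'm.mul (measurable_hstep_left z.1 z.2)
    have hAB : (∫⁻ s, ‖f' s * hstep s z.1 z.2‖₊ ∂volume)
        * (∫⁻ t, ‖g' t * hstep t z.1 z.2‖₊ ∂volume) < ⊤ := by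
      have h2 := hz.2
      rw [HasFiniteIntegral] at h2
      rw [← lintegral_prod_mul hF1m.nnnorm.coe_nnreal_ennreal.aemeasurable hG1m.nnnorm.coe_nnreal_ennreal.aemeasurable]
      refine lt_of_eq_of_lt ?_ h2
      refine lintegral_congr fun p => ?_
      rw [← ENNReal.coe_mul, ← nnnorm_mul]
      rfl
    by_cases hA : (∫⁻ s, ‖f' s * hstep s z.1 z.2‖₊ ∂volume) = ⊤
    · have hB0 : (∫⁻ t, ‖g' t * hstep t z.1 z.2‖₊ ∂volume) = 0 := by
        by_contra hB
        rw [hA, ENNReal.top_mul hB] at hAB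
        exact absurd hAB (by simp)
      have hG1z : ∀ᵐ t ∂(volume : Measure ℝ), g' t * hstep t z.1 z.2 = 0 := by
        have h := (lintegral_eq_zero_iff hG1m.nnnorm.coe_nnreal_ennreal).1 hB0
        filter_upwards [h] with t ht
        simpa using ht
      have hgz : g z.1 = g z.2 := by
        refine eq_of_deriv_ae_zero hg z.1 z.2 ?_
        filter_upwards [hG1z] with t ht hmem
        rcases mul_eq_zero.1 ht with h | h
        · exact h
        · exact absurd h (hstep_ne_zero_of_mem hmem)
      have hGint : (∫ t, g' t * hstep t z.1 z.2) = 0 :=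
        integral_eq_zero_of_ae (by filter_upwards [hG1z] with t ht; simpa using ht)
      rw [hGint, hgz]
      ring
    · by_cases hB : (∫⁻ t, ‖g' t * hstep t z.1 z.2‖₊ ∂volume) = ⊤
      · have hA0 : (∫⁻ s, ‖f' s * hstep s z.1 z.2‖₊ ∂volume) = 0 := by
          by_contra hA0
          rw [hB, ENNReal.mul_top hA0] at hAB
          exact absurd hAB (by simp)
        have hF1z : ∀ᵐ s ∂(volume : Measure ℝ), f' s * hstep s z.1 z.2 = 0 := by
          have h := (lintegral_eq_zero_iff hF1m.nnnorm.coe_nnreal_ennreal).1 hA0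
          filter_upwards [h] with s hs
          simpa using hs
        have hfz : f z.1 = f z.2 := by
          refine eq_of_deriv_ae_zero hf z.1 z.2 ?_
          filter_upwards [hF1z] with s hs hmem
          rcases mul_eq_zero.1 hs with h | h
          · exact h
          · exact absurd h (hstep_ne_zero_of_mem hmem)
        have hFint : (∫ s, f' s * hstep s z.1 z.2) = 0 :=
          integral_eq_zero_of_ae (by filter_upwards [hF1z] with s hs; simpa using hs)
        rw [hFint, hfz]
        ring
      · have hF1i : Integrable (fun s => f' s * hstep s z.1 z.2) volume :=
          ⟨hF1m.aestronglyMeasurable, Ne.lt_top hA⟩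
        have hG1i : Integrable (fun t => g' t * hstep t z.1 z.2) volume :=
          ⟨hG1m.aestronglyMeasurable, Ne.lt_top hB⟩
        rw [int_deriv_hstep hf z.1 z.2 hF1i, int_deriv_hstep hg z.1 z.2 hG1i]
  rw [step1, integral_const_mul, hsw, step3, double_integral_sub_mul hfi hgi hfgi]
  ring
end

section
/- Let μ be a probability measure on ℝ with cumulative distribution function F_μ, and let k_μ(x, y) = F_μ(min(x, y)) − F_μ(x) F_μ(y). Then k_μ is totally positive: for every n ≥ 2 and all real numbers s₁ ≤ ⋯ ≤ s_n and t₁ ≤ ⋯ ≤ t_n, det(k_μ(s_i, t_j))_{1 ≤ i,j ≤ n} ≥ 0. -/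
open MeasureTheory Matrix

/-- The key algebraic lemma: the Brownian bridge kernel `min x y - x*y`
is totally positive on `[0,1]`. -/
lemma hk_det_nonneg : ∀ (n : ℕ) (a b : Fin n → ℝ), Monotone a → Monotone b →
    (∀ i, 0 ≤ a i ∧ a i ≤ 1) → (∀ j, 0 ≤ b j ∧ b j ≤ 1) →
    0 ≤ (Matrix.of fun i j => min (a i) (b j) - a i * b j).det := by
  intro n
  induction n with
  | zero =>
    intro a b _ _ _ _
    simp [Matrix.det_fin_zero]
  | succ m IH =>
    suffices H : ∀ a b : Fin (m + 1) → ℝ, Monotone a → Monotone b →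
        (∀ i, 0 ≤ a i ∧ a i ≤ 1) → (∀ j, 0 ≤ b j ∧ b j ≤ 1) → a 0 ≤ b 0 →
        0 ≤ (Matrix.of fun i j => min (a i) (b j) - a i * b j).det by
      intro a b ha hb ha1 hb1
      rcases le_total (a 0) (b 0) with h | h
      · exact H a b ha hb ha1 hb1 h
      · have key := H b a hb ha hb1 ha1 h
        rw [← Matrix.det_transpose]
        have : (Matrix.of fun i j => min (a i) (b j) - a i * b j).transpose
            = (Matrix.of fun i j => min (b i) (a j) - b i * a j) := by
          ext i j
          simp [Matrix.transpose_apply, min_comm, mul_comm]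
        rw [this]
        exact key
    intro a b ha hb ha1 hb1 hab
    set M : Matrix (Fin (m + 1)) (Fin (m + 1)) ℝ :=
      Matrix.of fun i j => min (a i) (b j) - a i * b j with hM
    rcases eq_or_lt_of_le (hb1 0).2 with hβ1 | hβ1
    · -- b 0 = 1 : the 0-th column vanishes
      have : M.det = 0 := by
        apply Matrix.det_eq_zero_of_column_eq_zero 0
        intro i
        have h1 : a i ≤ 1 := (ha1 i).2
        simp only [hM, Matrix.of_apply, hβ1, mul_one, min_eq_left h1, sub_self]
      rw [this]
    · -- b 0 < 1 : column reduction
      set β := b 0 with hβ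
      have hβpos : (0:ℝ) < 1 - β := by linarith
      have hβne : (1:ℝ) - β ≠ 0 := ne_of_gt hβpos
      set u : Fin (m + 1) → ℝ := fun i => if i = 0 then 1 else 0 with hu
      set v : Fin (m + 1) → ℝ :=
        fun j => if j = 0 then 0 else -((1 - b j) / (1 - β)) with hv
      set E : Matrix (Fin (m + 1)) (Fin (m + 1)) ℝ :=
        1 + Matrix.replicateCol Unit u * Matrix.replicateRow Unit v with hE
      have hdetE : E.det = 1 := by
        rw [hE, Matrix.det_one_add_replicateCol_mul_replicateRow]
        have : v ⬝ᵥ u = 0 := by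
          apply Finset.sum_eq_zero
          intro i _
          by_cases h : i = 0 <;> simp [hu, hv, h]
        rw [this, add_zero]
      set N := M * E with hN
      have hdetN : N.det = M.det := by
        rw [hN, Matrix.det_mul, hdetE, mul_one]
      have hNentry : ∀ i j, N i j = M i j + M i 0 * v j := by
        intro i j
        rw [hN, hE, Matrix.mul_add, Matrix.mul_one, Matrix.add_apply]
        congr 1
        rw [← Matrix.mul_assoc]
        have : (M * Matrix.replicateCol Unit u * Matrix.replicateRow Unit v) i j
            = (∑ k, M i k * u k) * v j := by
          simp [Matrix.mul_apply, Finset.sum_mul]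
        rw [this]
        congr 1
        rw [Finset.sum_eq_single 0]
        · simp [hu]
        · intro k _ hk
          simp [hu, hk]
        · simp
      -- the 0-th row of N vanishes away from the corner
      have hrow : ∀ j : Fin (m + 1), j ≠ 0 → N 0 j = 0 := by
        intro j hj
        have hb0j : β ≤ b j := hb (Fin.zero_le j)
        have h0j : M 0 j = a 0 * (1 - b j) := by
          have : min (a 0) (b j) = a 0 := min_eq_left (le_trans hab hb0j)
          simp [hM, this]; ring
        have h00 : M 0 0 = a 0 * (1 - β) := by
          have : min (a 0) (b 0) = a 0 := min_eq_left hab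
          simp [hM, hβ, this]; ring
        rw [hNentry, h0j, h00, hv]
        simp only [hj, if_false]
        field_simp
        ring
      have hN00 : N 0 0 = a 0 * (1 - β) := by
        rw [hNentry]
        have : min (a 0) (b 0) = a 0 := min_eq_left hab
        simp [hM, hβ, hv, this]; ring
      -- Laplace expansion along row 0
      rw [← hdetN, Matrix.det_succ_row_zero]
      rw [Finset.sum_eq_single 0]
      · -- the surviving term
        simp only [Fin.val_zero, pow_zero, one_mul, Fin.succAbove_zero]
        -- identify the minor with a scaled kernel matrix
        set a' : Fin m → ℝ := fun i => (max (a i.succ) β - β) / (1 - β) with ha'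
        set b' : Fin m → ℝ := fun j => (b j.succ - β) / (1 - β) with hb'
        have hminor : N.submatrix Fin.succ Fin.succ
            = (1 - β) • Matrix.of (fun i j => min (a' i) (b' j) - a' i * b' j) := by
          ext i j
          have hb0j : β ≤ b j.succ := hb (Fin.zero_le _)
          set A := a i.succ with hA
          set B := b j.succ with hB
          have hNij : N i.succ j.succ
              = min A B - A * B - (min A β - A * β) * ((1 - B) / (1 - β)) := by
            rw [hNentry]
            have : v j.succ = -((1 - B) / (1 - β)) := by
              simp [hv, hB, Fin.succ_ne_zero]
            rw [this]
            simp [hM, hβ]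
            ring
          simp only [Matrix.submatrix_apply, Matrix.smul_apply, Matrix.of_apply,
            smul_eq_mul]
          rw [hNij]
          rcases le_or_gt A β with hAβ | hAβ
          · -- A ≤ β : everything cancels
            have h1 : min A β = A := min_eq_left hAβ
            have h2 : min A B = A := min_eq_left (le_trans hAβ hb0j)
            have h3 : a' i = 0 := by
              simp [ha', ← hA, max_eq_right hAβ]
            have h4 : 0 ≤ b' j := by
              apply div_nonneg _ (le_of_lt hβpos)
              linarith
            have h5 : min (a' i) (b' j) = 0 := by
              rw [h3, min_eq_left h4]
            rw [h1, h2, h5, h3]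
            field_simp
            ring
          · -- β < A
            have h1 : min A β = β := min_eq_right (le_of_lt hAβ)
            have h3 : a' i = (A - β) / (1 - β) := by
              simp [ha', ← hA, max_eq_left (le_of_lt hAβ)]
            rcases le_total A B with hAB | hAB
            · have h2 : min A B = A := min_eq_left hAB
              have h5 : min (a' i) (b' j) = a' i := by
                apply min_eq_left
                rw [h3, hb']
                apply div_le_div_of_nonneg_right _ hβpos.le <;> try linarith
              rw [h1, h2, h5, h3, hb']
              field_simp
              ring
            · have h2 : min A B = B := min_eq_right hAB
              have h5 : min (a' i) (b' j) = b' j := by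
                apply min_eq_right
                rw [h3, hb']
                apply div_le_div_of_nonneg_right _ hβpos.le <;> try linarith
              rw [h1, h2, h5, h3, hb']
              field_simp
              ring
        rw [hminor, Matrix.det_smul, hN00]
        have ha'mono : Monotone a' := by
          intro i j hij
          have : a i.succ ≤ a j.succ := ha (Fin.succ_le_succ_iff.mpr hij)
          apply div_le_div_of_nonneg_right _ hβpos.le
          · have := max_le_max_right β this
            linarith [this]
        have hb'mono : Monotone b' := by
          intro i j hij
          have : b i.succ ≤ b j.succ := hb (Fin.succ_le_succ_iff.mpr hij)
          apply div_le_div_of_nonneg_right _ hβpos.le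
          linarith
        have ha'bd : ∀ i, 0 ≤ a' i ∧ a' i ≤ 1 := by
          intro i
          constructor
          · apply div_nonneg _ (le_of_lt hβpos)
            have := le_max_right (a i.succ) β
            linarith
          · rw [div_le_one hβpos]
            have h1 := (ha1 i.succ).2
            have h2 := (hb1 0).2
            have : max (a i.succ) β ≤ 1 := max_le h1 h2
            linarith
        have hb'bd : ∀ j, 0 ≤ b' j ∧ b' j ≤ 1 := by
          intro j
          have hb0j : β ≤ b j.succ := hb (Fin.zero_le _)
          constructor
          · apply div_nonneg _ (le_of_lt hβpos); linarith
          · rw [div_le_one hβpos]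
            have := (hb1 j.succ).2
            linarith
        have hIH := IH a' b' ha'mono hb'mono ha'bd hb'bd
        have ha0 : 0 ≤ a 0 := (ha1 0).1
        have : (0:ℝ) ≤ (1 - β) ^ Fintype.card (Fin m) := by positivity
        have hcard : (0:ℝ) ≤ (1 - β) ^ Fintype.card (Fin m) *
            (Matrix.of fun i j => min (a' i) (b' j) - a' i * b' j).det :=
          mul_nonneg this hIH
        have := mul_nonneg (mul_nonneg ha0 (le_of_lt hβpos)) hcard
        linarith
      · intro j _ hj
        rw [hrow j hj]
        ring
      · simp
  
lemma cdf_mono (μ : Measure ℝ) [IsProbabilityMeasure μ] : Monotone (cdf μ) := by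
  intro x y h
  exact ENNReal.toReal_mono (measure_ne_top μ _)
    (measure_mono (Set.Iic_subset_Iic.2 h))

lemma cdf_bd (μ : Measure ℝ) [IsProbabilityMeasure μ] (x : ℝ) :
    0 ≤ cdf μ x ∧ cdf μ x ≤ 1 := by
  constructor
  · exact ENNReal.toReal_nonneg
  · have : cdf μ x ≤ (1 : ENNReal).toReal :=
      ENNReal.toReal_mono ENNReal.one_ne_top prob_le_one
    simpa using this

lemma hoeffdingKernel_eq (μ : Measure ℝ) [IsProbabilityMeasure μ] (x y : ℝ) :
    hoeffdingKernel μ x y = min (cdf μ x) (cdf μ y) - cdf μ x * cdf μ y := by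
  unfold hoeffdingKernel
  congr 1
  rcases le_total x y with h | h
  · rw [min_eq_left h, min_eq_left (cdf_mono μ h)]
  · rw [min_eq_right h, min_eq_right (cdf_mono μ h)]

/-- Theorem 3.2: the Hoeffding kernel is totally positive: for every `n ≥ 2` and
all `s₁ ≤ ⋯ ≤ s_n`, `t₁ ≤ ⋯ ≤ t_n`, `det(k_μ(s_i, t_j)) ≥ 0`. -/
theorem hoeffdingKernel_totally_positive (μ : Measure ℝ) [IsProbabilityMeasure μ]
    (n : ℕ) (hn : 2 ≤ n) (s t : Fin n → ℝ) (hs : Monotone s) (ht : Monotone t) :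
    0 ≤ Matrix.det (Matrix.of fun i j => hoeffdingKernel μ (s i) (t j)) := by
  have key := hk_det_nonneg n (fun i => cdf μ (s i)) (fun j => cdf μ (t j))
    (fun i j h => cdf_mono μ (hs h)) (fun i j h => cdf_mono μ (ht h))
    (fun i => cdf_bd μ (s i)) (fun j => cdf_bd μ (t j))
  have : (Matrix.of fun i j => hoeffdingKernel μ (s i) (t j))
      = Matrix.of fun i j => min (cdf μ (s i)) (cdf μ (t j)) - cdf μ (s i) * cdf μ (t j) := by
    ext i j
    exact hoeffdingKernel_eq μ (s i) (t j)
  rw [this]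
  exact key
end
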